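/- arXiv:2209.04225 — 4 statements merged into one kernel-verified Lean document; each statement's English description precedes it below -/
import Mathlib

section
/- Let a, b ∈ ℝ with Q ≠ a + b + 1. For every smooth compactly supported function f on ℍⁿ \ {0}, one has ∫_{ℍⁿ} (|z|²/d²) · (|f|²/d^{a+b+1}) dξ ≤ (1/|Q − (a + b + 1)|) · (∫_{ℍⁿ} |∇_H f|² / d^{2a} dξ + ∫_{ℍⁿ} (|z|²/d²) · (|f|²/d^{2b}) dξ); in particular the weighted Sobolev space H¹_{a,b}(ℍⁿ, |z|²/d²) embeds continuously into L²_{(a+b+1)/2}(ℍⁿ, |z|²/d²). -/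
open MeasureTheory Real

noncomputable section

/-- The underlying space of the Heisenberg group `ℍⁿ = ℝⁿ × ℝⁿ × ℝ`,
with points `ξ = (x, y, t)` and `z = (x, y)`. -/
abbrev Heis (n : ℕ) : Type := (Fin n → ℝ) × (Fin n → ℝ) × ℝ

/-- The left-invariant horizontal vector field `X_j = ∂/∂x_j + 2 y_j ∂/∂t`. -/
noncomputable def XH {n : ℕ} (j : Fin n) (f : Heis n → ℝ) (ξ : Heis n) : ℝ :=
  fderiv ℝ f ξ (Pi.single j 1, 0, 0) + 2 * ξ.2.1 j * fderiv ℝ f ξ (0, 0, 1)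

/-- The left-invariant horizontal vector field `Y_j = ∂/∂y_j − 2 x_j ∂/∂t`. -/
noncomputable def YH {n : ℕ} (j : Fin n) (f : Heis n → ℝ) (ξ : Heis n) : ℝ :=
  fderiv ℝ f ξ (0, Pi.single j 1, 0) - 2 * ξ.1 j * fderiv ℝ f ξ (0, 0, 1)

/-- The horizontal gradient `∇_H f = (X_1 f, …, X_n f, Y_1 f, …, Y_n f)`. -/
noncomputable def hGrad {n : ℕ} (f : Heis n → ℝ) (ξ : Heis n) : (Fin n → ℝ) × (Fin n → ℝ) :=
  (fun j => XH j f ξ, fun j => YH j f ξ)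

/-- Euclidean length of a horizontal vector. -/
noncomputable def hNorm {n : ℕ} (v : (Fin n → ℝ) × (Fin n → ℝ)) : ℝ :=
  Real.sqrt (∑ j, v.1 j ^ 2 + ∑ j, v.2 j ^ 2)

/-- Euclidean inner product of horizontal vectors. -/
noncomputable def hDot {n : ℕ} (v w : (Fin n → ℝ) × (Fin n → ℝ)) : ℝ :=
  ∑ j, v.1 j * w.1 j + ∑ j, v.2 j * w.2 j

/-- The horizontal divergence `div_H w = Σ_j (X_j w_j + Y_j w_{n+j})`. -/
noncomputable def hDiv {n : ℕ} (V : Heis n → (Fin n → ℝ) × (Fin n → ℝ)) (ξ : Heis n) : ℝ :=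
  ∑ j, (XH j (fun η => (V η).1 j) ξ + YH j (fun η => (V η).2 j) ξ)

/-- The sub-Laplacian `Δ_H = Σ_j (X_j² + Y_j²) = div_H ∘ ∇_H`. -/
noncomputable def hLap {n : ℕ} (f : Heis n → ℝ) : Heis n → ℝ :=
  hDiv (hGrad f)

/-- The `p`-sub-Laplacian `Δ_{H,p} f = div_H (|∇_H f|^{p−2} ∇_H f)`. -/
noncomputable def pLap {n : ℕ} (p : ℝ) (f : Heis n → ℝ) : Heis n → ℝ :=
  hDiv (fun ξ => hNorm (hGrad f ξ) ^ (p - 2) • hGrad f ξ)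

/-- The Euclidean norm `|z|` of the horizontal component `z = (x, y)`. -/
noncomputable def zNorm {n : ℕ} (ξ : Heis n) : ℝ :=
  Real.sqrt (∑ j, ξ.1 j ^ 2 + ∑ j, ξ.2.1 j ^ 2)

/-- The Heisenberg gauge `d(z, t) = (|z|⁴ + t²)^{1/4}`. -/
noncomputable def dH {n : ℕ} (ξ : Heis n) : ℝ :=
  ((∑ j, ξ.1 j ^ 2 + ∑ j, ξ.2.1 j ^ 2) ^ 2 + ξ.2.2 ^ 2) ^ (1 / 4 : ℝ)

/-- A smooth compactly supported function on `ℍⁿ \ {0}`. -/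
def IsTestAwayZero {n : ℕ} (f : Heis n → ℝ) : Prop :=
  ContDiff ℝ (⊤ : ℕ∞) f ∧ HasCompactSupport f ∧ (0 : Heis n) ∉ tsupport f

instance (n : ℕ) : MeasureTheory.Measure.IsAddHaarMeasure (volume : Measure ((Fin n → ℝ) × ℝ)) :=
  MeasureTheory.Measure.prod.instIsAddHaarMeasure _ _

instance (n : ℕ) : MeasureTheory.Measure.IsAddHaarMeasure (volume : Measure (Heis n)) :=
  MeasureTheory.Measure.prod.instIsAddHaarMeasure _ _

instance (n : ℕ) : NullSingletonClass (volume : Measure ((Fin n → ℝ) × ℝ)) :=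
  MeasureTheory.Measure.prod.instNullSingletonClass_snd

instance (n : ℕ) : NullSingletonClass (volume : Measure (Heis n)) :=
  MeasureTheory.Measure.prod.instNullSingletonClass_snd

namespace HeisAux

variable {n : ℕ}

/-- |z|². -/
def Af (ξ : Heis n) : ℝ := ∑ j, ξ.1 j ^ 2 + ∑ j, ξ.2.1 j ^ 2

/-- d⁴ = |z|⁴ + t². -/
def Rf (ξ : Heis n) : ℝ := Af ξ ^ 2 + ξ.2.2 ^ 2

def P1 (j : Fin n) (ξ : Heis n) : ℝ := 4 * (Af ξ * ξ.1 j + ξ.2.2 * ξ.2.1 j)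
def P2 (j : Fin n) (ξ : Heis n) : ℝ := 4 * (Af ξ * ξ.2.1 j - ξ.2.2 * ξ.1 j)

lemma Af_nonneg (ξ : Heis n) : 0 ≤ Af ξ := by
  unfold Af; positivity

lemma Rf_nonneg (ξ : Heis n) : 0 ≤ Rf ξ := by unfold Rf; positivity

lemma Rf_pos {ξ : Heis n} (h : ξ ≠ 0) : 0 < Rf ξ := by
  rcases (Rf_nonneg ξ).lt_or_eq with h' | h'
  · exact h'
  exfalso; apply h
  have hR : Af ξ ^ 2 + ξ.2.2 ^ 2 = 0 := by unfold Rf at h'; linarith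
  have hA : Af ξ = 0 := by nlinarith [sq_nonneg (Af ξ), sq_nonneg ξ.2.2]
  have ht : ξ.2.2 = 0 := by nlinarith [sq_nonneg ξ.2.2, sq_nonneg (Af ξ)]
  have hx : ∀ j, ξ.1 j = 0 ∧ ξ.2.1 j = 0 := by
    intro j
    have h1 : (0:ℝ) ≤ ∑ j, ξ.1 j ^ 2 := by positivity
    have h2 : (0:ℝ) ≤ ∑ j, ξ.2.1 j ^ 2 := by positivity
    have hs1 : ∑ j, ξ.1 j ^ 2 = 0 := by unfold Af at hA; linarith
    have hs2 : ∑ j, ξ.2.1 j ^ 2 = 0 := by unfold Af at hA; linarith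
    have e1 := (Finset.sum_eq_zero_iff_of_nonneg (fun i _ => sq_nonneg (ξ.1 i))).1 hs1 j (Finset.mem_univ j)
    have e2 := (Finset.sum_eq_zero_iff_of_nonneg (fun i _ => sq_nonneg (ξ.2.1 i))).1 hs2 j (Finset.mem_univ j)
    exact ⟨by nlinarith, by nlinarith⟩
  ext j
  · exact (hx j).1
  · exact (hx j).2
  · exact ht

/- Coordinate continuous linear maps. -/
def Cx (j : Fin n) : Heis n →L[ℝ] ℝ :=
  (ContinuousLinearMap.proj j).comp (ContinuousLinearMap.fst ℝ (Fin n → ℝ) ((Fin n → ℝ) × ℝ))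
def Cy (j : Fin n) : Heis n →L[ℝ] ℝ :=
  ((ContinuousLinearMap.proj j).comp (ContinuousLinearMap.fst ℝ (Fin n → ℝ) ℝ)).comp
    (ContinuousLinearMap.snd ℝ (Fin n → ℝ) ((Fin n → ℝ) × ℝ))
def Ct : Heis n →L[ℝ] ℝ :=
  (ContinuousLinearMap.snd ℝ (Fin n → ℝ) ℝ).comp
    (ContinuousLinearMap.snd ℝ (Fin n → ℝ) ((Fin n → ℝ) × ℝ))

@[simp] lemma Cx_apply (j : Fin n) (v : Heis n) : Cx j v = v.1 j := rfl
@[simp] lemma Cy_apply (j : Fin n) (v : Heis n) : Cy j v = v.2.1 j := rfl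
@[simp] lemma Ct_apply (v : Heis n) : Ct v = v.2.2 := rfl

lemma hasFDerivAt_x (j : Fin n) (ξ : Heis n) :
    HasFDerivAt (fun η : Heis n => η.1 j) (Cx j) ξ := (Cx j).hasFDerivAt
lemma hasFDerivAt_y (j : Fin n) (ξ : Heis n) :
    HasFDerivAt (fun η : Heis n => η.2.1 j) (Cy j) ξ := (Cy j).hasFDerivAt
lemma hasFDerivAt_t (ξ : Heis n) :
    HasFDerivAt (fun η : Heis n => η.2.2) (Ct : Heis n →L[ℝ] ℝ) ξ := Ct.hasFDerivAt

def LA (ξ : Heis n) : Heis n →L[ℝ] ℝ :=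
  (∑ i, (2 * ξ.1 i) • Cx i) + ∑ i, (2 * ξ.2.1 i) • Cy i

lemma hasFDerivAt_Af (ξ : Heis n) : HasFDerivAt Af (LA ξ) ξ := by
  have h1 : ∀ i : Fin n, HasFDerivAt (fun η : Heis n => η.1 i ^ 2) ((2 * ξ.1 i) • Cx i) ξ := by
    intro i
    have h := (hasFDerivAt_x i ξ).fun_mul (hasFDerivAt_x i ξ)
    have hfun : (fun η : Heis n => η.1 i * η.1 i) = fun η => η.1 i ^ 2 := by funext η; ring
    rw [hfun] at h
    rw [two_mul, add_smul]
    exact h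
  have h2 : ∀ i : Fin n, HasFDerivAt (fun η : Heis n => η.2.1 i ^ 2) ((2 * ξ.2.1 i) • Cy i) ξ := by
    intro i
    have h := (hasFDerivAt_y i ξ).fun_mul (hasFDerivAt_y i ξ)
    have hfun : (fun η : Heis n => η.2.1 i * η.2.1 i) = fun η => η.2.1 i ^ 2 := by funext η; ring
    rw [hfun] at h
    rw [two_mul, add_smul]
    exact h
  exact (HasFDerivAt.fun_sum fun i _ => h1 i).fun_add (HasFDerivAt.fun_sum fun i _ => h2 i)

def LR (ξ : Heis n) : Heis n →L[ℝ] ℝ := (2 * Af ξ) • LA ξ + (2 * ξ.2.2) • Ct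

lemma hasFDerivAt_Rf (ξ : Heis n) : HasFDerivAt Rf (LR ξ) ξ := by
  have h1 : HasFDerivAt (fun η : Heis n => Af η ^ 2) ((2 * Af ξ) • LA ξ) ξ := by
    have h := (hasFDerivAt_Af ξ).fun_mul (hasFDerivAt_Af ξ)
    have hfun : (fun η : Heis n => Af η * Af η) = fun η => Af η ^ 2 := by funext η; ring
    rw [hfun] at h
    rw [two_mul, add_smul]
    exact h
  have h2 : HasFDerivAt (fun η : Heis n => η.2.2 ^ 2) ((2 * ξ.2.2) • Ct : Heis n →L[ℝ] ℝ) ξ := by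
    have h := (hasFDerivAt_t ξ).fun_mul (hasFDerivAt_t ξ)
    have hfun : (fun η : Heis n => η.2.2 * η.2.2) = fun η : Heis n => η.2.2 ^ 2 := by funext η; ring
    rw [hfun] at h
    rw [two_mul, add_smul]
    exact h
  exact h1.add h2

@[simp] lemma LA_apply (ξ v : Heis n) :
    LA ξ v = ∑ i, 2 * ξ.1 i * v.1 i + ∑ i, 2 * ξ.2.1 i * v.2.1 i := by
  simp [LA, ContinuousLinearMap.sum_apply]

lemma LA_ex (ξ : Heis n) (j : Fin n) : LA ξ ((Pi.single j 1, 0, 0) : Heis n) = 2 * ξ.1 j := by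
  simp [Pi.single_apply, mul_ite, Finset.sum_ite_eq']
lemma LA_ey (ξ : Heis n) (j : Fin n) : LA ξ ((0, Pi.single j 1, 0) : Heis n) = 2 * ξ.2.1 j := by
  simp [Pi.single_apply, mul_ite, Finset.sum_ite_eq']
lemma LA_et (ξ : Heis n) : LA ξ ((0, 0, 1) : Heis n) = 0 := by simp

lemma LR_ex (ξ : Heis n) (j : Fin n) :
    LR ξ ((Pi.single j 1, 0, 0) : Heis n) = 4 * Af ξ * ξ.1 j := by
  simp [LR, Pi.single_apply, mul_ite, Finset.sum_ite_eq']; ring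
lemma LR_ey (ξ : Heis n) (j : Fin n) :
    LR ξ ((0, Pi.single j 1, 0) : Heis n) = 4 * Af ξ * ξ.2.1 j := by
  simp [LR, Pi.single_apply, mul_ite, Finset.sum_ite_eq']; ring
lemma LR_et (ξ : Heis n) : LR ξ ((0, 0, 1) : Heis n) = 2 * ξ.2.2 := by
  simp [LR, LA_et]

/-- Derivative CLM of `P1 j`. -/
def LP1 (j : Fin n) (ξ : Heis n) : Heis n →L[ℝ] ℝ :=
  (4:ℝ) • ((Af ξ • Cx j + ξ.1 j • LA ξ) + (ξ.2.2 • Cy j + ξ.2.1 j • Ct))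

def LP2 (j : Fin n) (ξ : Heis n) : Heis n →L[ℝ] ℝ :=
  (4:ℝ) • ((Af ξ • Cy j + ξ.2.1 j • LA ξ) - (ξ.2.2 • Cx j + ξ.1 j • Ct))

lemma hasFDerivAt_P1 (j : Fin n) (ξ : Heis n) : HasFDerivAt (P1 j) (LP1 j ξ) ξ := by
  have h := (((hasFDerivAt_Af ξ).mul (hasFDerivAt_x j ξ)).add
    ((hasFDerivAt_t ξ).mul (hasFDerivAt_y j ξ))).const_mul (4:ℝ)
  exact h

lemma hasFDerivAt_P2 (j : Fin n) (ξ : Heis n) : HasFDerivAt (P2 j) (LP2 j ξ) ξ := by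
  have h := (((hasFDerivAt_Af ξ).mul (hasFDerivAt_y j ξ)).sub
    ((hasFDerivAt_t ξ).mul (hasFDerivAt_x j ξ))).const_mul (4:ℝ)
  exact h

lemma XH_eval {g : Heis n → ℝ} {L : Heis n →L[ℝ] ℝ} {ξ : Heis n} (h : HasFDerivAt g L ξ)
    (j : Fin n) : XH j g ξ = L (Pi.single j 1, 0, 0) + 2 * ξ.2.1 j * L (0, 0, 1) := by
  rw [XH, h.fderiv]

lemma YH_eval {g : Heis n → ℝ} {L : Heis n →L[ℝ] ℝ} {ξ : Heis n} (h : HasFDerivAt g L ξ)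
    (j : Fin n) : YH j g ξ = L (0, Pi.single j 1, 0) - 2 * ξ.1 j * L (0, 0, 1) := by
  rw [YH, h.fderiv]

lemma XH_P1 (j : Fin n) (ξ : Heis n) :
    XH j (P1 j) ξ = 4 * Af ξ + 8 * ξ.1 j ^ 2 + 8 * ξ.2.1 j ^ 2 := by
  rw [XH_eval (hasFDerivAt_P1 j ξ) j]
  simp [LP1, Pi.single_apply, mul_ite, Finset.sum_ite_eq']
  ring

lemma YH_P2 (j : Fin n) (ξ : Heis n) :
    YH j (P2 j) ξ = 4 * Af ξ + 8 * ξ.1 j ^ 2 + 8 * ξ.2.1 j ^ 2 := by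
  rw [YH_eval (hasFDerivAt_P2 j ξ) j]
  simp [LP2, Pi.single_apply, mul_ite, Finset.sum_ite_eq']
  ring

lemma hasFDerivAt_rpow (r : ℝ) {ξ : Heis n} (h : ξ ≠ 0) :
    HasFDerivAt (fun η => Rf η ^ r) ((r * Rf ξ ^ (r - 1)) • LR ξ) ξ :=
  (Real.hasDerivAt_rpow_const (p := r) (Or.inl (Rf_pos h).ne')).comp_hasFDerivAt ξ
    (hasFDerivAt_Rf ξ)

lemma XH_rpow (r : ℝ) (j : Fin n) {ξ : Heis n} (h : ξ ≠ 0) :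
    XH j (fun η => Rf η ^ r) ξ = r * Rf ξ ^ (r - 1) * P1 j ξ := by
  rw [XH_eval (hasFDerivAt_rpow r h) j]
  simp only [ContinuousLinearMap.smul_apply, LR_ex, LR_et, smul_eq_mul, P1]
  ring

lemma YH_rpow (r : ℝ) (j : Fin n) {ξ : Heis n} (h : ξ ≠ 0) :
    YH j (fun η => Rf η ^ r) ξ = r * Rf ξ ^ (r - 1) * P2 j ξ := by
  rw [YH_eval (hasFDerivAt_rpow r h) j]
  simp only [ContinuousLinearMap.smul_apply, LR_ey, LR_et, smul_eq_mul, P2]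
  ring

lemma XH_mul {u w : Heis n → ℝ} {ξ : Heis n} (hu : DifferentiableAt ℝ u ξ)
    (hw : DifferentiableAt ℝ w ξ) (j : Fin n) :
    XH j (fun η => u η * w η) ξ = u ξ * XH j w ξ + w ξ * XH j u ξ := by
  rw [XH_eval ((hu.hasFDerivAt.fun_mul hw.hasFDerivAt)) j]
  simp only [ContinuousLinearMap.add_apply, ContinuousLinearMap.smul_apply, smul_eq_mul, XH]
  ring

lemma YH_mul {u w : Heis n → ℝ} {ξ : Heis n} (hu : DifferentiableAt ℝ u ξ)
    (hw : DifferentiableAt ℝ w ξ) (j : Fin n) :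
    YH j (fun η => u η * w η) ξ = u ξ * YH j w ξ + w ξ * YH j u ξ := by
  rw [YH_eval ((hu.hasFDerivAt.fun_mul hw.hasFDerivAt)) j]
  simp only [ContinuousLinearMap.add_apply, ContinuousLinearMap.smul_apply, smul_eq_mul, YH]
  ring

lemma XH_congr_of_eventuallyEq {g h : Heis n → ℝ} {ξ : Heis n} (he : g =ᶠ[nhds ξ] h) (j : Fin n) :
    XH j g ξ = XH j h ξ := by
  rw [XH, XH, he.fderiv_eq]

lemma YH_congr_of_eventuallyEq {g h : Heis n → ℝ} {ξ : Heis n} (he : g =ᶠ[nhds ξ] h) (j : Fin n) :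
    YH j g ξ = YH j h ξ := by
  rw [YH, YH, he.fderiv_eq]

@[simp] lemma XH_zero (j : Fin n) (ξ : Heis n) : XH j (fun _ => (0:ℝ)) ξ = 0 := by
  simp [XH]

@[simp] lemma YH_zero (j : Fin n) (ξ : Heis n) : YH j (fun _ => (0:ℝ)) ξ = 0 := by
  simp [YH]

lemma contDiff_Af : ContDiff ℝ (⊤ : ℕ∞) (Af (n := n)) := by
  have h1 : ∀ i : Fin n, ContDiff ℝ (⊤ : ℕ∞) (fun η : Heis n => η.1 i ^ 2) :=
    fun i => ((Cx i).contDiff).pow 2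
  have h2 : ∀ i : Fin n, ContDiff ℝ (⊤ : ℕ∞) (fun η : Heis n => η.2.1 i ^ 2) :=
    fun i => ((Cy i).contDiff).pow 2
  exact (ContDiff.sum fun i _ => h1 i).add (ContDiff.sum fun i _ => h2 i)

lemma contDiff_Rf : ContDiff ℝ (⊤ : ℕ∞) (Rf (n := n)) :=
  (contDiff_Af.pow 2).add (((Ct (n := n)).contDiff).pow 2)

lemma contDiff_P1 (j : Fin n) : ContDiff ℝ (⊤ : ℕ∞) (P1 j) :=
  contDiff_const.mul ((contDiff_Af.mul (Cx j).contDiff).add ((Ct (n := n)).contDiff.mul (Cy j).contDiff))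

lemma contDiff_P2 (j : Fin n) : ContDiff ℝ (⊤ : ℕ∞) (P2 j) :=
  contDiff_const.mul ((contDiff_Af.mul (Cy j).contDiff).sub ((Ct (n := n)).contDiff.mul (Cx j).contDiff))

lemma contDiffAt_rpow (r : ℝ) {ξ : Heis n} (h : ξ ≠ 0) :
    ContDiffAt ℝ (⊤ : ℕ∞) (fun η => Rf η ^ r) ξ :=
  contDiff_Rf.contDiffAt.rpow_const_of_ne (Rf_pos h).ne'

/-- Global smoothness of the vector-field components, using that `f` vanishes near `0`. -/
lemma contDiff_V {f : Heis n → ℝ} (hf : ContDiff ℝ (⊤ : ℕ∞) f) (h0 : ∀ᶠ η in nhds 0, f η = 0)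
    (r : ℝ) {P : Heis n → ℝ} (hP : ContDiff ℝ (⊤ : ℕ∞) P) :
    ContDiff ℝ (⊤ : ℕ∞) (fun η => f η ^ 2 * (Rf η ^ r * P η)) := by
  rw [contDiff_iff_contDiffAt]
  intro ξ
  by_cases hξ : ξ = 0
  · subst hξ
    exact ContDiffAt.congr_of_eventuallyEq (contDiffAt_const (c := (0:ℝ)))
      (h0.mono fun η hη => by simp [hη])
  · exact ((hf.contDiffAt.pow 2)).mul ((contDiffAt_rpow r hξ).mul hP.contDiffAt)

lemma hcs_V {f : Heis n → ℝ} (hc : HasCompactSupport f) (g : Heis n → ℝ) :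
    HasCompactSupport (fun η => f η ^ 2 * g η) := by
  apply HasCompactSupport.intro' (hc.isCompact) (isClosed_tsupport f)
  intro η hη
  have : f η = 0 := image_eq_zero_of_notMem_tsupport hη
  simp [this]

lemma integral_fderiv_apply_eq_zero {g : Heis n → ℝ} (hg : ContDiff ℝ (⊤ : ℕ∞) g)
    (hc : HasCompactSupport g) (v : Heis n) : ∫ ξ : Heis n, fderiv ℝ g ξ v = 0 := by
  have hcont : Continuous fun ξ : Heis n => fderiv ℝ g ξ v :=
    (ContinuousLinearMap.apply ℝ ℝ v).continuous.comp (hg.continuous_fderiv (by simp))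
  have hcs : HasCompactSupport fun ξ : Heis n => fderiv ℝ g ξ v :=
    (hc.fderiv (𝕜 := ℝ)).comp_left (g := fun L : Heis n →L[ℝ] ℝ => L v) rfl
  have h := integral_mul_fderiv_eq_neg_fderiv_mul_of_integrable
      (μ := (volume : Measure (Heis n)))
      (f := fun _ : Heis n => (1:ℝ)) (g := g) (v := v)
      ?_ ?_ ?_ (fun x _ => (differentiable_const 1) x) (fun x _ => (hg.differentiable (by simp)) x)
  · simpa using h
  · simpa [fderiv_const] using (integrable_zero (Heis n) ℝ (volume : Measure (Heis n)))
  · simpa using hcont.integrable_of_hasCompactSupport hcs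
  · simpa using (hg.continuous).integrable_of_hasCompactSupport hc

lemma integral_XH_eq_zero {g : Heis n → ℝ} (hg : ContDiff ℝ (⊤ : ℕ∞) g)
    (hc : HasCompactSupport g) (j : Fin n) : ∫ ξ : Heis n, XH j g ξ = 0 := by
  set h : Heis n → ℝ := fun η => 2 * η.2.1 j * g η with hh
  have hgd : Differentiable ℝ g := hg.differentiable (by simp)
  have hsm : ContDiff ℝ (⊤ : ℕ∞) h := (contDiff_const.mul (Cy j).contDiff).mul hg
  have hhc : HasCompactSupport h := by
    apply HasCompactSupport.intro' (hc.isCompact) (isClosed_tsupport g)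
    intro η hη
    have : g η = 0 := image_eq_zero_of_notMem_tsupport hη
    simp [hh, this]
  have key : ∀ ξ : Heis n, XH j g ξ =
      fderiv ℝ g ξ ((Pi.single j 1, 0, 0) : Heis n) + fderiv ℝ h ξ ((0, 0, 1) : Heis n) := by
    intro ξ
    have h2 : HasFDerivAt h
        ((2 * ξ.2.1 j) • fderiv ℝ g ξ + g ξ • ((2:ℝ) • Cy j)) ξ := by
      have := (((hasFDerivAt_y j ξ).const_mul (2:ℝ)).mul (hgd ξ).hasFDerivAt)
      exact this
    rw [h2.fderiv, XH]
    simp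
  rw [integral_congr_ae (Filter.Eventually.of_forall key)]
  rw [integral_add]
  · rw [integral_fderiv_apply_eq_zero hg hc, integral_fderiv_apply_eq_zero hsm hhc]
    simp
  · exact (((ContinuousLinearMap.apply ℝ ℝ _).continuous.comp
      (hg.continuous_fderiv (by simp))).integrable_of_hasCompactSupport
      ((hc.fderiv (𝕜 := ℝ)).comp_left rfl))
  · exact (((ContinuousLinearMap.apply ℝ ℝ _).continuous.comp
      (hsm.continuous_fderiv (by simp))).integrable_of_hasCompactSupport
      ((hhc.fderiv (𝕜 := ℝ)).comp_left rfl))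

lemma integral_YH_eq_zero {g : Heis n → ℝ} (hg : ContDiff ℝ (⊤ : ℕ∞) g)
    (hc : HasCompactSupport g) (j : Fin n) : ∫ ξ : Heis n, YH j g ξ = 0 := by
  set h : Heis n → ℝ := fun η => 2 * η.1 j * g η with hh
  have hgd : Differentiable ℝ g := hg.differentiable (by simp)
  have hsm : ContDiff ℝ (⊤ : ℕ∞) h := (contDiff_const.mul (Cx j).contDiff).mul hg
  have hhc : HasCompactSupport h := by
    apply HasCompactSupport.intro' (hc.isCompact) (isClosed_tsupport g)
    intro η hη
    have : g η = 0 := image_eq_zero_of_notMem_tsupport hη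
    simp [hh, this]
  have key : ∀ ξ : Heis n, YH j g ξ =
      fderiv ℝ g ξ ((0, Pi.single j 1, 0) : Heis n) - fderiv ℝ h ξ ((0, 0, 1) : Heis n) := by
    intro ξ
    have h2 : HasFDerivAt h
        ((2 * ξ.1 j) • fderiv ℝ g ξ + g ξ • ((2:ℝ) • Cx j)) ξ := by
      have := (((hasFDerivAt_x j ξ).const_mul (2:ℝ)).mul (hgd ξ).hasFDerivAt)
      exact this
    rw [h2.fderiv, YH]
    simp
  rw [integral_congr_ae (Filter.Eventually.of_forall key)]
  rw [integral_sub]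
  · rw [integral_fderiv_apply_eq_zero hg hc, integral_fderiv_apply_eq_zero hsm hhc]
    simp
  · exact (((ContinuousLinearMap.apply ℝ ℝ _).continuous.comp
      (hg.continuous_fderiv (by simp))).integrable_of_hasCompactSupport
      ((hc.fderiv (𝕜 := ℝ)).comp_left rfl))
  · exact (((ContinuousLinearMap.apply ℝ ℝ _).continuous.comp
      (hsm.continuous_fderiv (by simp))).integrable_of_hasCompactSupport
      ((hhc.fderiv (𝕜 := ℝ)).comp_left rfl))

lemma XH_sq {u : Heis n → ℝ} {ξ : Heis n} (hu : DifferentiableAt ℝ u ξ) (j : Fin n) :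
    XH j (fun η => u η ^ 2) ξ = 2 * u ξ * XH j u ξ := by
  have h : (fun η => u η ^ 2) = fun η => u η * u η := by funext η; ring
  rw [h, XH_mul hu hu j]; ring

lemma YH_sq {u : Heis n → ℝ} {ξ : Heis n} (hu : DifferentiableAt ℝ u ξ) (j : Fin n) :
    YH j (fun η => u η ^ 2) ξ = 2 * u ξ * YH j u ξ := by
  have h : (fun η => u η ^ 2) = fun η => u η * u η := by funext η; ring
  rw [h, YH_mul hu hu j]; ring

lemma sum_P_sq (ξ : Heis n) : ∑ j, (P1 j ξ ^ 2 + P2 j ξ ^ 2) = 16 * Af ξ * Rf ξ := by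
  have h : ∀ j : Fin n, P1 j ξ ^ 2 + P2 j ξ ^ 2 = 16 * Rf ξ * (ξ.1 j ^ 2 + ξ.2.1 j ^ 2) := by
    intro j; unfold P1 P2 Rf; ring
  rw [Finset.sum_congr rfl fun j _ => h j, ← Finset.mul_sum, Finset.sum_add_distrib]
  unfold Af; ring

lemma sum_lap (ξ : Heis n) :
    ∑ j : Fin n, (4 * Af ξ + 8 * ξ.1 j ^ 2 + 8 * ξ.2.1 j ^ 2) = (4 * n + 8) * Af ξ := by
  rw [Finset.sum_add_distrib, Finset.sum_add_distrib, Finset.sum_const, Finset.card_univ,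
    Fintype.card_fin, ← Finset.mul_sum, ← Finset.mul_sum]
  unfold Af
  rw [nsmul_eq_mul]
  ring

/-- The pointwise divergence identity. -/
lemma divergence_identity {f : Heis n → ℝ} (hf : ContDiff ℝ (⊤ : ℕ∞) f)
    (h0 : ∀ᶠ η in nhds 0, f η = 0) (r : ℝ) (ξ : Heis n) :
    ∑ j, (XH j (fun η => f η ^ 2 * (Rf η ^ r * P1 j η)) ξ
        + YH j (fun η => f η ^ 2 * (Rf η ^ r * P2 j η)) ξ)
    = 2 * f ξ * Rf ξ ^ r * (∑ j, (P1 j ξ * XH j f ξ + P2 j ξ * YH j f ξ))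
      + (16 + 8 * n + 16 * r) * Af ξ * Rf ξ ^ r * f ξ ^ 2 := by
  by_cases hξ : ξ = 0
  · subst hξ
    have hf0 : f 0 = 0 := h0.self_of_nhds
    have hz : ∀ j : Fin n,
        (XH j (fun η => f η ^ 2 * (Rf η ^ r * P1 j η)) 0
          + YH j (fun η => f η ^ 2 * (Rf η ^ r * P2 j η)) 0) = 0 := by
      intro j
      have e1 : (fun η => f η ^ 2 * (Rf η ^ r * P1 j η)) =ᶠ[nhds (0 : Heis n)]
          (fun _ => (0:ℝ)) := h0.mono fun η hη => by simp [hη]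
      have e2 : (fun η => f η ^ 2 * (Rf η ^ r * P2 j η)) =ᶠ[nhds (0 : Heis n)]
          (fun _ => (0:ℝ)) := h0.mono fun η hη => by simp [hη]
      rw [XH_congr_of_eventuallyEq e1 j, YH_congr_of_eventuallyEq e2 j, XH_zero, YH_zero]
      ring
    rw [Finset.sum_congr rfl fun j _ => hz j]
    simp [hf0]
  · have hρ := Rf_pos hξ
    have hfd : DifferentiableAt ℝ f ξ := (hf.differentiable (by simp)).differentiableAt
    have hf2 : DifferentiableAt ℝ (fun η => f η ^ 2) ξ := hfd.pow 2
    have hrp : DifferentiableAt ℝ (fun η => Rf η ^ r) ξ :=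
      (hasFDerivAt_rpow r hξ).differentiableAt
    have hw1 : ∀ j : Fin n, DifferentiableAt ℝ (fun η => Rf η ^ r * P1 j η) ξ :=
      fun j => hrp.mul (hasFDerivAt_P1 j ξ).differentiableAt
    have hw2 : ∀ j : Fin n, DifferentiableAt ℝ (fun η => Rf η ^ r * P2 j η) ξ :=
      fun j => hrp.mul (hasFDerivAt_P2 j ξ).differentiableAt
    have hr1 : Rf ξ ^ (r - 1) * Rf ξ = Rf ξ ^ r := by
      rw [← Real.rpow_add_one hρ.ne' (r - 1)]; ring_nf
    have key : ∀ j : Fin n,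
        XH j (fun η => f η ^ 2 * (Rf η ^ r * P1 j η)) ξ
          + YH j (fun η => f η ^ 2 * (Rf η ^ r * P2 j η)) ξ
        = 2 * f ξ * Rf ξ ^ r * (P1 j ξ * XH j f ξ + P2 j ξ * YH j f ξ)
          + (2 * f ξ ^ 2 * Rf ξ ^ r) * (4 * Af ξ + 8 * ξ.1 j ^ 2 + 8 * ξ.2.1 j ^ 2)
          + (f ξ ^ 2 * (r * Rf ξ ^ (r - 1))) * (P1 j ξ ^ 2 + P2 j ξ ^ 2) := by
      intro j
      rw [XH_mul hf2 (hw1 j) j, YH_mul hf2 (hw2 j) j,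
        XH_mul hrp (hasFDerivAt_P1 j ξ).differentiableAt j,
        YH_mul hrp (hasFDerivAt_P2 j ξ).differentiableAt j,
        XH_sq hfd j, YH_sq hfd j, XH_P1 j ξ, YH_P2 j ξ,
        XH_rpow r j hξ, YH_rpow r j hξ]
      ring
    rw [Finset.sum_congr rfl fun j _ => key j]
    rw [Finset.sum_add_distrib, Finset.sum_add_distrib, ← Finset.mul_sum, ← Finset.mul_sum,
      ← Finset.mul_sum, sum_P_sq, sum_lap]
    have expand : f ξ ^ 2 * (r * Rf ξ ^ (r - 1)) * (16 * Af ξ * Rf ξ)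
        = 16 * r * Af ξ * (Rf ξ ^ (r - 1) * Rf ξ) * f ξ ^ 2 := by ring
    rw [expand, hr1]
    ring

lemma continuous_XHf {g : Heis n → ℝ} (hg : ContDiff ℝ (⊤ : ℕ∞) g) (j : Fin n) :
    Continuous (XH j g) := by
  have h1 : Continuous fun ξ : Heis n => fderiv ℝ g ξ ((Pi.single j 1, 0, 0) : Heis n) :=
    (ContinuousLinearMap.apply ℝ ℝ _).continuous.comp (hg.continuous_fderiv (by simp))
  have h2 : Continuous fun ξ : Heis n => fderiv ℝ g ξ ((0, 0, 1) : Heis n) :=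
    (ContinuousLinearMap.apply ℝ ℝ _).continuous.comp (hg.continuous_fderiv (by simp))
  exact h1.add ((continuous_const.mul (Cy j).continuous).mul h2)

lemma continuous_YHf {g : Heis n → ℝ} (hg : ContDiff ℝ (⊤ : ℕ∞) g) (j : Fin n) :
    Continuous (YH j g) := by
  have h1 : Continuous fun ξ : Heis n => fderiv ℝ g ξ ((0, Pi.single j 1, 0) : Heis n) :=
    (ContinuousLinearMap.apply ℝ ℝ _).continuous.comp (hg.continuous_fderiv (by simp))
  have h2 : Continuous fun ξ : Heis n => fderiv ℝ g ξ ((0, 0, 1) : Heis n) :=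
    (ContinuousLinearMap.apply ℝ ℝ _).continuous.comp (hg.continuous_fderiv (by simp))
  exact h1.sub ((continuous_const.mul (Cx j).continuous).mul h2)

lemma XH_zero_of_nmem {g : Heis n → ℝ} {ξ : Heis n} (hξ : ξ ∉ tsupport g) (j : Fin n) :
    XH j g ξ = 0 := by
  have hfd : fderiv ℝ g ξ = 0 :=
    Function.notMem_support.mp fun hcon => hξ (support_fderiv_subset (𝕜 := ℝ) hcon)
  simp [XH, hfd]

lemma YH_zero_of_nmem {g : Heis n → ℝ} {ξ : Heis n} (hξ : ξ ∉ tsupport g) (j : Fin n) :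
    YH j g ξ = 0 := by
  have hfd : fderiv ℝ g ξ = 0 :=
    Function.notMem_support.mp fun hcon => hξ (support_fderiv_subset (𝕜 := ℝ) hcon)
  simp [YH, hfd]

lemma hcs_XH {g : Heis n → ℝ} (hc : HasCompactSupport g) (j : Fin n) :
    HasCompactSupport (XH j g) :=
  HasCompactSupport.intro' hc.isCompact (isClosed_tsupport g) fun _ hξ => XH_zero_of_nmem hξ j

lemma hcs_YH {g : Heis n → ℝ} (hc : HasCompactSupport g) (j : Fin n) :
    HasCompactSupport (YH j g) :=
  HasCompactSupport.intro' hc.isCompact (isClosed_tsupport g) fun _ hξ => YH_zero_of_nmem hξ j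

/-- Continuity from continuity away from `0` plus vanishing near `0`. -/
lemma continuous_of_away {g : Heis n → ℝ} (h1 : ∀ ξ : Heis n, ξ ≠ 0 → ContinuousAt g ξ)
    (h0 : ∀ᶠ η in nhds (0 : Heis n), g η = 0) : Continuous g := by
  rw [continuous_iff_continuousAt]
  intro ξ
  by_cases hξ : ξ = 0
  · subst hξ
    exact (continuousAt_const (y := (0:ℝ))).congr (h0.mono fun η hη => hη.symm)
  · exact h1 ξ hξ

/-- The main integral identity: integral of the divergence is zero. -/
lemma integral_div_eq_zero {f : Heis n → ℝ} (hf : ContDiff ℝ (⊤ : ℕ∞) f) (hc : HasCompactSupport f)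
    (h0 : ∀ᶠ η in nhds (0 : Heis n), f η = 0) (r : ℝ) :
    ∫ ξ : Heis n, (2 * f ξ * Rf ξ ^ r * (∑ j, (P1 j ξ * XH j f ξ + P2 j ξ * YH j f ξ))
      + (16 + 8 * n + 16 * r) * (Af ξ * Rf ξ ^ r * f ξ ^ 2)) = 0 := by
  have hV1sm : ∀ j : Fin n, ContDiff ℝ (⊤ : ℕ∞) (fun η => f η ^ 2 * (Rf η ^ r * P1 j η)) :=
    fun j => contDiff_V hf h0 r (contDiff_P1 j)
  have hV2sm : ∀ j : Fin n, ContDiff ℝ (⊤ : ℕ∞) (fun η => f η ^ 2 * (Rf η ^ r * P2 j η)) :=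
    fun j => contDiff_V hf h0 r (contDiff_P2 j)
  have hV1c : ∀ j : Fin n, HasCompactSupport (fun η => f η ^ 2 * (Rf η ^ r * P1 j η)) :=
    fun j => hcs_V hc _
  have hV2c : ∀ j : Fin n, HasCompactSupport (fun η => f η ^ 2 * (Rf η ^ r * P2 j η)) :=
    fun j => hcs_V hc _
  have key := divergence_identity hf h0 r
  have hstep : (∫ ξ : Heis n, (2 * f ξ * Rf ξ ^ r * (∑ j, (P1 j ξ * XH j f ξ + P2 j ξ * YH j f ξ))
      + (16 + 8 * n + 16 * r) * (Af ξ * Rf ξ ^ r * f ξ ^ 2)))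
      = ∫ ξ : Heis n, ∑ j, (XH j (fun η => f η ^ 2 * (Rf η ^ r * P1 j η)) ξ
        + YH j (fun η => f η ^ 2 * (Rf η ^ r * P2 j η)) ξ) := by
    refine integral_congr_ae (Filter.Eventually.of_forall fun ξ => ?_)
    dsimp only
    rw [key ξ]
    ring
  rw [hstep, integral_finset_sum]
  · rw [Finset.sum_eq_zero]
    intro j _
    rw [integral_add, integral_XH_eq_zero (hV1sm j) (hV1c j) j,
      integral_YH_eq_zero (hV2sm j) (hV2c j) j]
    · simp
    · exact (continuous_XHf (hV1sm j) j).integrable_of_hasCompactSupport (hcs_XH (hV1c j) j)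
    · exact (continuous_YHf (hV2sm j) j).integrable_of_hasCompactSupport (hcs_YH (hV2c j) j)
  · intro j _
    exact ((continuous_XHf (hV1sm j) j).add (continuous_YHf (hV2sm j) j)).integrable_of_hasCompactSupport
      ((hcs_XH (hV1c j) j).add (hcs_YH (hV2c j) j))

end HeisAux

set_option maxHeartbeats 1000000 in
/-- Theorem 3.2 (a): the inequality giving the continuous embedding
`H¹_{a,b}(ℍⁿ, |z|²/d²) ⊂ L²_{(a+b+1)/2}(ℍⁿ, |z|²/d²)`. -/
theorem sobolev_embedding_H1_Heisenberg
    (n : ℕ) (a b : ℝ) (hQ : (2 * n + 2 : ℝ) ≠ a + b + 1)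
    (f : Heis n → ℝ) (hf : IsTestAwayZero f) :
    ∫ ξ : Heis n, zNorm ξ ^ 2 / dH ξ ^ 2 * (|f ξ| ^ 2 / dH ξ ^ (a + b + 1)) ≤
      1 / |2 * n + 2 - (a + b + 1)| *
        ((∫ ξ : Heis n, hNorm (hGrad f ξ) ^ 2 / dH ξ ^ (2 * a)) +
          ∫ ξ : Heis n, zNorm ξ ^ 2 / dH ξ ^ 2 * (|f ξ| ^ 2 / dH ξ ^ (2 * b))) := by
  open HeisAux in
  obtain ⟨hsm, hcs, hns⟩ := hf
  set r : ℝ := -((a + b + 3) / 4) with hr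
  have ev0 : ∀ᶠ η in nhds (0 : Heis n), f η = 0 := by
    have hmem : (tsupport f)ᶜ ∈ nhds (0 : Heis n) :=
      (isClosed_tsupport f).isOpen_compl.mem_nhds hns
    filter_upwards [hmem] with η hη using image_eq_zero_of_notMem_tsupport hη
  -- continuity of the basic pieces
  have contS : Continuous fun ξ : Heis n => ∑ j, (P1 j ξ * XH j f ξ + P2 j ξ * YH j f ξ) :=
    continuous_finset_sum _ fun j _ =>
      (((contDiff_P1 j).continuous.mul (continuous_XHf hsm j)).add
        ((contDiff_P2 j).continuous.mul (continuous_YHf hsm j)))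
  have contG2 : Continuous fun ξ : Heis n => ∑ j, (XH j f ξ ^ 2 + YH j f ξ ^ 2) :=
    continuous_finset_sum _ fun j _ =>
      (((continuous_XHf hsm j).pow 2).add ((continuous_YHf hsm j).pow 2))
  have hG2z : ∀ ξ : Heis n, ξ ∉ tsupport f → ∑ j, (XH j f ξ ^ 2 + YH j f ξ ^ 2) = 0 := by
    intro ξ hξ
    refine Finset.sum_eq_zero fun j _ => ?_
    rw [XH_zero_of_nmem hξ j, YH_zero_of_nmem hξ j]
    ring
  have hG2nonneg : ∀ ξ : Heis n, 0 ≤ ∑ j, (XH j f ξ ^ 2 + YH j f ξ ^ 2) :=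
    fun ξ => Finset.sum_nonneg fun j _ => by positivity
  -- the four integrands
  have contT1 : Continuous fun ξ : Heis n =>
      2 * f ξ * Rf ξ ^ r * (∑ j, (P1 j ξ * XH j f ξ + P2 j ξ * YH j f ξ)) := by
    refine continuous_of_away (fun ξ hξ => ?_) (ev0.mono fun η hη => by simp [hη])
    exact (((continuousAt_const.mul hsm.continuous.continuousAt).mul
      (contDiffAt_rpow r hξ).continuousAt).mul contS.continuousAt)
  have hcsT1 : HasCompactSupport fun ξ : Heis n =>
      2 * f ξ * Rf ξ ^ r * (∑ j, (P1 j ξ * XH j f ξ + P2 j ξ * YH j f ξ)) := by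
    refine HasCompactSupport.intro' hcs.isCompact (isClosed_tsupport f) fun ξ hξ => ?_
    simp [image_eq_zero_of_notMem_tsupport hξ]
  have contI0 : Continuous fun ξ : Heis n => Af ξ * Rf ξ ^ r * f ξ ^ 2 := by
    refine continuous_of_away (fun ξ hξ => ?_) (ev0.mono fun η hη => by simp [hη])
    exact ((contDiff_Af.continuous.continuousAt.mul (contDiffAt_rpow r hξ).continuousAt).mul
      ((hsm.continuous.pow 2).continuousAt))
  have hcsI0 : HasCompactSupport fun ξ : Heis n => Af ξ * Rf ξ ^ r * f ξ ^ 2 := by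
    refine HasCompactSupport.intro' hcs.isCompact (isClosed_tsupport f) fun ξ hξ => ?_
    simp [image_eq_zero_of_notMem_tsupport hξ]
  have contI1 : Continuous fun ξ : Heis n =>
      (∑ j, (XH j f ξ ^ 2 + YH j f ξ ^ 2)) * Rf ξ ^ (-(a / 2)) := by
    refine continuous_of_away (fun ξ hξ => ?_) ?_
    · exact contG2.continuousAt.mul (contDiffAt_rpow _ hξ).continuousAt
    · have hmem : (tsupport f)ᶜ ∈ nhds (0 : Heis n) :=
        (isClosed_tsupport f).isOpen_compl.mem_nhds hns
      filter_upwards [hmem] with η hη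
      rw [hG2z η hη, zero_mul]
  have hcsI1 : HasCompactSupport fun ξ : Heis n =>
      (∑ j, (XH j f ξ ^ 2 + YH j f ξ ^ 2)) * Rf ξ ^ (-(a / 2)) := by
    refine HasCompactSupport.intro' hcs.isCompact (isClosed_tsupport f) fun ξ hξ => ?_
    rw [hG2z ξ hξ, zero_mul]
  have contI2 : Continuous fun ξ : Heis n => Af ξ * f ξ ^ 2 * Rf ξ ^ (-((b + 1) / 2)) := by
    refine continuous_of_away (fun ξ hξ => ?_) (ev0.mono fun η hη => by simp [hη])
    exact ((contDiff_Af.continuous.continuousAt.mul ((hsm.continuous.pow 2).continuousAt)).mul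
      (contDiffAt_rpow _ hξ).continuousAt)
  have hcsI2 : HasCompactSupport fun ξ : Heis n => Af ξ * f ξ ^ 2 * Rf ξ ^ (-((b + 1) / 2)) := by
    refine HasCompactSupport.intro' hcs.isCompact (isClosed_tsupport f) fun ξ hξ => ?_
    simp [image_eq_zero_of_notMem_tsupport hξ]
  have intT1 := contT1.integrable_of_hasCompactSupport (μ := (volume : Measure (Heis n))) hcsT1
  have intI0 := contI0.integrable_of_hasCompactSupport (μ := (volume : Measure (Heis n))) hcsI0
  have intI1 := contI1.integrable_of_hasCompactSupport (μ := (volume : Measure (Heis n))) hcsI1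
  have intI2 := contI2.integrable_of_hasCompactSupport (μ := (volume : Measure (Heis n))) hcsI2
  -- the divergence theorem
  have hzero := integral_div_eq_zero hsm hcs ev0 r
  rw [integral_add intT1 (intI0.const_mul _), integral_const_mul] at hzero
  -- pointwise bound
  have hbound : ∀ ξ : Heis n,
      |2 * f ξ * Rf ξ ^ r * (∑ j, (P1 j ξ * XH j f ξ + P2 j ξ * YH j f ξ))| ≤
        4 * ((∑ j, (XH j f ξ ^ 2 + YH j f ξ ^ 2)) * Rf ξ ^ (-(a / 2))
          + Af ξ * f ξ ^ 2 * Rf ξ ^ (-((b + 1) / 2))) := by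
    intro ξ
    by_cases hξ : ξ = 0
    · subst hξ
      rw [ev0.self_of_nhds]
      have h1 : (0:ℝ) ≤ (∑ j, (XH j f (0:Heis n) ^ 2 + YH j f (0:Heis n) ^ 2)) *
          Rf (0:Heis n) ^ (-(a / 2)) :=
        mul_nonneg (hG2nonneg 0) (Real.rpow_nonneg (Rf_nonneg 0) _)
      have h2 : (0:ℝ) ≤ Af (0:Heis n) * f (0:Heis n) ^ 2 * Rf (0:Heis n) ^ (-((b + 1) / 2)) := by
        have := Af_nonneg (0 : Heis n)
        have := Real.rpow_nonneg (Rf_nonneg (0:Heis n)) (-((b + 1) / 2))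
        positivity
      simp only [mul_zero, zero_mul, abs_zero]
      linarith
    · have hρ := Rf_pos hξ
      set G2 := ∑ j, (XH j f ξ ^ 2 + YH j f ξ ^ 2) with hG2def
      set S := ∑ j, (P1 j ξ * XH j f ξ + P2 j ξ * YH j f ξ) with hSdef
      -- Cauchy–Schwarz over the combined index
      have hCS : |S| ≤ Real.sqrt (16 * Af ξ * Rf ξ) * Real.sqrt G2 := by
        have hsum : ∀ g : Fin n ⊕ Fin n → ℝ, ∑ i : Fin n ⊕ Fin n, g i
            = ∑ j, g (Sum.inl j) + ∑ j, g (Sum.inr j) := fun g => Fintype.sum_sum_type g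
        set p : Fin n ⊕ Fin n → ℝ := Sum.elim (fun j => P1 j ξ) (fun j => P2 j ξ) with hp
        set q : Fin n ⊕ Fin n → ℝ := Sum.elim (fun j => XH j f ξ) (fun j => YH j f ξ) with hq
        have hpq : S = ∑ i : Fin n ⊕ Fin n, p i * q i := by
          rw [hsum fun i => p i * q i, hSdef, Finset.sum_add_distrib]
          simp [hp, hq]
        have hp2 : ∑ i : Fin n ⊕ Fin n, p i ^ 2 = 16 * Af ξ * Rf ξ := by
          rw [hsum fun i => p i ^ 2]
          simp only [hp, Sum.elim_inl, Sum.elim_inr]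
          rw [← Finset.sum_add_distrib, sum_P_sq]
        have hq2 : ∑ i : Fin n ⊕ Fin n, q i ^ 2 = G2 := by
          rw [hsum fun i => q i ^ 2]
          simp only [hq, Sum.elim_inl, Sum.elim_inr]
          rw [← Finset.sum_add_distrib]
        have h1 := Real.sum_mul_le_sqrt_mul_sqrt Finset.univ p q
        have h2 := Real.sum_mul_le_sqrt_mul_sqrt Finset.univ (fun i => -p i) q
        rw [hp2, hq2] at h1
        have hneg : ∑ i : Fin n ⊕ Fin n, -p i * q i = -∑ i : Fin n ⊕ Fin n, p i * q i := by
          rw [← Finset.sum_neg_distrib]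
          exact Finset.sum_congr rfl fun i _ => by ring
        have hsq : ∑ i : Fin n ⊕ Fin n, (-p i) ^ 2 = 16 * Af ξ * Rf ξ := by
          rw [← hp2]; exact Finset.sum_congr rfl fun i _ => by ring
        rw [hneg, hsq, hq2] at h2
        rw [hpq]
        exact abs_le.2 ⟨by linarith, h1⟩
      have h16 : Real.sqrt (16 * Af ξ * Rf ξ)
          = 4 * Real.sqrt (Af ξ) * Real.sqrt (Rf ξ) := by
        rw [show (16:ℝ) * Af ξ * Rf ξ = (4 * Real.sqrt (Af ξ) * Real.sqrt (Rf ξ)) ^ 2 by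
          rw [mul_pow, mul_pow, Real.sq_sqrt (Af_nonneg ξ), Real.sq_sqrt (Rf_nonneg ξ)]
          norm_num]
        exact Real.sqrt_sq (by positivity)
      -- AM–GM
      set u : ℝ := Real.sqrt G2 * Rf ξ ^ (-(a / 4)) with hu
      set w : ℝ := |f ξ| * Real.sqrt (Af ξ) * Rf ξ ^ (-((b + 1) / 4)) with hw
      have hAM : 2 * (u * w) ≤ u ^ 2 + w ^ 2 := by nlinarith [two_mul_le_add_sq u w]
      have hrr : ∀ c : ℝ, (Rf ξ ^ c) ^ 2 = Rf ξ ^ (2 * c) := by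
        intro c
        rw [sq, ← Real.rpow_add hρ]
        congr 1
        ring
      have hu2 : u ^ 2 = G2 * Rf ξ ^ (-(a / 2)) := by
        rw [hu, mul_pow, Real.sq_sqrt (hG2nonneg ξ), hrr]
        congr 1
        ring
      have hw2 : w ^ 2 = Af ξ * f ξ ^ 2 * Rf ξ ^ (-((b + 1) / 2)) := by
        rw [hw, mul_pow, mul_pow, Real.sq_sqrt (Af_nonneg ξ), sq_abs, hrr]
        rw [show (2:ℝ) * -((b+1)/4) = -((b+1)/2) by ring]
        ring
      have hexp : Rf ξ ^ r * Rf ξ ^ ((1:ℝ)/2) = Rf ξ ^ (-(a / 4)) * Rf ξ ^ (-((b + 1) / 4)) := by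
        rw [← Real.rpow_add hρ, ← Real.rpow_add hρ]
        congr 1
        rw [hr]; ring
      have hsqrtρ : Real.sqrt (Rf ξ) = Rf ξ ^ ((1:ℝ)/2) := Real.sqrt_eq_rpow _
      have hLHS : |2 * f ξ * Rf ξ ^ r * S| ≤ 8 * (u * w) := by
        have habs : |2 * f ξ * Rf ξ ^ r * S| = 2 * |f ξ| * Rf ξ ^ r * |S| := by
          rw [abs_mul, abs_mul, abs_mul]
          rw [abs_of_nonneg (Real.rpow_nonneg (Rf_nonneg ξ) r)]
          norm_num
        rw [habs]
        have hstep : 2 * |f ξ| * Rf ξ ^ r * |S|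
            ≤ 2 * |f ξ| * Rf ξ ^ r * (4 * Real.sqrt (Af ξ) * Real.sqrt (Rf ξ) * Real.sqrt G2) := by
          rw [← h16]
          refine mul_le_mul_of_nonneg_left ?_ ?_
          · exact hCS
          · have := abs_nonneg (f ξ)
            have := Real.rpow_nonneg (Rf_nonneg ξ) r
            positivity
        refine hstep.trans ?_
        rw [hu, hw, hsqrtρ]
        have := hexp
        nlinarith [Real.sqrt_nonneg G2, Real.sqrt_nonneg (Af ξ), abs_nonneg (f ξ),
          Real.rpow_nonneg (Rf_nonneg ξ) r, Real.rpow_nonneg (Rf_nonneg ξ) ((1:ℝ)/2),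
          Real.rpow_nonneg (Rf_nonneg ξ) (-(a/4)), Real.rpow_nonneg (Rf_nonneg ξ) (-((b+1)/4)),
          mul_nonneg (mul_nonneg (Real.sqrt_nonneg G2) (abs_nonneg (f ξ))) (Real.sqrt_nonneg (Af ξ))]
      calc |2 * f ξ * Rf ξ ^ r * S| ≤ 8 * (u * w) := hLHS
        _ = 4 * (2 * (u * w)) := by ring
        _ ≤ 4 * (u ^ 2 + w ^ 2) := by linarith
        _ = 4 * (G2 * Rf ξ ^ (-(a / 2)) + Af ξ * f ξ ^ 2 * Rf ξ ^ (-((b + 1) / 2))) := by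
            rw [hu2, hw2]
  -- put the integrals together
  have hI0nonneg : 0 ≤ ∫ ξ : Heis n, Af ξ * Rf ξ ^ r * f ξ ^ 2 :=
    integral_nonneg fun ξ => by
      have := Af_nonneg ξ
      have := Real.rpow_nonneg (Rf_nonneg ξ) r
      positivity
  have habs2 : |(16 + 8 * (n:ℝ) + 16 * r)| * ∫ ξ : Heis n, Af ξ * Rf ξ ^ r * f ξ ^ 2 ≤
      4 * ((∫ ξ : Heis n, (∑ j, (XH j f ξ ^ 2 + YH j f ξ ^ 2)) * Rf ξ ^ (-(a / 2)))
        + ∫ ξ : Heis n, Af ξ * f ξ ^ 2 * Rf ξ ^ (-((b + 1) / 2))) := by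
    have e1 : (16 + 8 * (n:ℝ) + 16 * r) * (∫ ξ : Heis n, Af ξ * Rf ξ ^ r * f ξ ^ 2)
        = -∫ ξ : Heis n, 2 * f ξ * Rf ξ ^ r * (∑ j, (P1 j ξ * XH j f ξ + P2 j ξ * YH j f ξ)) := by
      linarith [hzero]
    calc |(16 + 8 * (n:ℝ) + 16 * r)| * ∫ ξ : Heis n, Af ξ * Rf ξ ^ r * f ξ ^ 2
        = |(16 + 8 * (n:ℝ) + 16 * r) * ∫ ξ : Heis n, Af ξ * Rf ξ ^ r * f ξ ^ 2| := by
          rw [abs_mul, abs_of_nonneg hI0nonneg]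
      _ = |∫ ξ : Heis n, 2 * f ξ * Rf ξ ^ r * (∑ j, (P1 j ξ * XH j f ξ + P2 j ξ * YH j f ξ))| := by
          rw [e1, abs_neg]
      _ ≤ ∫ ξ : Heis n, |2 * f ξ * Rf ξ ^ r * (∑ j, (P1 j ξ * XH j f ξ + P2 j ξ * YH j f ξ))| := by
          simpa only [Real.norm_eq_abs] using
            norm_integral_le_integral_norm (μ := (volume : Measure (Heis n)))
              (f := fun ξ : Heis n => 2 * f ξ * Rf ξ ^ r *
                (∑ j, (P1 j ξ * XH j f ξ + P2 j ξ * YH j f ξ)))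
      _ ≤ ∫ ξ : Heis n, 4 * ((∑ j, (XH j f ξ ^ 2 + YH j f ξ ^ 2)) * Rf ξ ^ (-(a / 2))
            + Af ξ * f ξ ^ 2 * Rf ξ ^ (-((b + 1) / 2))) := by
          refine integral_mono intT1.abs ((intI1.add intI2).const_mul 4) hbound
      _ = 4 * ((∫ ξ : Heis n, (∑ j, (XH j f ξ ^ 2 + YH j f ξ ^ 2)) * Rf ξ ^ (-(a / 2)))
            + ∫ ξ : Heis n, Af ξ * f ξ ^ 2 * Rf ξ ^ (-((b + 1) / 2))) := by
          rw [integral_const_mul, integral_add intI1 intI2]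
  -- identify the constant
  have hc : (16 + 8 * (n:ℝ) + 16 * r) = 4 * (2 * n + 2 - (a + b + 1)) := by rw [hr]; ring
  have hQpos : 0 < |2 * (n:ℝ) + 2 - (a + b + 1)| := by
    rw [abs_pos]
    intro h
    exact hQ (by linarith)
  -- convert the statement's integrands
  have hae : ∀ᵐ ξ : Heis n ∂(volume : Measure (Heis n)), ξ ≠ (0 : Heis n) := by
    refine ae_iff.2 ?_
    have : {ξ : Heis n | ¬ ξ ≠ 0} = {(0 : Heis n)} := by
      ext ξ; simp
    rw [this]
    exact measure_singleton _
  have conv0 : ∫ ξ : Heis n, zNorm ξ ^ 2 / dH ξ ^ 2 * (|f ξ| ^ 2 / dH ξ ^ (a + b + 1))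
      = ∫ ξ : Heis n, Af ξ * Rf ξ ^ r * f ξ ^ 2 := by
    refine integral_congr_ae (hae.mono fun ξ hξ => ?_)
    dsimp only
    have hρ := Rf_pos hξ
    have hd : dH ξ = Rf ξ ^ ((1:ℝ)/4) := rfl
    have ez : zNorm ξ ^ 2 = Af ξ := Real.sq_sqrt (Af_nonneg ξ)
    have e2 : dH ξ ^ 2 = Rf ξ ^ ((1:ℝ)/2) := by
      rw [← Real.rpow_natCast (dH ξ) 2, hd, ← Real.rpow_mul (Rf_nonneg ξ)]
      norm_num
    have eα : dH ξ ^ (a + b + 1) = Rf ξ ^ ((a + b + 1)/4) := by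
      rw [hd, ← Real.rpow_mul (Rf_nonneg ξ)]
      congr 1
      ring
    rw [ez, e2, eα, sq_abs, div_mul_div_comm, ← Real.rpow_add hρ, div_eq_mul_inv,
      ← Real.rpow_neg (Rf_nonneg ξ), show -(((1:ℝ)/2) + (a + b + 1)/4) = r by rw [hr]; ring]
    ring
  have conv1 : ∫ ξ : Heis n, hNorm (hGrad f ξ) ^ 2 / dH ξ ^ (2 * a)
      = ∫ ξ : Heis n, (∑ j, (XH j f ξ ^ 2 + YH j f ξ ^ 2)) * Rf ξ ^ (-(a / 2)) := by
    refine integral_congr_ae (hae.mono fun ξ hξ => ?_)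
    dsimp only
    have hρ := Rf_pos hξ
    have hd : dH ξ = Rf ξ ^ ((1:ℝ)/4) := rfl
    have eh : hNorm (hGrad f ξ) ^ 2 = ∑ j, (XH j f ξ ^ 2 + YH j f ξ ^ 2) := by
      have : hNorm (hGrad f ξ) = Real.sqrt (∑ j, XH j f ξ ^ 2 + ∑ j, YH j f ξ ^ 2) := rfl
      rw [this, Real.sq_sqrt (by positivity), Finset.sum_add_distrib]
    have ea : dH ξ ^ (2 * a) = Rf ξ ^ (a / 2) := by
      rw [hd, ← Real.rpow_mul (Rf_nonneg ξ)]
      congr 1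
      ring
    rw [eh, ea, div_eq_mul_inv, ← Real.rpow_neg (Rf_nonneg ξ)]
  have conv2 : ∫ ξ : Heis n, zNorm ξ ^ 2 / dH ξ ^ 2 * (|f ξ| ^ 2 / dH ξ ^ (2 * b))
      = ∫ ξ : Heis n, Af ξ * f ξ ^ 2 * Rf ξ ^ (-((b + 1) / 2)) := by
    refine integral_congr_ae (hae.mono fun ξ hξ => ?_)
    dsimp only
    have hρ := Rf_pos hξ
    have hd : dH ξ = Rf ξ ^ ((1:ℝ)/4) := rfl
    have ez : zNorm ξ ^ 2 = Af ξ := Real.sq_sqrt (Af_nonneg ξ)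
    have e2 : dH ξ ^ 2 = Rf ξ ^ ((1:ℝ)/2) := by
      rw [← Real.rpow_natCast (dH ξ) 2, hd, ← Real.rpow_mul (Rf_nonneg ξ)]
      norm_num
    have eb : dH ξ ^ (2 * b) = Rf ξ ^ (b / 2) := by
      rw [hd, ← Real.rpow_mul (Rf_nonneg ξ)]
      congr 1
      ring
    rw [ez, e2, eb, sq_abs, div_mul_div_comm, ← Real.rpow_add hρ, div_eq_mul_inv,
      ← Real.rpow_neg (Rf_nonneg ξ), show -(((1:ℝ)/2) + b/2) = -((b+1)/2) by ring]
  rw [conv0, conv1, conv2]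
  rw [hc] at habs2
  rw [abs_mul, abs_of_nonneg (by norm_num : (0:ℝ) ≤ 4)] at habs2
  rw [one_div, ← div_eq_inv_mul, le_div_iff₀ hQpos]
  nlinarith [habs2, hI0nonneg]
end
end

section
/- For every smooth compactly supported function f on ℍⁿ \ {0}, one has ((Q − 1)/2) · ∫_{ℍⁿ} (|z|²/d²) · (|f|²/d) dξ ≤ (∫_{ℍⁿ} |∇_H f|² dξ)^{1/2} · (∫_{ℍⁿ} (|z|²/d²) |f|² dξ)^{1/2}. -/
open MeasureTheory Real

noncomputable section

namespace HardyAux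
open Pointwise

variable {n : ℕ}

/-! ### Measure-theoretic instances -/

noncomputable instance haar2 (n : ℕ) : (volume : Measure ((Fin n → ℝ) × ℝ)).IsAddHaarMeasure :=
  Measure.prod.instIsAddHaarMeasure _ _

noncomputable instance haar3 (n : ℕ) : (volume : Measure (Heis n)).IsAddHaarMeasure :=
  Measure.prod.instIsAddHaarMeasure _ _

lemma volume_singleton_zero (n : ℕ) : volume ({0} : Set (Heis n)) = 0 := by
  have h1 : ({0} : Set (Heis n)) = {0} ×ˢ ({0} ×ˢ ({0} : Set ℝ)) := by
    rw [Set.singleton_prod_singleton, Set.singleton_prod_singleton]; rfl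
  rw [h1, show (volume : Measure (Heis n)) = (volume : Measure (Fin n → ℝ)).prod volume from rfl,
    Measure.prod_prod,
    show (volume : Measure ((Fin n → ℝ) × ℝ)) = (volume : Measure (Fin n → ℝ)).prod volume from rfl,
    Measure.prod_prod]
  simp

/-! ### Basic functions -/

def sF (ξ : Heis n) : ℝ := ∑ j, ξ.1 j ^ 2 + ∑ j, ξ.2.1 j ^ 2

def rF (ξ : Heis n) : ℝ := sF ξ ^ 2 + ξ.2.2 ^ 2

def PF (j : Fin n) (ξ : Heis n) : ℝ := sF ξ * ξ.1 j + ξ.2.2 * ξ.2.1 j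

def QF (j : Fin n) (ξ : Heis n) : ℝ := sF ξ * ξ.2.1 j - ξ.2.2 * ξ.1 j

def W1 (j : Fin n) (ξ : Heis n) : ℝ := PF j ξ * rF ξ ^ (-(3/4) : ℝ)

def W2 (j : Fin n) (ξ : Heis n) : ℝ := QF j ξ * rF ξ ^ (-(3/4) : ℝ)

lemma sF_nonneg (ξ : Heis n) : 0 ≤ sF ξ := by
  unfold sF; positivity

lemma rF_nonneg (ξ : Heis n) : 0 ≤ rF ξ := by
  unfold rF; positivity

lemma rF_pos {ξ : Heis n} (hξ : ξ ≠ 0) : 0 < rF ξ := by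
  rcases (rF_nonneg ξ).lt_or_eq with h | h
  · exact h
  exfalso
  have h0 : sF ξ ^ 2 + ξ.2.2 ^ 2 = 0 := h.symm
  have hsq := (add_eq_zero_iff_of_nonneg (sq_nonneg (sF ξ)) (sq_nonneg ξ.2.2)).1 h0
  have hsf : sF ξ = 0 := by
    have := hsq.1; exact pow_eq_zero_iff two_ne_zero |>.1 this
  have ht : ξ.2.2 = 0 := by
    have := hsq.2; exact pow_eq_zero_iff two_ne_zero |>.1 this
  have hsum : ∑ j, ξ.1 j ^ 2 + ∑ j, ξ.2.1 j ^ 2 = 0 := hsf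
  have hsums := (add_eq_zero_iff_of_nonneg
    (Finset.sum_nonneg fun j _ => sq_nonneg (ξ.1 j))
    (Finset.sum_nonneg fun j _ => sq_nonneg (ξ.2.1 j))).1 hsum
  have hx : ∀ j, ξ.1 j = 0 := fun j =>
    pow_eq_zero_iff two_ne_zero |>.1
      ((Finset.sum_eq_zero_iff_of_nonneg fun j _ => sq_nonneg (ξ.1 j)).1 hsums.1 j
        (Finset.mem_univ j))
  have hy : ∀ j, ξ.2.1 j = 0 := fun j =>
    pow_eq_zero_iff two_ne_zero |>.1
      ((Finset.sum_eq_zero_iff_of_nonneg fun j _ => sq_nonneg (ξ.2.1 j)).1 hsums.2 j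
        (Finset.mem_univ j))
  apply hξ
  refine Prod.ext (funext hx) (Prod.ext (funext hy) ht)

/-! ### Coordinate continuous linear maps -/

def cx (j : Fin n) : Heis n →L[ℝ] ℝ :=
  (ContinuousLinearMap.proj j).comp (ContinuousLinearMap.fst ℝ (Fin n → ℝ) ((Fin n → ℝ) × ℝ))

def cy (j : Fin n) : Heis n →L[ℝ] ℝ :=
  ((ContinuousLinearMap.proj j).comp
    (ContinuousLinearMap.fst ℝ (Fin n → ℝ) ℝ)).comp
    (ContinuousLinearMap.snd ℝ (Fin n → ℝ) ((Fin n → ℝ) × ℝ))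

def ct : Heis n →L[ℝ] ℝ :=
  (ContinuousLinearMap.snd ℝ (Fin n → ℝ) ℝ).comp
    (ContinuousLinearMap.snd ℝ (Fin n → ℝ) ((Fin n → ℝ) × ℝ))

@[simp] lemma cx_apply (j : Fin n) (v : Heis n) : cx j v = v.1 j := rfl
@[simp] lemma cy_apply (j : Fin n) (v : Heis n) : cy j v = v.2.1 j := rfl
@[simp] lemma ct_apply (v : Heis n) : ct v = v.2.2 := rfl

lemma hasFDerivAt_x (j : Fin n) (ξ : Heis n) :
    HasFDerivAt (fun ξ : Heis n => ξ.1 j) (cx j) ξ := (cx j).hasFDerivAt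

lemma hasFDerivAt_y (j : Fin n) (ξ : Heis n) :
    HasFDerivAt (fun ξ : Heis n => ξ.2.1 j) (cy j) ξ := (cy j).hasFDerivAt

lemma hasFDerivAt_t (ξ : Heis n) :
    HasFDerivAt (fun ξ : Heis n => ξ.2.2) (ct : Heis n →L[ℝ] ℝ) ξ := ct.hasFDerivAt

/-! ### Derivatives of the basic functions -/

def LS (ξ : Heis n) : Heis n →L[ℝ] ℝ :=
  (∑ j, (2 * ξ.1 j) • cx j) + ∑ j, (2 * ξ.2.1 j) • cy j

def LR (ξ : Heis n) : Heis n →L[ℝ] ℝ :=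
  (2 * sF ξ) • LS ξ + (2 * ξ.2.2) • ct

lemma hasFDerivAt_sF (ξ : Heis n) : HasFDerivAt (sF (n := n)) (LS ξ) ξ := by
  have h1 : ∀ j : Fin n, HasFDerivAt (fun ξ : Heis n => ξ.1 j ^ 2) ((2 * ξ.1 j) • cx j) ξ := by
    intro j
    have := (hasFDerivAt_x j ξ).fun_mul (hasFDerivAt_x j ξ)
    simpa only [pow_two, two_mul, add_smul] using this
  have h2 : ∀ j : Fin n, HasFDerivAt (fun ξ : Heis n => ξ.2.1 j ^ 2) ((2 * ξ.2.1 j) • cy j) ξ := by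
    intro j
    have := (hasFDerivAt_y j ξ).fun_mul (hasFDerivAt_y j ξ)
    simpa only [pow_two, two_mul, add_smul] using this
  exact (HasFDerivAt.fun_sum fun j _ => h1 j).add (HasFDerivAt.fun_sum fun j _ => h2 j)

lemma hasFDerivAt_rF (ξ : Heis n) : HasFDerivAt (rF (n := n)) (LR ξ) ξ := by
  have h1 : HasFDerivAt (fun ξ : Heis n => sF ξ ^ 2) ((2 * sF ξ) • LS ξ) ξ := by
    have := (hasFDerivAt_sF ξ).fun_mul (hasFDerivAt_sF ξ)
    simpa only [pow_two, two_mul, add_smul] using this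
  have h2 : HasFDerivAt (fun ξ : Heis n => ξ.2.2 ^ 2) ((2 * ξ.2.2) • ct) ξ := by
    have := (hasFDerivAt_t ξ).fun_mul (hasFDerivAt_t ξ)
    simpa only [pow_two, two_mul, add_smul] using this
  exact h1.add h2

/-! ### Pointwise formulas for derivatives of the vector field W -/

lemma XH_W1 (j : Fin n) {ξ : Heis n} (hξ : ξ ≠ 0) :
    XH j (W1 j) ξ = (sF ξ + 2 * ξ.1 j ^ 2 + 2 * ξ.2.1 j ^ 2) * rF ξ ^ (-(3/4) : ℝ)
      - 3 * PF j ξ ^ 2 * rF ξ ^ (-(7/4) : ℝ) := by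
  have hP : HasFDerivAt (PF j)
      ((sF ξ • cx j + ξ.1 j • LS ξ) + (ξ.2.2 • cy j + ξ.2.1 j • ct)) ξ :=
    ((hasFDerivAt_sF ξ).mul (hasFDerivAt_x j ξ)).add
      ((hasFDerivAt_t ξ).mul (hasFDerivAt_y j ξ))
  have hrp : HasFDerivAt (fun ξ : Heis n => rF ξ ^ (-(3/4) : ℝ))
      (((-(3/4) : ℝ) * rF ξ ^ ((-(3/4) : ℝ) - 1)) • LR ξ) ξ :=
    (hasFDerivAt_rF ξ).rpow_const (Or.inl (rF_pos hξ).ne')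
  have hW : HasFDerivAt (W1 j)
      (PF j ξ • (((-(3/4) : ℝ) * rF ξ ^ ((-(3/4) : ℝ) - 1)) • LR ξ)
        + (rF ξ ^ (-(3/4) : ℝ)) •
          ((sF ξ • cx j + ξ.1 j • LS ξ) + (ξ.2.2 • cy j + ξ.2.1 j • ct))) ξ := hP.mul hrp
  have e1 : ((-(3/4) : ℝ) - 1) = -(7/4) := by norm_num
  simp only [XH, hW.fderiv, e1, ContinuousLinearMap.add_apply, ContinuousLinearMap.coe_smul',
    Pi.smul_apply, ContinuousLinearMap.sum_apply, cx_apply, cy_apply, ct_apply, smul_eq_mul,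
    LS, LR, Pi.single_apply, Pi.zero_apply, mul_ite, mul_one, mul_zero, ite_mul, zero_mul,
    Finset.sum_ite_eq', Finset.mem_univ, if_true, add_zero, zero_add, Finset.sum_const_zero]
  simp only [PF]
  ring

lemma YH_W2 (j : Fin n) {ξ : Heis n} (hξ : ξ ≠ 0) :
    YH j (W2 j) ξ = (sF ξ + 2 * ξ.1 j ^ 2 + 2 * ξ.2.1 j ^ 2) * rF ξ ^ (-(3/4) : ℝ)
      - 3 * QF j ξ ^ 2 * rF ξ ^ (-(7/4) : ℝ) := by
  have hQ : HasFDerivAt (QF j)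
      ((sF ξ • cy j + ξ.2.1 j • LS ξ) - (ξ.2.2 • cx j + ξ.1 j • ct)) ξ :=
    ((hasFDerivAt_sF ξ).mul (hasFDerivAt_y j ξ)).sub
      ((hasFDerivAt_t ξ).mul (hasFDerivAt_x j ξ))
  have hrp : HasFDerivAt (fun ξ : Heis n => rF ξ ^ (-(3/4) : ℝ))
      (((-(3/4) : ℝ) * rF ξ ^ ((-(3/4) : ℝ) - 1)) • LR ξ) ξ :=
    (hasFDerivAt_rF ξ).rpow_const (Or.inl (rF_pos hξ).ne')
  have hW : HasFDerivAt (W2 j)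
      (QF j ξ • (((-(3/4) : ℝ) * rF ξ ^ ((-(3/4) : ℝ) - 1)) • LR ξ)
        + (rF ξ ^ (-(3/4) : ℝ)) •
          ((sF ξ • cy j + ξ.2.1 j • LS ξ) - (ξ.2.2 • cx j + ξ.1 j • ct))) ξ := hQ.mul hrp
  have e1 : ((-(3/4) : ℝ) - 1) = -(7/4) := by norm_num
  simp only [YH, hW.fderiv, e1, ContinuousLinearMap.add_apply, ContinuousLinearMap.sub_apply,
    ContinuousLinearMap.coe_smul', Pi.smul_apply, ContinuousLinearMap.sum_apply, cx_apply,
    cy_apply, ct_apply, smul_eq_mul, LS, LR, Pi.single_apply, Pi.zero_apply, mul_ite, mul_one,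
    mul_zero, ite_mul, zero_mul, Finset.sum_ite_eq', Finset.mem_univ, if_true, add_zero,
    zero_add, Finset.sum_const_zero]
  simp only [QF]
  ring

lemma XH_mul (j : Fin n) {u v : Heis n → ℝ} {ξ : Heis n} (hu : DifferentiableAt ℝ u ξ)
    (hv : DifferentiableAt ℝ v ξ) :
    XH j (fun η => u η * v η) ξ = u ξ * XH j v ξ + v ξ * XH j u ξ := by
  simp only [XH, fderiv_fun_mul hu hv, ContinuousLinearMap.add_apply,
    ContinuousLinearMap.coe_smul', Pi.smul_apply, smul_eq_mul]
  ring

lemma YH_mul (j : Fin n) {u v : Heis n → ℝ} {ξ : Heis n} (hu : DifferentiableAt ℝ u ξ)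
    (hv : DifferentiableAt ℝ v ξ) :
    YH j (fun η => u η * v η) ξ = u ξ * YH j v ξ + v ξ * YH j u ξ := by
  simp only [YH, fderiv_fun_mul hu hv, ContinuousLinearMap.add_apply,
    ContinuousLinearMap.coe_smul', Pi.smul_apply, smul_eq_mul]
  ring

lemma diffAt_W1 (j : Fin n) {ξ : Heis n} (hξ : ξ ≠ 0) : DifferentiableAt ℝ (W1 j) ξ := by
  have hP : HasFDerivAt (PF j)
      ((sF ξ • cx j + ξ.1 j • LS ξ) + (ξ.2.2 • cy j + ξ.2.1 j • ct)) ξ :=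
    ((hasFDerivAt_sF ξ).mul (hasFDerivAt_x j ξ)).add
      ((hasFDerivAt_t ξ).mul (hasFDerivAt_y j ξ))
  exact (hP.mul ((hasFDerivAt_rF ξ).rpow_const
    (Or.inl (rF_pos hξ).ne'))).differentiableAt

lemma diffAt_W2 (j : Fin n) {ξ : Heis n} (hξ : ξ ≠ 0) : DifferentiableAt ℝ (W2 j) ξ := by
  have hQ : HasFDerivAt (QF j)
      ((sF ξ • cy j + ξ.2.1 j • LS ξ) - (ξ.2.2 • cx j + ξ.1 j • ct)) ξ :=
    ((hasFDerivAt_sF ξ).mul (hasFDerivAt_y j ξ)).sub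
      ((hasFDerivAt_t ξ).mul (hasFDerivAt_x j ξ))
  exact (hQ.mul ((hasFDerivAt_rF ξ).rpow_const
    (Or.inl (rF_pos hξ).ne'))).differentiableAt

lemma sumPQ (ξ : Heis n) : ∑ j, (PF j ξ ^ 2 + QF j ξ ^ 2) = sF ξ * rF ξ := by
  have h : ∀ j : Fin n, PF j ξ ^ 2 + QF j ξ ^ 2 = rF ξ * (ξ.1 j ^ 2 + ξ.2.1 j ^ 2) := by
    intro j; simp only [PF, QF, rF]; ring
  rw [Finset.sum_congr rfl fun j _ => h j, ← Finset.mul_sum, Finset.sum_add_distrib]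
  rw [show (∑ j, ξ.1 j ^ 2 + ∑ j, ξ.2.1 j ^ 2) = sF ξ from rfl]
  ring

lemma div_W {ξ : Heis n} (hξ : ξ ≠ 0) :
    ∑ j, (XH j (W1 j) ξ + YH j (W2 j) ξ)
      = (2 * n + 1) * sF ξ * rF ξ ^ (-(3/4) : ℝ) := by
  have hrew : ∀ j : Fin n, XH j (W1 j) ξ + YH j (W2 j) ξ
      = (2 * sF ξ + 4 * ξ.1 j ^ 2 + 4 * ξ.2.1 j ^ 2) * rF ξ ^ (-(3/4) : ℝ)
        - 3 * (PF j ξ ^ 2 + QF j ξ ^ 2) * rF ξ ^ (-(7/4) : ℝ) := by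
    intro j; rw [XH_W1 j hξ, YH_W2 j hξ]; ring
  rw [Finset.sum_congr rfl fun j _ => hrew j, Finset.sum_sub_distrib, ← Finset.sum_mul,
    ← Finset.sum_mul, ← Finset.mul_sum, sumPQ]
  have hsum : ∑ j : Fin n, (2 * sF ξ + 4 * ξ.1 j ^ 2 + 4 * ξ.2.1 j ^ 2)
      = 2 * n * sF ξ + 4 * sF ξ := by
    rw [Finset.sum_add_distrib, Finset.sum_add_distrib, Finset.sum_const, ← Finset.mul_sum,
      ← Finset.mul_sum, Finset.card_univ, Fintype.card_fin, nsmul_eq_mul]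
    rw [show sF ξ = ∑ j, ξ.1 j ^ 2 + ∑ j, ξ.2.1 j ^ 2 from rfl]
    ring
  rw [hsum]
  have hpow : rF ξ * rF ξ ^ (-(7/4) : ℝ) = rF ξ ^ (-(3/4) : ℝ) := by
    nth_rewrite 1 [← Real.rpow_one (rF ξ)]
    rw [← Real.rpow_add (rF_pos hξ)]
    norm_num
  linear_combination (-(3 * sF ξ)) * hpow

lemma hDiv_V (f : Heis n → ℝ) (hf : Differentiable ℝ f) {ξ : Heis n} (hξ : ξ ≠ 0) :
    ∑ j, (XH j (fun η => f η ^ 2 * W1 j η) ξ + YH j (fun η => f η ^ 2 * W2 j η) ξ)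
      = 2 * f ξ * (∑ j, XH j f ξ * W1 j ξ + ∑ j, YH j f ξ * W2 j ξ)
        + f ξ ^ 2 * ((2 * n + 1) * sF ξ * rF ξ ^ (-(3/4) : ℝ)) := by
  have hsq : DifferentiableAt ℝ (fun η => f η ^ 2) ξ := (hf ξ).pow 2
  have hXsq : ∀ j : Fin n, XH j (fun η => f η ^ 2) ξ = 2 * f ξ * XH j f ξ := by
    intro j
    have e : (fun η : Heis n => f η ^ 2) = fun η => f η * f η := by funext η; ring
    rw [e, XH_mul j (hf ξ) (hf ξ)]; ring
  have hYsq : ∀ j : Fin n, YH j (fun η => f η ^ 2) ξ = 2 * f ξ * YH j f ξ := by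
    intro j
    have e : (fun η : Heis n => f η ^ 2) = fun η => f η * f η := by funext η; ring
    rw [e, YH_mul j (hf ξ) (hf ξ)]; ring
  have step : ∀ j : Fin n,
      XH j (fun η => f η ^ 2 * W1 j η) ξ + YH j (fun η => f η ^ 2 * W2 j η) ξ
        = 2 * f ξ * (XH j f ξ * W1 j ξ + YH j f ξ * W2 j ξ)
          + f ξ ^ 2 * (XH j (W1 j) ξ + YH j (W2 j) ξ) := by
    intro j
    rw [XH_mul j hsq (diffAt_W1 j hξ), YH_mul j hsq (diffAt_W2 j hξ), hXsq j, hYsq j]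
    ring
  rw [Finset.sum_congr rfl fun j _ => step j, Finset.sum_add_distrib, ← Finset.mul_sum,
    ← Finset.mul_sum, div_W hξ, Finset.sum_add_distrib]

/-! ### The divergence theorem on `ℍⁿ` -/

lemma integral_fderiv_apply (g : Heis n → ℝ) (hg : ContDiff ℝ (⊤ : ℕ∞) g)
    (hsupp : HasCompactSupport g) (v : Heis n) :
    ∫ ξ : Heis n, fderiv ℝ g ξ v = 0 := by
  obtain ⟨C, hC⟩ := (hg.continuous_fderiv (by simp)).bounded_above_of_compact_support
    (hsupp.fderiv ℝ)
  set K : Set (Heis n) := tsupport g + Metric.closedBall (0 : Heis n) ‖v‖ with hK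
  have hKc : IsCompact K := IsCompact.add hsupp (isCompact_closedBall (0 : Heis n) ‖v‖)
  set F : ℝ → Heis n → ℝ := fun h ξ => g (ξ + h • v) with hF
  set F' : ℝ → Heis n → ℝ := fun h ξ => fderiv ℝ g (ξ + h • v) v with hF'
  have hmeas : ∀ᶠ h in nhds (0:ℝ), AEStronglyMeasurable (F h) volume :=
    Filter.Eventually.of_forall fun h =>
      (hg.continuous.comp (continuous_id.add continuous_const)).aestronglyMeasurable
  have hint : Integrable (F 0) volume := by
    have h0 : F 0 = g := by funext ξ; simp [hF]
    rw [h0]; exact hg.continuous.integrable_of_hasCompactSupport hsupp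
  have hmeas' : AEStronglyMeasurable (F' 0) volume := by
    apply Continuous.aestronglyMeasurable
    exact (((hg.continuous_fderiv (by simp)).comp
      (continuous_id.add continuous_const)).clm_apply continuous_const)
  have hbound : ∀ᵐ ξ : Heis n, ∀ h ∈ Metric.ball (0:ℝ) 1,
      ‖F' h ξ‖ ≤ K.indicator (fun _ => C * ‖v‖) ξ := by
    refine Filter.Eventually.of_forall fun ξ => fun h hh => ?_
    by_cases hmem : ξ ∈ K
    · rw [Set.indicator_of_mem hmem]
      calc ‖F' h ξ‖ ≤ ‖fderiv ℝ g (ξ + h • v)‖ * ‖v‖ :=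
            (fderiv ℝ g (ξ + h • v)).le_opNorm v
        _ ≤ C * ‖v‖ := mul_le_mul_of_nonneg_right (hC _) (norm_nonneg v)
    · rw [Set.indicator_of_notMem hmem]
      have hball : -(h • v) ∈ Metric.closedBall (0 : Heis n) ‖v‖ := by
        rw [Metric.mem_closedBall, dist_zero_right, norm_neg, norm_smul]
        have h1 : |h| ≤ 1 := le_of_lt (by simpa [Real.norm_eq_abs] using hh)
        calc ‖h‖ * ‖v‖ ≤ 1 * ‖v‖ :=
              mul_le_mul_of_nonneg_right (by simpa [Real.norm_eq_abs] using h1)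
                (norm_nonneg v)
          _ = ‖v‖ := one_mul _
      have hnot : ξ + h • v ∉ tsupport g := by
        intro hmem2
        exact hmem (by
          rw [hK]
          exact Set.mem_add.2 ⟨ξ + h • v, hmem2, -(h • v), hball, by abel⟩)
      have h0 : fderiv ℝ g (ξ + h • v) = 0 :=
        image_eq_zero_of_notMem_tsupport fun hmem2 => hnot (tsupport_fderiv_subset ℝ hmem2)
      simp [hF', h0]
  have hbint : Integrable (K.indicator fun _ => C * ‖v‖) volume := by
    rw [integrable_indicator_iff hKc.measurableSet]
    exact integrableOn_const hKc.measure_lt_top.ne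
  have hdiff : ∀ᵐ ξ : Heis n, ∀ h ∈ Metric.ball (0:ℝ) 1,
      HasDerivAt (fun h => F h ξ) (F' h ξ) h := by
    refine Filter.Eventually.of_forall fun ξ => fun h _ => ?_
    have h1 : HasDerivAt (fun h : ℝ => ξ + h • v) v h := by
      simpa using ((hasDerivAt_id h).smul_const v).const_add ξ
    exact ((hg.differentiable (by simp)) (ξ + h • v)).hasFDerivAt.comp_hasDerivAt h h1
  obtain ⟨-, hder⟩ := hasDerivAt_integral_of_dominated_loc_of_deriv_le (Metric.ball_mem_nhds 0 zero_lt_one)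
    hmeas hint hmeas' hbound hbint hdiff
  have hconst : (fun h : ℝ => ∫ ξ : Heis n, F h ξ) = fun _ => ∫ ξ : Heis n, g ξ := by
    funext h
    exact integral_add_right_eq_self g (h • v)
  rw [hconst] at hder
  have h0 := (hasDerivAt_const (0:ℝ) (∫ ξ : Heis n, g ξ)).unique hder
  have heq : (fun ξ : Heis n => fderiv ℝ g ξ v) = F' 0 := by funext ξ; simp [hF']
  rw [heq, ← h0]

lemma integrable_fderiv_apply (g : Heis n → ℝ) (hg : ContDiff ℝ (⊤ : ℕ∞) g)
    (hsupp : HasCompactSupport g) (v : Heis n) :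
    Integrable (fun ξ : Heis n => fderiv ℝ g ξ v) volume := by
  apply Continuous.integrable_of_hasCompactSupport
  · exact (hg.continuous_fderiv (by simp)).clm_apply continuous_const
  · exact HasCompactSupport.intro (hsupp.fderiv ℝ) fun x hx => by
      rw [image_eq_zero_of_notMem_tsupport hx, ContinuousLinearMap.zero_apply]

lemma contDiff_coord_y (j : Fin n) : ContDiff ℝ (⊤ : ℕ∞) (fun ξ : Heis n => ξ.2.1 j) :=
  (cy j).contDiff

lemma contDiff_coord_x (j : Fin n) : ContDiff ℝ (⊤ : ℕ∞) (fun ξ : Heis n => ξ.1 j) :=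
  (cx j).contDiff

lemma integral_XH_zero (g : Heis n → ℝ) (hg : ContDiff ℝ (⊤ : ℕ∞) g)
    (hsupp : HasCompactSupport g) (j : Fin n) :
    ∫ ξ : Heis n, XH j g ξ = 0 := by
  have hdg : Differentiable ℝ g := hg.differentiable (by simp)
  set g' : Heis n → ℝ := fun ξ => ξ.2.1 j * g ξ with hg'def
  have hg' : ContDiff ℝ (⊤ : ℕ∞) g' := (contDiff_coord_y j).mul hg
  have hsupp' : HasCompactSupport g' := hsupp.mul_left
  have key : ∀ ξ : Heis n, fderiv ℝ g' ξ (0, 0, 1) = ξ.2.1 j * fderiv ℝ g ξ (0, 0, 1) := by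
    intro ξ
    have h1 : HasFDerivAt g' (ξ.2.1 j • fderiv ℝ g ξ + g ξ • cy j) ξ :=
      (hasFDerivAt_y j ξ).mul (hdg ξ).hasFDerivAt
    rw [h1.fderiv]
    simp
  have hsplit : ∀ ξ : Heis n, XH j g ξ
      = fderiv ℝ g ξ (Pi.single j 1, 0, 0) + 2 * fderiv ℝ g' ξ (0, 0, 1) := by
    intro ξ; rw [XH, key ξ]; ring
  calc ∫ ξ : Heis n, XH j g ξ
      = ∫ ξ : Heis n, (fderiv ℝ g ξ (Pi.single j 1, 0, 0) + 2 * fderiv ℝ g' ξ (0, 0, 1)) :=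
        integral_congr_ae (Filter.Eventually.of_forall hsplit)
    _ = (∫ ξ : Heis n, fderiv ℝ g ξ (Pi.single j 1, 0, 0))
        + ∫ ξ : Heis n, 2 * fderiv ℝ g' ξ (0, 0, 1) := by
        rw [integral_add (integrable_fderiv_apply g hg hsupp _)
          ((integrable_fderiv_apply g' hg' hsupp' _).const_mul 2)]
    _ = 0 + 2 * ∫ ξ : Heis n, fderiv ℝ g' ξ (0, 0, 1) := by
        rw [integral_fderiv_apply g hg hsupp, integral_const_mul]
    _ = 0 := by rw [integral_fderiv_apply g' hg' hsupp']; ring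

lemma integral_YH_zero (g : Heis n → ℝ) (hg : ContDiff ℝ (⊤ : ℕ∞) g)
    (hsupp : HasCompactSupport g) (j : Fin n) :
    ∫ ξ : Heis n, YH j g ξ = 0 := by
  have hdg : Differentiable ℝ g := hg.differentiable (by simp)
  set g' : Heis n → ℝ := fun ξ => ξ.1 j * g ξ with hg'def
  have hg' : ContDiff ℝ (⊤ : ℕ∞) g' := (contDiff_coord_x j).mul hg
  have hsupp' : HasCompactSupport g' := hsupp.mul_left
  have key : ∀ ξ : Heis n, fderiv ℝ g' ξ (0, 0, 1) = ξ.1 j * fderiv ℝ g ξ (0, 0, 1) := by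
    intro ξ
    have h1 : HasFDerivAt g' (ξ.1 j • fderiv ℝ g ξ + g ξ • cx j) ξ :=
      (hasFDerivAt_x j ξ).mul (hdg ξ).hasFDerivAt
    rw [h1.fderiv]
    simp
  have hsplit : ∀ ξ : Heis n, YH j g ξ
      = fderiv ℝ g ξ (0, Pi.single j 1, 0) - 2 * fderiv ℝ g' ξ (0, 0, 1) := by
    intro ξ; rw [YH, key ξ]; ring
  calc ∫ ξ : Heis n, YH j g ξ
      = ∫ ξ : Heis n, (fderiv ℝ g ξ (0, Pi.single j 1, 0) - 2 * fderiv ℝ g' ξ (0, 0, 1)) :=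
        integral_congr_ae (Filter.Eventually.of_forall hsplit)
    _ = (∫ ξ : Heis n, fderiv ℝ g ξ (0, Pi.single j 1, 0))
        - ∫ ξ : Heis n, 2 * fderiv ℝ g' ξ (0, 0, 1) := by
        rw [integral_sub (integrable_fderiv_apply g hg hsupp _)
          ((integrable_fderiv_apply g' hg' hsupp' _).const_mul 2)]
    _ = 0 - 2 * ∫ ξ : Heis n, fderiv ℝ g' ξ (0, 0, 1) := by
        rw [integral_fderiv_apply g hg hsupp, integral_const_mul]
    _ = 0 := by rw [integral_fderiv_apply g' hg' hsupp']; ring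

/-! ### Smoothness of the basic functions -/

lemma contDiff_sF : ContDiff ℝ (⊤ : ℕ∞) (sF (n := n)) := by
  apply ContDiff.add <;> exact ContDiff.sum fun j _ => by
    first
    | exact (contDiff_coord_x j).pow 2
    | exact (contDiff_coord_y j).pow 2

lemma contDiff_rF : ContDiff ℝ (⊤ : ℕ∞) (rF (n := n)) :=
  (contDiff_sF.pow 2).add ((ct : Heis n →L[ℝ] ℝ).contDiff.pow 2)

lemma contDiff_PF (j : Fin n) : ContDiff ℝ (⊤ : ℕ∞) (PF j (n := n)) :=
  (contDiff_sF.mul (contDiff_coord_x j)).add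
    ((ct : Heis n →L[ℝ] ℝ).contDiff.mul (contDiff_coord_y j))

lemma contDiff_QF (j : Fin n) : ContDiff ℝ (⊤ : ℕ∞) (QF j (n := n)) :=
  (contDiff_sF.mul (contDiff_coord_y j)).sub
    ((ct : Heis n →L[ℝ] ℝ).contDiff.mul (contDiff_coord_x j))

lemma contDiffAt_W1 (j : Fin n) {ξ : Heis n} (hξ : ξ ≠ 0) : ContDiffAt ℝ (⊤ : ℕ∞) (W1 j) ξ :=
  (contDiff_PF j).contDiffAt.mul
    (contDiff_rF.contDiffAt.rpow_const_of_ne (rF_pos hξ).ne')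

lemma contDiffAt_W2 (j : Fin n) {ξ : Heis n} (hξ : ξ ≠ 0) : ContDiffAt ℝ (⊤ : ℕ∞) (W2 j) ξ :=
  (contDiff_QF j).contDiffAt.mul
    (contDiff_rF.contDiffAt.rpow_const_of_ne (rF_pos hξ).ne')

/-! ### Continuity / support helper -/

lemma cont_of_away {f : Heis n → ℝ} (hf2 : HasCompactSupport f) (hf3 : (0:Heis n) ∉ tsupport f)
    {h : Heis n → ℝ} (hcont : ∀ ξ : Heis n, ξ ≠ 0 → ContinuousAt h ξ)
    (hzero : ∀ ξ ∉ tsupport f, h ξ = 0) :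
    Continuous h ∧ HasCompactSupport h := by
  constructor
  · rw [continuous_iff_continuousAt]
    intro ξ
    by_cases hmem : ξ ∈ tsupport f
    · exact hcont ξ fun h0 => hf3 (h0 ▸ hmem)
    · have hopen : IsOpen (tsupport f)ᶜ := (isClosed_tsupport f).isOpen_compl
      have hev : (fun _ : Heis n => (0:ℝ)) =ᶠ[nhds ξ] h :=
        Filter.eventually_of_mem (hopen.mem_nhds hmem) fun η hη => (hzero η hη).symm
      exact continuousAt_const.congr hev
  · exact HasCompactSupport.intro hf2 hzero

lemma smooth_of_away {f : Heis n → ℝ} (hf3 : (0:Heis n) ∉ tsupport f)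
    {h : Heis n → ℝ} (hcont : ∀ ξ : Heis n, ξ ≠ 0 → ContDiffAt ℝ (⊤ : ℕ∞) h ξ)
    (hzero : ∀ ξ ∉ tsupport f, h ξ = 0) :
    ContDiff ℝ (⊤ : ℕ∞) h := by
  rw [contDiff_iff_contDiffAt]
  intro ξ
  by_cases hmem : ξ ∈ tsupport f
  · exact hcont ξ fun h0 => hf3 (h0 ▸ hmem)
  · have hopen : IsOpen (tsupport f)ᶜ := (isClosed_tsupport f).isOpen_compl
    have hev : h =ᶠ[nhds ξ] (fun _ : Heis n => (0:ℝ)) :=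
      Filter.eventually_of_mem (hopen.mem_nhds hmem) fun η hη => hzero η hη
    exact contDiffAt_const.congr_of_eventuallyEq hev

/-! ### Continuity of horizontal derivatives -/

lemma cont_XH (j : Fin n) {f : Heis n → ℝ} (hf1 : ContDiff ℝ (⊤ : ℕ∞) f) : Continuous (XH j f) := by
  have h1 : Continuous fun ξ : Heis n => fderiv ℝ f ξ (Pi.single j 1, 0, 0) :=
    (hf1.continuous_fderiv (by simp)).clm_apply continuous_const
  have h2 : Continuous fun ξ : Heis n => fderiv ℝ f ξ (0, 0, 1) :=
    (hf1.continuous_fderiv (by simp)).clm_apply continuous_const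
  exact h1.add ((continuous_const.mul (cy j).continuous).mul h2)

lemma cont_YH (j : Fin n) {f : Heis n → ℝ} (hf1 : ContDiff ℝ (⊤ : ℕ∞) f) : Continuous (YH j f) := by
  have h1 : Continuous fun ξ : Heis n => fderiv ℝ f ξ (0, Pi.single j 1, 0) :=
    (hf1.continuous_fderiv (by simp)).clm_apply continuous_const
  have h2 : Continuous fun ξ : Heis n => fderiv ℝ f ξ (0, 0, 1) :=
    (hf1.continuous_fderiv (by simp)).clm_apply continuous_const
  exact h1.sub ((continuous_const.mul (cx j).continuous).mul h2)

lemma XH_zero_of_nmem {f : Heis n → ℝ} {ξ : Heis n} (hξ : ξ ∉ tsupport f) (j : Fin n) :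
    XH j f ξ = 0 := by
  have h0 : fderiv ℝ f ξ = 0 :=
    image_eq_zero_of_notMem_tsupport fun h => hξ (tsupport_fderiv_subset ℝ h)
  simp [XH, h0]

lemma YH_zero_of_nmem {f : Heis n → ℝ} {ξ : Heis n} (hξ : ξ ∉ tsupport f) (j : Fin n) :
    YH j f ξ = 0 := by
  have h0 : fderiv ℝ f ξ = 0 :=
    image_eq_zero_of_notMem_tsupport fun h => hξ (tsupport_fderiv_subset ℝ h)
  simp [YH, h0]

/-! ### Pointwise Cauchy-Schwarz -/

lemma abs_hDot_le (v w : (Fin n → ℝ) × (Fin n → ℝ)) : |hDot v w| ≤ hNorm v * hNorm w := by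
  set a : Fin n ⊕ Fin n → ℝ := Sum.elim v.1 v.2 with ha
  set b : Fin n ⊕ Fin n → ℝ := Sum.elim w.1 w.2 with hb
  have h1 : hDot v w = ∑ i : Fin n ⊕ Fin n, a i * b i := by
    rw [Fintype.sum_sum_type]; simp [ha, hb, hDot]
  have h2 : hNorm v = Real.sqrt (∑ i : Fin n ⊕ Fin n, a i ^ 2) := by
    rw [Fintype.sum_sum_type]; simp [ha, hNorm]
  have h3 : hNorm w = Real.sqrt (∑ i : Fin n ⊕ Fin n, b i ^ 2) := by
    rw [Fintype.sum_sum_type]; simp [hb, hNorm]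
  rw [h1, h2, h3]
  calc |∑ i : Fin n ⊕ Fin n, a i * b i|
      = Real.sqrt ((∑ i : Fin n ⊕ Fin n, a i * b i) ^ 2) := (Real.sqrt_sq_eq_abs _).symm
    _ ≤ Real.sqrt ((∑ i : Fin n ⊕ Fin n, a i ^ 2) * ∑ i : Fin n ⊕ Fin n, b i ^ 2) :=
        Real.sqrt_le_sqrt (Finset.sum_mul_sq_le_sq_mul_sq _ _ _)
    _ = _ := Real.sqrt_mul (Finset.sum_nonneg fun i _ => sq_nonneg _) _

lemma hNorm_W {ξ : Heis n} (hξ : ξ ≠ 0) :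
    hNorm (fun j => W1 j ξ, fun j => W2 j ξ)
      = Real.sqrt (sF ξ) * rF ξ ^ (-(1/4) : ℝ) := by
  have h1 : (∑ j, W1 j ξ ^ 2 + ∑ j, W2 j ξ ^ 2)
      = (sF ξ * rF ξ) * (rF ξ ^ (-(3/4) : ℝ)) ^ 2 := by
    simp only [W1, W2, mul_pow]
    rw [← Finset.sum_mul, ← Finset.sum_mul, ← add_mul, ← Finset.sum_add_distrib, sumPQ]
  have h2 : (rF ξ ^ (-(3/4) : ℝ)) ^ 2 = rF ξ ^ (-(3/2) : ℝ) := by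
    rw [← Real.rpow_natCast (rF ξ ^ (-(3/4) : ℝ)) 2, ← Real.rpow_mul (rF_nonneg ξ)]
    norm_num
  have h3 : sF ξ * rF ξ * rF ξ ^ (-(3/2) : ℝ) = sF ξ * rF ξ ^ (-(1/2) : ℝ) := by
    have hpow : rF ξ * rF ξ ^ (-(3/2) : ℝ) = rF ξ ^ (-(1/2) : ℝ) := by
      nth_rewrite 1 [← Real.rpow_one (rF ξ)]
      rw [← Real.rpow_add (rF_pos hξ)]
      norm_num
    rw [mul_assoc, hpow]
  have h4 : Real.sqrt (rF ξ ^ (-(1/2) : ℝ)) = rF ξ ^ (-(1/4) : ℝ) := by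
    rw [Real.sqrt_eq_rpow, ← Real.rpow_mul (rF_nonneg ξ)]
    norm_num
  show Real.sqrt (∑ j, W1 j ξ ^ 2 + ∑ j, W2 j ξ ^ 2) = _
  rw [h1, h2, h3, Real.sqrt_mul (sF_nonneg ξ), h4]

/-! ### Integrability of horizontal derivatives -/

lemma integrable_XH (g : Heis n → ℝ) (hg : ContDiff ℝ (⊤ : ℕ∞) g) (hsupp : HasCompactSupport g)
    (j : Fin n) : Integrable (XH j g) volume :=
  Continuous.integrable_of_hasCompactSupport (cont_XH j hg)
    (HasCompactSupport.intro hsupp fun _ hx => XH_zero_of_nmem hx j)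

lemma integrable_YH (g : Heis n → ℝ) (hg : ContDiff ℝ (⊤ : ℕ∞) g) (hsupp : HasCompactSupport g)
    (j : Fin n) : Integrable (YH j g) volume :=
  Continuous.integrable_of_hasCompactSupport (cont_YH j hg)
    (HasCompactSupport.intro hsupp fun _ hx => YH_zero_of_nmem hx j)

/-! ### The key integration-by-parts identity -/

lemma key_identity (f : Heis n → ℝ) (hf1 : ContDiff ℝ (⊤ : ℕ∞) f) (hf2 : HasCompactSupport f)
    (hf3 : (0:Heis n) ∉ tsupport f) :
    ∫ ξ : Heis n, (2 * f ξ * (∑ j, XH j f ξ * W1 j ξ + ∑ j, YH j f ξ * W2 j ξ)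
      + f ξ ^ 2 * ((2 * n + 1) * sF ξ * rF ξ ^ (-(3/4) : ℝ))) = 0 := by
  have hV1 : ∀ j : Fin n, ContDiff ℝ (⊤ : ℕ∞) (fun ξ : Heis n => f ξ ^ 2 * W1 j ξ) := fun j =>
    smooth_of_away hf3
      (fun ξ hξ => (hf1.contDiffAt.pow 2).mul (contDiffAt_W1 j hξ))
      (fun ξ hξ => by rw [image_eq_zero_of_notMem_tsupport hξ]; ring)
  have hV2 : ∀ j : Fin n, ContDiff ℝ (⊤ : ℕ∞) (fun ξ : Heis n => f ξ ^ 2 * W2 j ξ) := fun j =>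
    smooth_of_away hf3
      (fun ξ hξ => (hf1.contDiffAt.pow 2).mul (contDiffAt_W2 j hξ))
      (fun ξ hξ => by rw [image_eq_zero_of_notMem_tsupport hξ]; ring)
  have hV1s : ∀ j : Fin n, HasCompactSupport (fun ξ : Heis n => f ξ ^ 2 * W1 j ξ) := fun j =>
    HasCompactSupport.intro hf2 fun ξ hξ => by rw [image_eq_zero_of_notMem_tsupport hξ]; ring
  have hV2s : ∀ j : Fin n, HasCompactSupport (fun ξ : Heis n => f ξ ^ 2 * W2 j ξ) := fun j =>
    HasCompactSupport.intro hf2 fun ξ hξ => by rw [image_eq_zero_of_notMem_tsupport hξ]; ring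
  have hzero : ∫ ξ : Heis n, (∑ j, (XH j (fun η => f η ^ 2 * W1 j η) ξ
      + YH j (fun η => f η ^ 2 * W2 j η) ξ)) = 0 := by
    refine Eq.trans (integral_finset_sum _ fun j _ =>
      (integrable_XH _ (hV1 j) (hV1s j) j).add (integrable_YH _ (hV2 j) (hV2s j) j)) ?_
    refine Finset.sum_eq_zero fun j _ => ?_
    rw [integral_add (integrable_XH _ (hV1 j) (hV1s j) j)
      (integrable_YH _ (hV2 j) (hV2s j) j),
      integral_XH_zero _ (hV1 j) (hV1s j) j, integral_YH_zero _ (hV2 j) (hV2s j) j, add_zero]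
  have hmem : ({0}ᶜ : Set (Heis n)) ∈ ae volume := by
    rw [mem_ae_iff, compl_compl]; exact volume_singleton_zero n
  have hae : (fun ξ : Heis n => ∑ j, (XH j (fun η => f η ^ 2 * W1 j η) ξ
        + YH j (fun η => f η ^ 2 * W2 j η) ξ))
      =ᵐ[volume] (fun ξ : Heis n => 2 * f ξ * (∑ j, XH j f ξ * W1 j ξ + ∑ j, YH j f ξ * W2 j ξ)
        + f ξ ^ 2 * ((2 * n + 1) * sF ξ * rF ξ ^ (-(3/4) : ℝ))) :=
    Filter.eventuallyEq_of_mem hmem fun ξ hξ => hDiv_V f (hf1.differentiable (by simp)) hξ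
  rw [← integral_congr_ae hae, hzero]

end HardyAux

open HardyAux in
/-- Corollary 3.4 (7): the case `a = b = 0` of the `L²`
interpolation Hardy inequality on `ℍⁿ`. -/

theorem L2_hardy_case_a0_b0_Heisenberg
    (n : ℕ) (f : Heis n → ℝ) (hf : IsTestAwayZero f) :
    (2 * n + 2 - 1 : ℝ) / 2 *
        ∫ ξ : Heis n, zNorm ξ ^ 2 / dH ξ ^ 2 * (|f ξ| ^ 2 / dH ξ) ≤
      (∫ ξ : Heis n, hNorm (hGrad f ξ) ^ 2) ^ ((1 : ℝ) / 2) *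
        (∫ ξ : Heis n, zNorm ξ ^ 2 / dH ξ ^ 2 * |f ξ| ^ 2) ^ ((1 : ℝ) / 2) := by
  obtain ⟨hf1, hf2, hf3⟩ := hf
  have hf0 : f 0 = 0 := image_eq_zero_of_notMem_tsupport hf3
  set F : Heis n → ℝ := fun ξ => hNorm (hGrad f ξ) with hF
  set G : Heis n → ℝ := fun ξ => |f ξ| * (Real.sqrt (sF ξ) * rF ξ ^ (-(1/4) : ℝ)) with hG
  set D : Heis n → ℝ := fun ξ => ∑ j, XH j f ξ * W1 j ξ + ∑ j, YH j f ξ * W2 j ξ with hD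
  -- continuity facts
  have hFeq : F = fun ξ : Heis n => Real.sqrt (∑ j, XH j f ξ ^ 2 + ∑ j, YH j f ξ ^ 2) := rfl
  have hFcont : Continuous F := by
    rw [hFeq]
    exact Real.continuous_sqrt.comp
      ((continuous_finset_sum _ fun j _ => (cont_XH j hf1).pow 2).add
        (continuous_finset_sum _ fun j _ => (cont_YH j hf1).pow 2))
  have hFsupp : HasCompactSupport F := by
    refine HasCompactSupport.intro hf2 fun ξ hξ => ?_
    have h1 : ∀ j : Fin n, XH j f ξ = 0 := fun j => XH_zero_of_nmem hξ j
    have h2 : ∀ j : Fin n, YH j f ξ = 0 := fun j => YH_zero_of_nmem hξ j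
    rw [hFeq]
    simp [h1, h2]
  have hF0 : ∀ ξ : Heis n, 0 ≤ F ξ := fun ξ => Real.sqrt_nonneg _
  have hDcont : ∀ ξ : Heis n, ξ ≠ 0 → ContinuousAt D ξ := by
    intro ξ hξ
    exact ContinuousAt.add
      (tendsto_finset_sum _ fun j _ =>
        ((cont_XH j hf1).continuousAt.mul (diffAt_W1 j hξ).continuousAt))
      (tendsto_finset_sum _ fun j _ =>
        ((cont_YH j hf1).continuousAt.mul (diffAt_W2 j hξ).continuousAt))
  have hGpack : Continuous G ∧ HasCompactSupport G := by
    refine cont_of_away hf2 hf3 (fun ξ hξ => ?_) (fun ξ hξ => ?_)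
    · exact (hf1.continuous.abs.continuousAt).mul
        (((Real.continuous_sqrt.comp contDiff_sF.continuous).continuousAt).mul
          ((contDiff_rF.contDiffAt.rpow_const_of_ne
            (rF_pos hξ).ne').continuousAt))
    · rw [hG]
      simp only [image_eq_zero_of_notMem_tsupport hξ, abs_zero, zero_mul]
  have hG0 : ∀ ξ : Heis n, 0 ≤ G ξ := fun ξ =>
    mul_nonneg (abs_nonneg _)
      (mul_nonneg (Real.sqrt_nonneg _) (Real.rpow_nonneg (rF_nonneg ξ) _))
  -- integrability of the two pieces of the identity
  have hint1pack : Continuous (fun ξ : Heis n => 2 * f ξ * D ξ)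
      ∧ HasCompactSupport (fun ξ : Heis n => 2 * f ξ * D ξ) := by
    refine cont_of_away hf2 hf3 (fun ξ hξ => ?_) (fun ξ hξ => ?_)
    · exact ((continuous_const.mul hf1.continuous).continuousAt).mul (hDcont ξ hξ)
    · rw [image_eq_zero_of_notMem_tsupport hξ]; ring
  have hint2pack : Continuous (fun ξ : Heis n => f ξ ^ 2 * ((2 * n + 1) * sF ξ * rF ξ ^ (-(3/4) : ℝ)))
      ∧ HasCompactSupport (fun ξ : Heis n => f ξ ^ 2 * ((2 * n + 1) * sF ξ * rF ξ ^ (-(3/4) : ℝ))) := by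
    refine cont_of_away hf2 hf3 (fun ξ hξ => ?_) (fun ξ hξ => ?_)
    · exact ((hf1.continuous.pow 2).continuousAt).mul
        (((continuous_const.mul contDiff_sF.continuous).continuousAt).mul
          ((contDiff_rF.contDiffAt.rpow_const_of_ne (rF_pos hξ).ne').continuousAt))
    · rw [image_eq_zero_of_notMem_tsupport hξ]; ring
  have hint1 : Integrable (fun ξ : Heis n => 2 * f ξ * D ξ) volume :=
    hint1pack.1.integrable_of_hasCompactSupport hint1pack.2
  have hint2 : Integrable
      (fun ξ : Heis n => f ξ ^ 2 * ((2 * n + 1) * sF ξ * rF ξ ^ (-(3/4) : ℝ))) volume :=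
    hint2pack.1.integrable_of_hasCompactSupport hint2pack.2
  -- the identity
  have hkey := key_identity f hf1 hf2 hf3
  have hsplit : (∫ ξ : Heis n, 2 * f ξ * D ξ)
      + ∫ ξ : Heis n, f ξ ^ 2 * ((2 * n + 1) * sF ξ * rF ξ ^ (-(3/4) : ℝ)) = 0 := by
    rw [← integral_add hint1 hint2]
    exact hkey
  set I : ℝ := ∫ ξ : Heis n, f ξ ^ 2 * (sF ξ * rF ξ ^ (-(3/4) : ℝ)) with hI
  have hI2 : ∫ ξ : Heis n, f ξ ^ 2 * ((2 * n + 1) * sF ξ * rF ξ ^ (-(3/4) : ℝ))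
      = (2 * n + 1) * I := by
    rw [hI, ← integral_const_mul]
    congr 1
    funext ξ
    ring
  -- pointwise bound
  have hptw : ∀ ξ : Heis n, |2 * f ξ * D ξ| ≤ 2 * (F ξ * G ξ) := by
    intro ξ
    by_cases hξ : ξ = 0
    · subst hξ
      rw [hf0]
      simpa using mul_nonneg (by norm_num : (0:ℝ) ≤ 2) (mul_nonneg (hF0 0) (hG0 0))
    · have hcs := abs_hDot_le (hGrad f ξ) (fun j => W1 j ξ, fun j => W2 j ξ)
      have hdot : hDot (hGrad f ξ) (fun j => W1 j ξ, fun j => W2 j ξ) = D ξ := rfl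
      rw [hdot, hNorm_W hξ] at hcs
      calc |2 * f ξ * D ξ| = 2 * (|f ξ| * |D ξ|) := by
            rw [abs_mul, abs_mul, abs_two]; ring
        _ ≤ 2 * (|f ξ| * (F ξ * (Real.sqrt (sF ξ) * rF ξ ^ (-(1/4) : ℝ)))) := by
            have := mul_le_mul_of_nonneg_left hcs (abs_nonneg (f ξ))
            linarith
        _ = 2 * (F ξ * G ξ) := by rw [hG]; ring
  -- main estimate
  have hFGint : Integrable (fun ξ : Heis n => F ξ * G ξ) volume :=
    (hFcont.mul hGpack.1).integrable_of_hasCompactSupport (hGpack.2.mul_left)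
  have habs : (2 * n + 1 : ℝ) * I ≤ 2 * ∫ ξ : Heis n, F ξ * G ξ := by
    have h1 : (2 * n + 1 : ℝ) * I = - ∫ ξ : Heis n, 2 * f ξ * D ξ := by
      rw [← hI2]; linarith [hsplit]
    have h2 : |∫ ξ : Heis n, 2 * f ξ * D ξ| ≤ ∫ ξ : Heis n, |2 * f ξ * D ξ| := by
      have := norm_integral_le_integral_norm (μ := volume) (fun ξ : Heis n => 2 * f ξ * D ξ)
      simp only [Real.norm_eq_abs] at this
      exact this
    have h3 : ∫ ξ : Heis n, |2 * f ξ * D ξ| ≤ ∫ ξ : Heis n, 2 * (F ξ * G ξ) :=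
      integral_mono hint1.abs (hFGint.const_mul 2) hptw
    have h4 : ∫ ξ : Heis n, 2 * (F ξ * G ξ) = 2 * ∫ ξ : Heis n, F ξ * G ξ :=
      integral_const_mul 2 _
    have h5 : - ∫ ξ : Heis n, 2 * f ξ * D ξ ≤ |∫ ξ : Heis n, 2 * f ξ * D ξ| := neg_le_abs _
    linarith
  -- Hoelder
  have hconj : Real.HolderConjugate 2 2 := Real.HolderConjugate.two_two
  have hFmem : MemLp F (ENNReal.ofReal 2) volume :=
    hFcont.memLp_of_hasCompactSupport hFsupp
  have hGmem : MemLp G (ENNReal.ofReal 2) volume :=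
    hGpack.1.memLp_of_hasCompactSupport hGpack.2
  have hFG : ∫ ξ : Heis n, F ξ * G ξ
      ≤ (∫ ξ : Heis n, F ξ ^ (2:ℝ)) ^ ((1:ℝ)/2) * (∫ ξ : Heis n, G ξ ^ (2:ℝ)) ^ ((1:ℝ)/2) := by
    simpa using integral_mul_le_Lp_mul_Lq_of_nonneg hconj
      (Filter.Eventually.of_forall hF0) (Filter.Eventually.of_forall hG0) hFmem hGmem
  have hrpow2 : ∀ x : ℝ, x ^ (2:ℝ) = x ^ (2:ℕ) := fun x => by
    rw [show (2:ℝ) = ((2:ℕ):ℝ) by norm_num, Real.rpow_natCast]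
  -- pointwise identification of the integrands in the statement
  have hLHS : ∀ ξ : Heis n, zNorm ξ ^ 2 / dH ξ ^ 2 * (|f ξ| ^ 2 / dH ξ)
      = f ξ ^ 2 * (sF ξ * rF ξ ^ (-(3/4) : ℝ)) := by
    intro ξ
    by_cases hξ : ξ = 0
    · subst hξ
      have hz : zNorm (0 : Heis n) = 0 := by simp [zNorm]
      have hs : sF (0 : Heis n) = 0 := by simp [sF]
      rw [hz, hs]
      ring
    · have hr := rF_pos hξ
      have hzn : zNorm ξ ^ 2 = sF ξ := Real.sq_sqrt (sF_nonneg ξ)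
      have hdH : dH ξ = rF ξ ^ ((1:ℝ)/4) := rfl
      have hd2 : dH ξ ^ 2 = rF ξ ^ ((1:ℝ)/2) := by
        rw [hdH, ← Real.rpow_natCast (rF ξ ^ ((1:ℝ)/4)) 2, ← Real.rpow_mul (rF_nonneg ξ)]
        norm_num
      have habsf : |f ξ| ^ 2 = f ξ ^ 2 := sq_abs _
      rw [hzn, hd2, hdH, habsf, div_mul_div_comm, ← Real.rpow_add hr,
        show ((1:ℝ)/2 + 1/4) = 3/4 by norm_num,
        show (-(3/4) : ℝ) = -(3/4 : ℝ) from rfl, Real.rpow_neg (rF_nonneg ξ),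
        div_eq_mul_inv]
      ring
  have hGsq : ∀ ξ : Heis n, zNorm ξ ^ 2 / dH ξ ^ 2 * |f ξ| ^ 2 = G ξ ^ 2 := by
    intro ξ
    by_cases hξ : ξ = 0
    · subst hξ
      have hz : zNorm (0 : Heis n) = 0 := by simp [zNorm]
      have hs : sF (0 : Heis n) = 0 := by simp [sF]
      rw [hz, hG]
      simp [hs]
    · have hr := rF_pos hξ
      have hzn : zNorm ξ ^ 2 = sF ξ := Real.sq_sqrt (sF_nonneg ξ)
      have hd2 : dH ξ ^ 2 = rF ξ ^ ((1:ℝ)/2) := by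
        rw [show dH ξ = rF ξ ^ ((1:ℝ)/4) from rfl,
          ← Real.rpow_natCast (rF ξ ^ ((1:ℝ)/4)) 2, ← Real.rpow_mul (rF_nonneg ξ)]
        norm_num
      have hGv : G ξ ^ 2 = f ξ ^ 2 * (sF ξ * rF ξ ^ (-(1/2) : ℝ)) := by
        rw [hG]
        have e1 : (rF ξ ^ (-(1/4) : ℝ)) ^ 2 = rF ξ ^ (-(1/2) : ℝ) := by
          rw [← Real.rpow_natCast (rF ξ ^ (-(1/4) : ℝ)) 2, ← Real.rpow_mul (rF_nonneg ξ)]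
          norm_num
        calc (|f ξ| * (Real.sqrt (sF ξ) * rF ξ ^ (-(1/4) : ℝ))) ^ 2
            = |f ξ| ^ 2 * (Real.sqrt (sF ξ) ^ 2 * (rF ξ ^ (-(1/4) : ℝ)) ^ 2) := by ring
          _ = f ξ ^ 2 * (sF ξ * rF ξ ^ (-(1/2) : ℝ)) := by
              rw [sq_abs, Real.sq_sqrt (sF_nonneg ξ), e1]
      rw [hzn, hd2, sq_abs, hGv, Real.rpow_neg (rF_nonneg ξ), div_eq_mul_inv]
      ring
  -- put everything together
  have e1 : ∫ ξ : Heis n, zNorm ξ ^ 2 / dH ξ ^ 2 * (|f ξ| ^ 2 / dH ξ) = I :=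
    integral_congr_ae (Filter.Eventually.of_forall hLHS)
  have e2 : ∫ ξ : Heis n, zNorm ξ ^ 2 / dH ξ ^ 2 * |f ξ| ^ 2 = ∫ ξ : Heis n, G ξ ^ 2 :=
    integral_congr_ae (Filter.Eventually.of_forall hGsq)
  have e3 : (fun ξ : Heis n => hNorm (hGrad f ξ) ^ 2) = fun ξ : Heis n => F ξ ^ (2:ℝ) := by
    funext ξ
    rw [hrpow2 (F ξ)]
  have e4 : (fun ξ : Heis n => G ξ ^ 2) = fun ξ : Heis n => G ξ ^ (2:ℝ) := by
    funext ξ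
    rw [hrpow2 (G ξ)]
  rw [e1, e2, e3, e4]
  have hcoef : (2 * (n:ℝ) + 2 - 1) / 2 * I = ((2 * (n:ℝ) + 1) * I) / 2 := by ring
  rw [hcoef]
  have hRHS := hFG
  linarith

end
end

section
/- Let Ω be a bounded open subset of ℍⁿ, let p > 1, and let V : Ω → ℝ^{2n} be a locally integrable horizontal vector field possessing a weak horizontal divergence div_H V ∈ L¹_loc(Ω). Then for every smooth compactly supported function f on Ω, ∫_Ω |∇_H f|^p dξ ≥ ∫_Ω [div_H V − (p − 1) |V|^{p/(p−1)}] |f|^p dξ. -/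
open MeasureTheory Real

noncomputable section

namespace VFhelp

variable {n : ℕ}

lemma hNorm_nonneg (v : (Fin n → ℝ) × (Fin n → ℝ)) : 0 ≤ hNorm v := Real.sqrt_nonneg _

lemma abs_hDot_le (v w : (Fin n → ℝ) × (Fin n → ℝ)) : |hDot v w| ≤ hNorm v * hNorm w := by
  have key : (hDot v w) ^ 2 ≤
      (∑ j, v.1 j ^ 2 + ∑ j, v.2 j ^ 2) * (∑ j, w.1 j ^ 2 + ∑ j, w.2 j ^ 2) := by
    have h := Finset.sum_mul_sq_le_sq_mul_sq (Finset.univ : Finset (Fin n ⊕ Fin n))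
      (Sum.elim v.1 v.2) (Sum.elim w.1 w.2)
    simpa [hDot, Fintype.sum_sum_type] using h
  have h1 : |hDot v w| = Real.sqrt ((hDot v w) ^ 2) := (Real.sqrt_sq_eq_abs _).symm
  rw [h1, hNorm, hNorm, ← Real.sqrt_mul (by positivity)]
  exact Real.sqrt_le_sqrt key

lemma hDot_smul (c : ℝ) (v w : (Fin n → ℝ) × (Fin n → ℝ)) :
    hDot (c • v) w = c * hDot v w := by
  simp [hDot, Finset.mul_sum, mul_add, mul_assoc]

lemma hNorm_le (v : (Fin n → ℝ) × (Fin n → ℝ)) :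
    hNorm v ≤ Real.sqrt (2 * n) * ‖v‖ := by
  rw [hNorm, ← Real.sqrt_sq (norm_nonneg v), ← Real.sqrt_mul (by positivity)]
  apply Real.sqrt_le_sqrt
  have h1 : ∀ j, v.1 j ^ 2 ≤ ‖v‖ ^ 2 := fun j => by
    have : |v.1 j| ≤ ‖v‖ := (norm_le_pi_norm v.1 j).trans (norm_fst_le v)
    nlinarith [abs_nonneg (v.1 j), sq_abs (v.1 j)]
  have h2 : ∀ j, v.2 j ^ 2 ≤ ‖v‖ ^ 2 := fun j => by
    have : |v.2 j| ≤ ‖v‖ := (norm_le_pi_norm v.2 j).trans (norm_snd_le v)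
    nlinarith [abs_nonneg (v.2 j), sq_abs (v.2 j)]
  calc ∑ j, v.1 j ^ 2 + ∑ j, v.2 j ^ 2
      ≤ ∑ _j : Fin n, ‖v‖ ^ 2 + ∑ _j : Fin n, ‖v‖ ^ 2 :=
        add_le_add (Finset.sum_le_sum fun j _ => h1 j) (Finset.sum_le_sum fun j _ => h2 j)
    _ = 2 * n * ‖v‖ ^ 2 := by simp [Finset.sum_const]; ring

lemma young {p a b : ℝ} (hp : 1 < p) (ha : 0 ≤ a) (hb : 0 ≤ b) :
    p * (a * b) ≤ a ^ p + (p - 1) * b ^ (p / (p - 1)) := by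
  have hpq : p.HolderConjugate (p / (p - 1)) := Real.HolderConjugate.conjExponent hp
  have h := Real.young_inequality_of_nonneg ha hb hpq
  have hdiv : p / (p / (p - 1)) = p - 1 := hpq.div_conj_eq_sub_one
  have hthis := mul_le_mul_of_nonneg_left h hpq.nonneg
  calc p * (a * b) ≤ p * (a ^ p / p + b ^ (p / (p - 1)) / (p / (p - 1))) := hthis
    _ = a ^ p + (p / (p / (p - 1))) * b ^ (p / (p - 1)) := by
        field_simp
    _ = a ^ p + (p - 1) * b ^ (p / (p - 1)) := by rw [hdiv]

lemma contDiff_phi {f : Heis n → ℝ} (hf : ContDiff ℝ (⊤ : ℕ∞) f) {ε : ℝ} (hε : 0 < ε) (p : ℝ) :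
    ContDiff ℝ (⊤ : ℕ∞) (fun η : Heis n => (f η ^ 2 + ε ^ 2) ^ (p / 2) - ε ^ p) := by
  refine ContDiff.sub ?_ contDiff_const
  refine contDiff_iff_contDiffAt.mpr fun ξ => ?_
  refine ContDiffAt.rpow_const_of_ne ?_ (by positivity)
  exact (hf.contDiffAt.pow 2).add contDiffAt_const

lemma hGrad_phi {f : Heis n → ℝ} (hf : ContDiff ℝ (⊤ : ℕ∞) f) {ε : ℝ} (hε : 0 < ε) (p : ℝ)
    (ξ : Heis n) :
    hGrad (fun η : Heis n => (f η ^ 2 + ε ^ 2) ^ (p / 2) - ε ^ p) ξ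
      = (p * f ξ * (f ξ ^ 2 + ε ^ 2) ^ (p / 2 - 1)) • hGrad f ξ := by
  have hpos : (0:ℝ) < f ξ ^ 2 + ε ^ 2 := by positivity
  have h0 : HasDerivAt (fun s : ℝ => s ^ 2 + ε ^ 2) (2 * f ξ) (f ξ) := by
    simpa using (hasDerivAt_pow 2 (f ξ)).add_const (ε ^ 2)
  have h1 : HasDerivAt (fun y : ℝ => y ^ (p / 2))
      ((p / 2) * (f ξ ^ 2 + ε ^ 2) ^ (p / 2 - 1)) (f ξ ^ 2 + ε ^ 2) :=
    Real.hasDerivAt_rpow_const (Or.inl hpos.ne')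
  have h2 : HasDerivAt (fun s : ℝ => (s ^ 2 + ε ^ 2) ^ (p / 2))
      (p * f ξ * (f ξ ^ 2 + ε ^ 2) ^ (p / 2 - 1)) (f ξ) := by
    have := h1.comp (f ξ) h0
    exact this.congr_deriv (by ring)
  have hfd : HasFDerivAt f (fderiv ℝ f ξ) ξ :=
    (hf.differentiable (by simp)).differentiableAt.hasFDerivAt
  have H : HasFDerivAt (fun η : Heis n => (f η ^ 2 + ε ^ 2) ^ (p / 2) - ε ^ p)
      ((p * f ξ * (f ξ ^ 2 + ε ^ 2) ^ (p / 2 - 1)) • fderiv ℝ f ξ) ξ :=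
    (h2.comp_hasFDerivAt ξ hfd).sub_const _
  have hF : fderiv ℝ (fun η : Heis n => (f η ^ 2 + ε ^ 2) ^ (p / 2) - ε ^ p) ξ
      = (p * f ξ * (f ξ ^ 2 + ε ^ 2) ^ (p / 2 - 1)) • fderiv ℝ f ξ := H.fderiv
  simp only [hGrad, XH, YH, hF, ContinuousLinearMap.smul_apply, smul_eq_mul,
    Prod.smul_mk, Pi.smul_def]
  refine Prod.ext ?_ ?_ <;> funext j <;> simp <;> ring

lemma support_phi {f : Heis n → ℝ} {ε : ℝ} (hε : 0 < ε) (p : ℝ) :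
    Function.support (fun η : Heis n => (f η ^ 2 + ε ^ 2) ^ (p / 2) - ε ^ p)
      ⊆ Function.support f := by
  intro η hη
  simp only [Function.mem_support] at hη ⊢
  intro hf0
  apply hη
  rw [hf0]
  have h22 : ((0:ℝ) ^ 2 + ε ^ 2) = ε ^ 2 := by ring
  rw [h22, ← Real.rpow_natCast ε 2, ← Real.rpow_mul hε.le]
  norm_num
  rw [show (2:ℝ) * (p / 2) = p by ring, sub_self]

lemma sq_rpow (c : ℝ) (x : ℝ) : (x ^ 2) ^ c = |x| ^ (2 * c) := by
  rw [← sq_abs, ← Real.rpow_natCast |x| 2, ← Real.rpow_mul (abs_nonneg x)]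
  norm_num

lemma abs_mul_sq_rpow {p : ℝ} (hp : 1 < p) (x : ℝ) :
    |x| * (x ^ 2) ^ (p / 2 - 1) = |x| ^ (p - 1) := by
  rcases eq_or_ne x 0 with rfl | hx
  · simp [Real.zero_rpow (show p - 1 ≠ 0 by linarith)]
  · rw [sq_rpow, ← Real.rpow_one_add' (abs_nonneg x) (by intro h; apply hx; nlinarith)]
    ring_nf

lemma abs_mul_eps_rpow_le {p ε : ℝ} (hε : 0 < ε) (x : ℝ) :
    |x| * (x ^ 2 + ε ^ 2) ^ (p / 2 - 1) ≤ (x ^ 2 + ε ^ 2) ^ ((p - 1) / 2) := by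
  have hpos : (0:ℝ) < x ^ 2 + ε ^ 2 := by positivity
  have h1 : |x| ≤ (x ^ 2 + ε ^ 2) ^ ((1:ℝ) / 2) := by
    rw [← Real.sqrt_eq_rpow, ← Real.sqrt_sq_eq_abs]
    exact Real.sqrt_le_sqrt (by nlinarith)
  calc |x| * (x ^ 2 + ε ^ 2) ^ (p / 2 - 1)
      ≤ (x ^ 2 + ε ^ 2) ^ ((1:ℝ) / 2) * (x ^ 2 + ε ^ 2) ^ (p / 2 - 1) :=
        mul_le_mul_of_nonneg_right h1 (Real.rpow_nonneg hpos.le _)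
    _ = (x ^ 2 + ε ^ 2) ^ ((p - 1) / 2) := by
        rw [← Real.rpow_add hpos]; ring_nf

lemma integrableOn_superset {α : Type*} [MeasurableSpace α] {μ : Measure α}
    {g : α → ℝ} {K S : Set α} (hK : MeasurableSet K) (hKS : K ⊆ S)
    (hg : IntegrableOn g K μ) (h0 : ∀ x ∉ K, g x = 0) : IntegrableOn g S μ := by
  have hgeq : K.indicator g = g :=
    Set.indicator_eq_self.mpr (Function.support_subset_iff'.mpr h0)
  rw [← hgeq]
  exact ((integrable_indicator_iff hK).2 hg).integrableOn

end VFhelp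

open VFhelp

/-- Proposition 4.1: integral inequality for vector fields with weak
horizontal divergence in a bounded open domain `Ω ⊆ ℍⁿ`. -/
theorem vector_field_inequality_domain_Heisenberg
    (n : ℕ) (p : ℝ) (hp : 1 < p)
    (Ω : Set (Heis n)) (hΩo : IsOpen Ω) (hΩb : Bornology.IsBounded Ω)
    (V : Heis n → (Fin n → ℝ) × (Fin n → ℝ)) (A : Heis n → ℝ)
    (hV : LocallyIntegrableOn V Ω) (hA : LocallyIntegrableOn A Ω)
    (hweakdiv : ∀ φ : Heis n → ℝ, ContDiff ℝ (⊤ : ℕ∞) φ → HasCompactSupport φ → tsupport φ ⊆ Ω →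
      ∫ ξ in Ω, φ ξ * A ξ = -∫ ξ in Ω, hDot (hGrad φ ξ) (V ξ))
    (f : Heis n → ℝ) (hf : ContDiff ℝ (⊤ : ℕ∞) f) (hfc : HasCompactSupport f)
    (hfs : tsupport f ⊆ Ω) :
    ∫ ξ in Ω, (A ξ - (p - 1) * hNorm (V ξ) ^ (p / (p - 1))) * |f ξ| ^ p ≤
      ∫ ξ in Ω, hNorm (hGrad f ξ) ^ p := by
  classical
  have hp0 : (0:ℝ) < p := lt_trans one_pos hp
  have hp1 : (0:ℝ) < p - 1 := by linarith
  set q : ℝ := p / (p - 1) with hqdef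
  have hq0 : 0 < q := div_pos hp0 hp1
  set K : Set (Heis n) := tsupport f with hKdef
  have hKc : IsCompact K := hfc
  have hKm : MeasurableSet K := (isClosed_tsupport f).measurableSet
  -- bound on f
  obtain ⟨M, hM⟩ := hfc.exists_bound_of_continuous hf.continuous
  have hMf : ∀ ξ, |f ξ| ≤ M := fun ξ => by simpa [Real.norm_eq_abs] using hM ξ
  have hM0 : 0 ≤ M := le_trans (abs_nonneg _) (hMf (0, 0, 0))
  -- continuity of gradient components
  have hfderiv_cont : Continuous (fderiv ℝ f) := hf.continuous_fderiv (by simp)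
  have happly : ∀ v : Heis n, Continuous fun ξ : Heis n => fderiv ℝ f ξ v := fun v =>
    hfderiv_cont.clm_apply continuous_const
  have hXcont : ∀ j, Continuous fun ξ : Heis n => XH j f ξ := fun j => by
    unfold XH
    exact (happly _).add ((continuous_const.mul
      ((continuous_apply j).comp (continuous_snd.fst))).mul (happly _))
  have hYcont : ∀ j, Continuous fun ξ : Heis n => YH j f ξ := fun j => by
    unfold YH
    exact (happly _).sub ((continuous_const.mul
      ((continuous_apply j).comp continuous_fst)).mul (happly _))
  have hGcont : Continuous fun ξ : Heis n => hNorm (hGrad f ξ) := by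
    apply Real.continuous_sqrt.comp
    exact (continuous_finset_sum _ fun j _ => (hXcont j).pow 2).add
      (continuous_finset_sum _ fun j _ => (hYcont j).pow 2)
  have hGrad_zero : ∀ ξ ∉ K, hGrad f ξ = 0 := by
    intro ξ hξ
    have hd : fderiv ℝ f ξ = 0 := by
      by_contra hne
      exact hξ (support_fderiv_subset ℝ (Function.mem_support.mpr hne))
    simp [hGrad, XH, YH, hd, Prod.ext_iff, funext_iff]
  have hGnorm_zero : ∀ ξ ∉ K, hNorm (hGrad f ξ) = 0 := by
    intro ξ hξ
    rw [hGrad_zero ξ hξ]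
    simp [hNorm]
  -- bound on gradient
  have hGcs : HasCompactSupport fun ξ : Heis n => hNorm (hGrad f ξ) := by
    apply HasCompactSupport.intro hKc
    exact hGnorm_zero
  obtain ⟨D, hD'⟩ := hGcs.exists_bound_of_continuous hGcont
  have hD : ∀ ξ, hNorm (hGrad f ξ) ≤ D := fun ξ => by
    have := hD' ξ
    rw [Real.norm_eq_abs, abs_of_nonneg (hNorm_nonneg _)] at this
    exact this
  have hD0 : 0 ≤ D := le_trans (hNorm_nonneg _) (hD (0, 0, 0))
  -- integrability on K
  have hVK : IntegrableOn V K := hV.integrableOn_compact_subset hfs hKc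
  have hAK : IntegrableOn A K := hA.integrableOn_compact_subset hfs hKc
  have hVm : AEStronglyMeasurable V (volume.restrict Ω) := hV.aestronglyMeasurable
  have hAm : AEStronglyMeasurable A (volume.restrict Ω) := hA.aestronglyMeasurable
  -- the function W = ⟨∇_H f, V⟩
  set W : Heis n → ℝ := fun ξ => hDot (hGrad f ξ) (V ξ) with hWdef
  have hV1m : ∀ j : Fin n, AEStronglyMeasurable (fun ξ => (V ξ).1 j) (volume.restrict Ω) :=
    fun j => ((continuous_apply j).comp continuous_fst).comp_aestronglyMeasurable hVm
  have hV2m : ∀ j : Fin n, AEStronglyMeasurable (fun ξ => (V ξ).2 j) (volume.restrict Ω) :=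
    fun j => ((continuous_apply j).comp continuous_snd).comp_aestronglyMeasurable hVm
  have hWm : AEStronglyMeasurable W (volume.restrict Ω) := by
    apply AEStronglyMeasurable.add
    · exact Finset.aestronglyMeasurable_fun_sum _ fun j _ =>
        ((hXcont j).aestronglyMeasurable).mul (hV1m j)
    · exact Finset.aestronglyMeasurable_fun_sum _ fun j _ =>
        ((hYcont j).aestronglyMeasurable).mul (hV2m j)
  have hWbound : ∀ ξ, |W ξ| ≤ (D * Real.sqrt (2 * n)) * ‖V ξ‖ := by
    intro ξ
    calc |W ξ| ≤ hNorm (hGrad f ξ) * hNorm (V ξ) := abs_hDot_le _ _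
      _ ≤ D * (Real.sqrt (2 * n) * ‖V ξ‖) :=
          mul_le_mul (hD ξ) (hNorm_le _) (hNorm_nonneg _) hD0
      _ = (D * Real.sqrt (2 * n)) * ‖V ξ‖ := by ring
  have hWzero : ∀ ξ ∉ K, W ξ = 0 := by
    intro ξ hξ
    simp [hWdef, hGrad_zero ξ hξ, hDot]
  have hWint : IntegrableOn W Ω := by
    apply integrableOn_superset hKm hfs _ hWzero
    apply Integrable.mono ((hVK.norm).const_mul (D * Real.sqrt (2 * n)))
      (hWm.mono_measure (Measure.restrict_mono hfs le_rfl))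
    refine Filter.Eventually.of_forall fun ξ => ?_
    rw [Real.norm_eq_abs, Real.norm_eq_abs]
    exact (hWbound ξ).trans (le_abs_self _)
  -- the approximating sequence
  set ε : ℕ → ℝ := fun k => 1 / (k + 1) with hεdef
  have hεpos : ∀ k, 0 < ε k := fun k => by positivity
  have hεle1 : ∀ k, ε k ≤ 1 := fun k => by
    rw [hεdef]
    rw [div_le_one (by positivity)]
    simp
  have hεlim : Filter.Tendsto ε Filter.atTop (nhds 0) :=
    tendsto_one_div_add_atTop_nhds_zero_nat
  -- identity from weak divergence
  have hsuppphi : ∀ k, tsupport (fun η : Heis n =>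
      (f η ^ 2 + ε k ^ 2) ^ (p / 2) - ε k ^ p) ⊆ K := fun k =>
    closure_minimal ((support_phi (hεpos k) p).trans (subset_tsupport f)) (isClosed_tsupport f)
  have hident : ∀ k, ∫ ξ in Ω, ((f ξ ^ 2 + ε k ^ 2) ^ (p / 2) - ε k ^ p) * A ξ
      = -∫ ξ in Ω, (p * f ξ * (f ξ ^ 2 + ε k ^ 2) ^ (p / 2 - 1)) * W ξ := by
    intro k
    have hcs : HasCompactSupport fun η : Heis n =>
        (f η ^ 2 + ε k ^ 2) ^ (p / 2) - ε k ^ p :=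
      HasCompactSupport.of_support_subset_isCompact hKc
        ((support_phi (hεpos k) p).trans (subset_tsupport f))
    have h1 := hweakdiv _ (contDiff_phi hf (hεpos k) p) hcs ((hsuppphi k).trans hfs)
    rw [h1]
    congr 1
    refine integral_congr_ae (Filter.Eventually.of_forall fun ξ => ?_)
    show hDot (hGrad (fun η : Heis n => (f η ^ 2 + ε k ^ 2) ^ (p / 2) - ε k ^ p) ξ) (V ξ) = _
    rw [hGrad_phi hf (hεpos k) p ξ, hDot_smul]
  -- first dominated convergence: ∫ φ_k A → ∫ |f|^p A
  have hbnd1 : Integrable (K.indicator fun ξ => ((M ^ 2 + 1) ^ (p / 2) + 1) * |A ξ|)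
      (volume.restrict Ω) := by
    apply Integrable.restrict
    rw [integrable_indicator_iff hKm]
    exact (hAK.norm).const_mul _
  have hphiabs : ∀ k ξ, |(f ξ ^ 2 + ε k ^ 2) ^ (p / 2) - ε k ^ p|
      ≤ (M ^ 2 + 1) ^ (p / 2) + 1 := by
    intro k ξ
    have h1 : (f ξ ^ 2 + ε k ^ 2) ^ (p / 2) ≤ (M ^ 2 + 1) ^ (p / 2) := by
      apply Real.rpow_le_rpow (by positivity) _ (by positivity)
      have h1 := pow_le_pow_left₀ (abs_nonneg (f ξ)) (hMf ξ) 2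
      rw [sq_abs] at h1
      have h2 := hεle1 k
      have h3 := (hεpos k).le
      nlinarith
    have h2 : (0:ℝ) ≤ (f ξ ^ 2 + ε k ^ 2) ^ (p / 2) := Real.rpow_nonneg (by positivity) _
    have h3 : ε k ^ p ≤ 1 := Real.rpow_le_one (hεpos k).le (hεle1 k) hp0.le
    have h4 : (0:ℝ) ≤ ε k ^ p := Real.rpow_nonneg (hεpos k).le _
    rw [abs_sub_le_iff]
    constructor <;> nlinarith
  have hDCT1 : Filter.Tendsto
      (fun k => ∫ ξ in Ω, ((f ξ ^ 2 + ε k ^ 2) ^ (p / 2) - ε k ^ p) * A ξ)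
      Filter.atTop (nhds (∫ ξ in Ω, |f ξ| ^ p * A ξ)) := by
    apply tendsto_integral_of_dominated_convergence
      (K.indicator fun ξ => ((M ^ 2 + 1) ^ (p / 2) + 1) * |A ξ|)
    · intro k
      exact ((contDiff_phi hf (hεpos k) p).continuous.aestronglyMeasurable).mul hAm
    · exact hbnd1
    · intro k
      refine Filter.Eventually.of_forall fun ξ => ?_
      by_cases hξ : ξ ∈ K
      · rw [Set.indicator_of_mem hξ, Real.norm_eq_abs, abs_mul]
        exact mul_le_mul_of_nonneg_right (hphiabs k ξ) (abs_nonneg _)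
      · rw [Set.indicator_of_notMem hξ]
        have hf0 : f ξ = 0 := image_eq_zero_of_notMem_tsupport hξ
        have : (f ξ ^ 2 + ε k ^ 2) ^ (p / 2) - ε k ^ p = 0 := by
          rw [hf0]
          have h22 : ((0:ℝ) ^ 2 + ε k ^ 2) = ε k ^ 2 := by ring
          rw [h22, ← Real.rpow_natCast (ε k) 2, ← Real.rpow_mul (hεpos k).le]
          norm_num
          rw [show (2:ℝ) * (p / 2) = p by ring, sub_self]
        rw [this]
        simp
    · refine Filter.Eventually.of_forall fun ξ => ?_
      have t1 : Filter.Tendsto (fun k => f ξ ^ 2 + ε k ^ 2) Filter.atTop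
          (nhds (f ξ ^ 2)) := by
        have := (hεlim.pow 2)
        simpa using tendsto_const_nhds.add this
      have t2 : Filter.Tendsto (fun k => (f ξ ^ 2 + ε k ^ 2) ^ (p / 2)) Filter.atTop
          (nhds ((f ξ ^ 2) ^ (p / 2))) :=
        ((Real.continuousAt_rpow_const _ _ (Or.inr (by positivity))).tendsto.comp t1)
      have t3 : Filter.Tendsto (fun k => ε k ^ p) Filter.atTop (nhds 0) := by
        have := (Real.continuousAt_rpow_const 0 p (Or.inr hp0.le)).tendsto.comp hεlim
        simpa [Function.comp_def, Real.zero_rpow hp0.ne'] using this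
      have t4 := (t2.sub t3).mul_const (A ξ)
      have heq : (f ξ ^ 2) ^ (p / 2) - 0 = |f ξ| ^ p := by
        rw [sq_rpow, show (2:ℝ) * (p / 2) = p by ring, sub_zero]
      rwa [heq] at t4
  -- second dominated convergence
  have hDCT2 : Filter.Tendsto
      (fun k => ∫ ξ in Ω, (p * f ξ * (f ξ ^ 2 + ε k ^ 2) ^ (p / 2 - 1)) * W ξ)
      Filter.atTop (nhds (∫ ξ in Ω, (p * f ξ * (f ξ ^ 2) ^ (p / 2 - 1)) * W ξ)) := by
    apply tendsto_integral_of_dominated_convergence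
      (fun ξ => (p * (M ^ 2 + 1) ^ ((p - 1) / 2)) * |W ξ|)
    · intro k
      have hc : Continuous fun ξ : Heis n => (f ξ ^ 2 + ε k ^ 2) ^ (p / 2 - 1) := by
        apply continuous_iff_continuousAt.mpr fun ξ => ?_
        exact (Real.continuousAt_rpow_const _ _ (Or.inl (by positivity))).comp
          (((hf.continuous.pow 2).add continuous_const).continuousAt)
      exact (((continuous_const.mul hf.continuous).mul hc).aestronglyMeasurable).mul hWm
    · exact (hWint.norm).const_mul _
    · intro k
      refine Filter.Eventually.of_forall fun ξ => ?_
      rw [Real.norm_eq_abs, abs_mul]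
      apply mul_le_mul_of_nonneg_right _ (abs_nonneg _)
      rw [abs_mul, abs_mul, abs_of_nonneg hp0.le,
        abs_of_nonneg (Real.rpow_nonneg (by positivity) _), mul_assoc]
      apply mul_le_mul_of_nonneg_left _ hp0.le
      calc |f ξ| * (f ξ ^ 2 + ε k ^ 2) ^ (p / 2 - 1)
          ≤ (f ξ ^ 2 + ε k ^ 2) ^ ((p - 1) / 2) := abs_mul_eps_rpow_le (hεpos k) (f ξ)
        _ ≤ (M ^ 2 + 1) ^ ((p - 1) / 2) := by
            apply Real.rpow_le_rpow (by positivity) _ (by positivity)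
            have h1 := pow_le_pow_left₀ (abs_nonneg (f ξ)) (hMf ξ) 2
            rw [sq_abs] at h1
            have h2 := hεle1 k
            have h3 := (hεpos k).le
            nlinarith
    · refine Filter.Eventually.of_forall fun ξ => ?_
      rcases eq_or_ne (f ξ) 0 with hf0 | hf0
      · have hzero : ∀ k, (p * f ξ * (f ξ ^ 2 + ε k ^ 2) ^ (p / 2 - 1)) * W ξ
            = (p * f ξ * (f ξ ^ 2) ^ (p / 2 - 1)) * W ξ := by
          intro k
          rw [hf0]
          ring
        rw [show (fun k => (p * f ξ * (f ξ ^ 2 + ε k ^ 2) ^ (p / 2 - 1)) * W ξ)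
          = fun _ => (p * f ξ * (f ξ ^ 2) ^ (p / 2 - 1)) * W ξ from funext hzero]
        exact tendsto_const_nhds
      · have t1 : Filter.Tendsto (fun k => f ξ ^ 2 + ε k ^ 2) Filter.atTop
            (nhds (f ξ ^ 2)) := by
          have := (hεlim.pow 2)
          simpa using tendsto_const_nhds.add this
        have t2 : Filter.Tendsto (fun k => (f ξ ^ 2 + ε k ^ 2) ^ (p / 2 - 1)) Filter.atTop
            (nhds ((f ξ ^ 2) ^ (p / 2 - 1))) :=
          (Real.continuousAt_rpow_const _ _ (Or.inl (pow_ne_zero 2 hf0))).tendsto.comp t1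
        exact ((t2.const_mul (p * f ξ)).mul_const (W ξ))
  -- the key identity
  have hkey : ∫ ξ in Ω, |f ξ| ^ p * A ξ
      = -∫ ξ in Ω, (p * f ξ * (f ξ ^ 2) ^ (p / 2 - 1)) * W ξ := by
    have h2 : Filter.Tendsto
        (fun k => ∫ ξ in Ω, ((f ξ ^ 2 + ε k ^ 2) ^ (p / 2) - ε k ^ p) * A ξ)
        Filter.atTop (nhds (-∫ ξ in Ω, (p * f ξ * (f ξ ^ 2) ^ (p / 2 - 1)) * W ξ)) := by
      simp only [hident]
      exact hDCT2.neg
    exact tendsto_nhds_unique hDCT1 h2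
  -- integrability facts
  have hfppos : ∀ ξ, ξ ∉ K → |f ξ| ^ p = 0 := by
    intro ξ hξ
    rw [image_eq_zero_of_notMem_tsupport hξ]
    simp [Real.zero_rpow hp0.ne']
  have hfpcont : Continuous fun ξ : Heis n => |f ξ| ^ p := by
    apply continuous_iff_continuousAt.mpr fun ξ => ?_
    exact (Real.continuousAt_rpow_const _ _ (Or.inr hp0.le)).comp
      (hf.continuous.abs.continuousAt)
  have hAfp : Integrable (fun ξ => |f ξ| ^ p * A ξ) (volume.restrict Ω) := by
    apply integrableOn_superset hKm hfs
    · apply Integrable.mono ((hAK.norm).const_mul (M ^ p))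
        ((hfpcont.aestronglyMeasurable).mul
          (hAm.mono_measure (Measure.restrict_mono hfs le_rfl)))
      refine Filter.Eventually.of_forall fun ξ => ?_
      calc ‖|f ξ| ^ p * A ξ‖ = |f ξ| ^ p * |A ξ| := by
            rw [Real.norm_eq_abs, abs_mul, abs_of_nonneg (Real.rpow_nonneg (abs_nonneg _) _)]
        _ ≤ M ^ p * |A ξ| := mul_le_mul_of_nonneg_right
            (Real.rpow_le_rpow (abs_nonneg _) (hMf ξ) hp0.le) (abs_nonneg _)
        _ ≤ ‖M ^ p * |A ξ|‖ := le_abs_self _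
    · intro ξ hξ
      rw [hfppos ξ hξ, zero_mul]
  have hh0m : AEStronglyMeasurable (fun ξ => (p * f ξ * (f ξ ^ 2) ^ (p / 2 - 1)) * W ξ)
      (volume.restrict Ω) := by
    have hm : Measurable fun ξ : Heis n => (f ξ ^ 2) ^ (p / 2 - 1) :=
      ((hf.continuous.pow 2).measurable).pow measurable_const
    exact (((continuous_const.mul hf.continuous).measurable.mul hm).aestronglyMeasurable).mul hWm
  have hh0int : Integrable (fun ξ => (p * f ξ * (f ξ ^ 2) ^ (p / 2 - 1)) * W ξ)
      (volume.restrict Ω) := by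
    apply Integrable.mono ((hWint.norm).const_mul (p * M ^ (p - 1))) hh0m
    refine Filter.Eventually.of_forall fun ξ => ?_
    have habs : |p * f ξ * (f ξ ^ 2) ^ (p / 2 - 1)| = p * (|f ξ| * (f ξ ^ 2) ^ (p / 2 - 1)) := by
      rw [abs_mul, abs_mul, abs_of_nonneg hp0.le,
        abs_of_nonneg (Real.rpow_nonneg (sq_nonneg _) _), mul_assoc]
    calc ‖p * f ξ * (f ξ ^ 2) ^ (p / 2 - 1) * W ξ‖
        = |p * f ξ * (f ξ ^ 2) ^ (p / 2 - 1)| * |W ξ| := by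
          rw [Real.norm_eq_abs, abs_mul]
      _ = p * |f ξ| ^ (p - 1) * |W ξ| := by rw [habs, abs_mul_sq_rpow hp, mul_assoc]
      _ ≤ p * M ^ (p - 1) * |W ξ| := by
          have h1 := Real.rpow_le_rpow (abs_nonneg (f ξ)) (hMf ξ) (by linarith : (0:ℝ) ≤ p - 1)
          have hw := abs_nonneg (W ξ)
          calc p * |f ξ| ^ (p - 1) * |W ξ| = p * (|f ξ| ^ (p - 1) * |W ξ|) := by ring
            _ ≤ p * (M ^ (p - 1) * |W ξ|) :=
                mul_le_mul_of_nonneg_left (mul_le_mul_of_nonneg_right h1 hw) hp0.le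
            _ = p * M ^ (p - 1) * |W ξ| := by ring
      _ ≤ ‖p * M ^ (p - 1) * |W ξ|‖ := le_abs_self _
  -- |∇f|^p integrable
  have hGp_cont : Continuous fun ξ : Heis n => hNorm (hGrad f ξ) ^ p := by
    apply continuous_iff_continuousAt.mpr fun ξ => ?_
    exact (Real.continuousAt_rpow_const _ _ (Or.inr hp0.le)).comp hGcont.continuousAt
  have hGp_int : Integrable (fun ξ => hNorm (hGrad f ξ) ^ p) (volume.restrict Ω) := by
    apply Integrable.restrict
    apply hGp_cont.integrable_of_hasCompactSupport
    apply HasCompactSupport.of_support_subset_isCompact hKc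
    intro ξ hξ
    simp only [Function.mem_support] at hξ
    by_contra hn
    apply hξ
    rw [hGnorm_zero ξ hn, Real.zero_rpow hp0.ne']
  -- measurability of X = |V|^q |f|^p
  have hNVq_m : AEStronglyMeasurable (fun ξ => hNorm (V ξ) ^ q) (volume.restrict Ω) := by
    have hc : Continuous fun x : ℝ => x ^ q :=
      continuous_iff_continuousAt.mpr fun x =>
        Real.continuousAt_rpow_const x q (Or.inr hq0.le)
    have hNc : Continuous fun v : (Fin n → ℝ) × (Fin n → ℝ) => hNorm v := by
      apply Real.continuous_sqrt.comp
      exact (continuous_finset_sum _ fun j _ => ((continuous_apply j).comp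
        continuous_fst).pow 2).add
        (continuous_finset_sum _ fun j _ => ((continuous_apply j).comp
        continuous_snd).pow 2)
    exact (hc.comp hNc).comp_aestronglyMeasurable hVm
  have hXm : AEStronglyMeasurable (fun ξ => hNorm (V ξ) ^ q * |f ξ| ^ p)
      (volume.restrict Ω) := hNVq_m.mul hfpcont.aestronglyMeasurable
  -- case split on integrability of |V|^q |f|^p
  by_cases hcase : Integrable (fun ξ => hNorm (V ξ) ^ q * |f ξ| ^ p) (volume.restrict Ω)
  · -- main case
    -- pointwise inequality
    have hpt : ∀ ξ, -((p * f ξ * (f ξ ^ 2) ^ (p / 2 - 1)) * W ξ)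
        ≤ hNorm (hGrad f ξ) ^ p + (p - 1) * (hNorm (V ξ) ^ q * |f ξ| ^ p) := by
      intro ξ
      have hb0 : (0:ℝ) ≤ |f ξ| ^ (p - 1) := Real.rpow_nonneg (abs_nonneg _) _
      have h1 : -((p * f ξ * (f ξ ^ 2) ^ (p / 2 - 1)) * W ξ)
          ≤ p * (|f ξ| ^ (p - 1) * |W ξ|) := by
        calc -((p * f ξ * (f ξ ^ 2) ^ (p / 2 - 1)) * W ξ)
            ≤ |(p * f ξ * (f ξ ^ 2) ^ (p / 2 - 1)) * W ξ| := neg_le_abs _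
          _ = p * (|f ξ| * (f ξ ^ 2) ^ (p / 2 - 1) * |W ξ|) := by
              rw [abs_mul, abs_mul, abs_mul, abs_of_nonneg hp0.le,
                abs_of_nonneg (Real.rpow_nonneg (sq_nonneg _) _)]
              ring
          _ = p * (|f ξ| ^ (p - 1) * |W ξ|) := by rw [abs_mul_sq_rpow hp]
      have h2 : |W ξ| ≤ hNorm (hGrad f ξ) * hNorm (V ξ) := abs_hDot_le _ _
      have h3 : p * (|f ξ| ^ (p - 1) * |W ξ|)
          ≤ p * (hNorm (hGrad f ξ) * (|f ξ| ^ (p - 1) * hNorm (V ξ))) := by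
        apply mul_le_mul_of_nonneg_left _ hp0.le
        calc |f ξ| ^ (p - 1) * |W ξ|
            ≤ |f ξ| ^ (p - 1) * (hNorm (hGrad f ξ) * hNorm (V ξ)) :=
              mul_le_mul_of_nonneg_left h2 hb0
          _ = hNorm (hGrad f ξ) * (|f ξ| ^ (p - 1) * hNorm (V ξ)) := by ring
      have h4 := young hp (hNorm_nonneg (hGrad f ξ))
        (mul_nonneg hb0 (hNorm_nonneg (V ξ)))
      have h5 : (|f ξ| ^ (p - 1) * hNorm (V ξ)) ^ (p / (p - 1))
          = |f ξ| ^ p * hNorm (V ξ) ^ (p / (p - 1)) := by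
        rw [Real.mul_rpow hb0 (hNorm_nonneg _), ← Real.rpow_mul (abs_nonneg (f ξ)),
          show (p - 1) * (p / (p - 1)) = p by field_simp]
      rw [h5] at h4
      rw [← hqdef] at h4
      calc -((p * f ξ * (f ξ ^ 2) ^ (p / 2 - 1)) * W ξ)
          ≤ p * (|f ξ| ^ (p - 1) * |W ξ|) := h1
        _ ≤ p * (hNorm (hGrad f ξ) * (|f ξ| ^ (p - 1) * hNorm (V ξ))) := h3
        _ ≤ hNorm (hGrad f ξ) ^ p + (p - 1) * (|f ξ| ^ p * hNorm (V ξ) ^ q) := h4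
        _ = hNorm (hGrad f ξ) ^ p + (p - 1) * (hNorm (V ξ) ^ q * |f ξ| ^ p) := by ring
    have hineq : ∫ ξ in Ω, -((p * f ξ * (f ξ ^ 2) ^ (p / 2 - 1)) * W ξ)
        ≤ ∫ ξ in Ω, (hNorm (hGrad f ξ) ^ p
          + (p - 1) * (hNorm (V ξ) ^ q * |f ξ| ^ p)) :=
      integral_mono hh0int.neg (hGp_int.add (hcase.const_mul _))
        (fun ξ => hpt ξ)
    rw [integral_neg] at hineq
    rw [integral_add hGp_int (hcase.const_mul _), integral_const_mul] at hineq
    have hsplit : ∫ ξ in Ω, (A ξ - (p - 1) * hNorm (V ξ) ^ q) * |f ξ| ^ p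
        = (∫ ξ in Ω, |f ξ| ^ p * A ξ)
          - (p - 1) * ∫ ξ in Ω, hNorm (V ξ) ^ q * |f ξ| ^ p := by
      have heq : (fun ξ => (A ξ - (p - 1) * hNorm (V ξ) ^ q) * |f ξ| ^ p)
          = fun ξ => |f ξ| ^ p * A ξ
            - (p - 1) * (hNorm (V ξ) ^ q * |f ξ| ^ p) := by
        funext ξ
        ring
      rw [heq, integral_sub hAfp (hcase.const_mul _), integral_const_mul]
    rw [hsplit, hkey]
    linarith
  · -- degenerate case: the left-hand side integrand is not integrable
    have hnint : ¬ Integrable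
        (fun ξ => (A ξ - (p - 1) * hNorm (V ξ) ^ q) * |f ξ| ^ p)
        (volume.restrict Ω) := by
      intro hI
      apply hcase
      have heq : (fun ξ => hNorm (V ξ) ^ q * |f ξ| ^ p)
          = fun ξ => (p - 1)⁻¹ * ((|f ξ| ^ p * A ξ)
            - (A ξ - (p - 1) * hNorm (V ξ) ^ q) * |f ξ| ^ p) := by
        funext ξ
        field_simp
        ring
      rw [heq]
      exact (hAfp.sub hI).const_mul _
    rw [integral_undef hnint]
    exact setIntegral_nonneg hΩo.measurableSet fun ξ _ =>
      Real.rpow_nonneg (hNorm_nonneg _) _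
end
end

section
/- Let p > 1 and let V : ℍⁿ → ℝ^{2n} be a locally integrable horizontal vector field possessing a weak horizontal divergence div_H V ∈ L¹_loc(ℍⁿ). Then for every smooth compactly supported function f on ℍⁿ, ∫_{ℍⁿ} |∇_H f|^p dξ ≥ ∫_{ℍⁿ} [div_H V − (p − 1) |V|^{p/(p−1)}] |f|^p dξ. -/
open MeasureTheory Real

noncomputable section

section Auxiliary

open Filter Topology Set

lemma hNorm_nonneg {n : ℕ} (v : (Fin n → ℝ) × (Fin n → ℝ)) : 0 ≤ hNorm v := Real.sqrt_nonneg _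

lemma abs_hDot_le {n : ℕ} (v w : (Fin n → ℝ) × (Fin n → ℝ)) : |hDot v w| ≤ hNorm v * hNorm w := by
  let e : ((Fin n → ℝ) × (Fin n → ℝ)) → EuclideanSpace ℝ (Fin n ⊕ Fin n) :=
    fun v => (WithLp.equiv 2 _).symm (Sum.elim v.1 v.2)
  have hdot : ∀ v w : (Fin n → ℝ) × (Fin n → ℝ), hDot v w = inner (𝕜 := ℝ) (e v) (e w) := by
    intro v w
    simp [hDot, e, PiLp.inner_apply, RCLike.inner_apply, starRingEnd_apply, Fintype.sum_sum_type]
    exact congrArg₂ (· + ·) (Finset.sum_congr rfl fun _ _ => mul_comm _ _)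
      (Finset.sum_congr rfl fun _ _ => mul_comm _ _)
  have hnorm : ∀ v : (Fin n → ℝ) × (Fin n → ℝ), hNorm v = ‖e v‖ := by
    intro v
    rw [EuclideanSpace.norm_eq, hNorm]
    congr 1
    simp [e, Fintype.sum_sum_type, sq_abs]
  rw [hdot, hnorm, hnorm]
  exact abs_real_inner_le_norm _ _

lemma hNorm_le_norm {n : ℕ} (v : (Fin n → ℝ) × (Fin n → ℝ)) :
    hNorm v ≤ Real.sqrt (2 * n) * ‖v‖ := by
  have h1 : ∀ j, v.1 j ^ 2 ≤ ‖v‖ ^ 2 := by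
    intro j
    have : |v.1 j| ≤ ‖v‖ := le_trans (norm_le_pi_norm v.1 j) (norm_fst_le v)
    nlinarith [abs_nonneg (v.1 j), sq_abs (v.1 j)]
  have h2 : ∀ j, v.2 j ^ 2 ≤ ‖v‖ ^ 2 := by
    intro j
    have : |v.2 j| ≤ ‖v‖ := le_trans (norm_le_pi_norm v.2 j) (norm_snd_le v)
    nlinarith [abs_nonneg (v.2 j), sq_abs (v.2 j)]
  have hsum : ∑ j, v.1 j ^ 2 + ∑ j, v.2 j ^ 2 ≤ (2 * n) * ‖v‖ ^ 2 := by
    calc ∑ j, v.1 j ^ 2 + ∑ j, v.2 j ^ 2 ≤ ∑ _j : Fin n, ‖v‖ ^ 2 + ∑ _j : Fin n, ‖v‖ ^ 2 :=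
          add_le_add (Finset.sum_le_sum fun j _ => h1 j) (Finset.sum_le_sum fun j _ => h2 j)
    _ = (2 * n) * ‖v‖ ^ 2 := by simp [Finset.sum_const]; ring
  calc hNorm v ≤ Real.sqrt ((2 * n) * ‖v‖ ^ 2) := Real.sqrt_le_sqrt hsum
  _ = Real.sqrt (2 * n) * ‖v‖ := by
      rw [Real.sqrt_mul (by positivity), Real.sqrt_sq (norm_nonneg v)]

lemma hDot_zero_left {n : ℕ} (w : (Fin n → ℝ) × (Fin n → ℝ)) : hDot 0 w = 0 := by
  simp [hDot]

lemma continuous_hNorm {n : ℕ} : Continuous fun v : (Fin n → ℝ) × (Fin n → ℝ) => hNorm v := by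
  unfold hNorm
  apply Real.continuous_sqrt.comp
  exact (continuous_finset_sum _ fun j _ => ((continuous_apply j).comp continuous_fst).pow 2).add
    (continuous_finset_sum _ fun j _ => ((continuous_apply j).comp continuous_snd).pow 2)

lemma young_aux {p : ℝ} (hp : 1 < p) {a b : ℝ} (ha : 0 ≤ a) (hb : 0 ≤ b) :
    p * (a * b) ≤ a ^ p + (p - 1) * b ^ (p / (p - 1)) := by
  have hpq : p.HolderConjugate (p / (p - 1)) := Real.HolderConjugate.conjExponent hp
  have h := Real.young_inequality_of_nonneg ha hb hpq
  have hp0 : (0:ℝ) < p := by linarith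
  have hp1 : p - 1 ≠ 0 := ne_of_gt (by linarith)
  have h2 : p * (a * b) ≤ p * (a ^ p / p + b ^ (p / (p - 1)) / (p / (p - 1))) :=
    mul_le_mul_of_nonneg_left h hp0.le
  refine h2.trans_eq ?_
  field_simp

lemma hDot_hGrad_comp {n : ℕ} {g g' : ℝ → ℝ} (hg : ∀ s, HasDerivAt g (g' s) s)
    {f : Heis n → ℝ} (hf : Differentiable ℝ f) (ξ : Heis n) (w : (Fin n → ℝ) × (Fin n → ℝ)) :
    hDot (hGrad (fun η => g (f η)) ξ) w = g' (f ξ) * hDot (hGrad f ξ) w := by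
  have hF : fderiv ℝ (fun η => g (f η)) ξ = g' (f ξ) • fderiv ℝ f ξ :=
    ((hg (f ξ)).comp_hasFDerivAt ξ (hf ξ).hasFDerivAt).fderiv
  simp only [hDot, hGrad, XH, YH, hF, ContinuousLinearMap.smul_apply, smul_eq_mul]
  rw [mul_add, Finset.mul_sum, Finset.mul_sum]
  exact congrArg₂ (· + ·) (Finset.sum_congr rfl fun j _ => by ring)
    (Finset.sum_congr rfl fun j _ => by ring)

lemma g_hasDeriv {p : ℝ} (ε : ℝ) (hε : 0 < ε) (s : ℝ) :
    HasDerivAt (fun s : ℝ => (s ^ 2 + ε ^ 2) ^ (p / 2) - (ε ^ 2) ^ (p / 2))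
      (p * s * (s ^ 2 + ε ^ 2) ^ ((p - 2) / 2)) s := by
  have h1 : HasDerivAt (fun s : ℝ => s ^ 2 + ε ^ 2) (2 * s) s := by
    simpa using (hasDerivAt_pow 2 s).add_const (ε ^ 2)
  have hpos : s ^ 2 + ε ^ 2 ≠ 0 := by positivity
  have h2 := Real.hasDerivAt_rpow_const (x := s ^ 2 + ε ^ 2) (p := p / 2) (Or.inl hpos)
  have h3 := (h2.comp s h1).sub_const ((ε ^ 2) ^ (p / 2))
  refine h3.congr_deriv ?_
  rw [show p / 2 - 1 = (p - 2) / 2 by ring]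
  ring

lemma g_contDiff {p : ℝ} (ε : ℝ) (hε : 0 < ε) :
    ContDiff ℝ (⊤ : ℕ∞) (fun s : ℝ => (s ^ 2 + ε ^ 2) ^ (p / 2) - (ε ^ 2) ^ (p / 2)) := by
  apply ContDiff.sub _ contDiff_const
  rw [contDiff_iff_contDiffAt]
  intro s
  have hbase : ContDiffAt ℝ (⊤ : ℕ∞) (fun s : ℝ => s ^ 2 + ε ^ 2) s :=
    ((contDiff_id.pow 2).add contDiff_const).contDiffAt
  exact (Real.contDiffAt_rpow_const_of_ne (by positivity)).comp s hbase

lemma sq_rpow (s q : ℝ) : (s ^ 2) ^ (q / 2) = |s| ^ q := by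
  rw [← sq_abs, ← Real.rpow_natCast |s| 2, ← Real.rpow_mul (abs_nonneg s)]
  norm_num
  rw [show (2:ℝ) * (q / 2) = q by ring]

lemma abs_mul_sq_rpow {p : ℝ} (hp : 1 < p) (s : ℝ) :
    |s| * (s ^ 2) ^ ((p - 2) / 2) = (s ^ 2) ^ ((p - 1) / 2) := by
  rcases eq_or_ne s 0 with rfl | hs
  · rw [abs_zero, zero_mul]
    norm_num
    rw [Real.zero_rpow (ne_of_gt (show (0:ℝ) < (p - 1) / 2 by linarith))]
  · have hs2 : (0:ℝ) < s ^ 2 := by positivity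
    have h1 : |s| = (s ^ 2) ^ ((1:ℝ) / 2) := by
      rw [← Real.sqrt_eq_rpow, Real.sqrt_sq_eq_abs]
    rw [h1, ← Real.rpow_add hs2]
    ring_nf

lemma key_bound {p : ℝ} (hp : 1 < p) {ε : ℝ} (hε : 0 < ε) (hε1 : ε ≤ 1) (s : ℝ) :
    |s| * (s ^ 2 + ε ^ 2) ^ ((p - 2) / 2) ≤ (s ^ 2 + 1) ^ (p / 2) := by
  have hb1 : (0:ℝ) ≤ s ^ 2 + ε ^ 2 := by positivity
  have hb2 : (1:ℝ) ≤ s ^ 2 + 1 := by nlinarith [sq_nonneg s]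
  have habs : |s| ≤ (s ^ 2 + 1) ^ ((1:ℝ) / 2) := by
    rw [← Real.sqrt_eq_rpow, ← Real.sqrt_sq_eq_abs]
    exact Real.sqrt_le_sqrt (by nlinarith)
  have hlast : (s ^ 2 + 1) ^ ((p - 1) / 2) ≤ (s ^ 2 + 1) ^ (p / 2) :=
    Real.rpow_le_rpow_of_exponent_le hb2 (by linarith)
  rcases le_or_gt 2 p with h2 | h2
  · have h1 : (s ^ 2 + ε ^ 2) ^ ((p - 2) / 2) ≤ (s ^ 2 + 1) ^ ((p - 2) / 2) :=
      Real.rpow_le_rpow hb1 (by nlinarith) (by linarith)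
    calc |s| * (s ^ 2 + ε ^ 2) ^ ((p - 2) / 2)
        ≤ (s ^ 2 + 1) ^ ((1:ℝ) / 2) * (s ^ 2 + 1) ^ ((p - 2) / 2) :=
          mul_le_mul habs h1 (Real.rpow_nonneg hb1 _) (Real.rpow_nonneg (by positivity) _)
    _ = (s ^ 2 + 1) ^ ((p - 1) / 2) := by
          rw [← Real.rpow_add (by positivity)]; ring_nf
    _ ≤ (s ^ 2 + 1) ^ (p / 2) := hlast
  · rcases eq_or_ne s 0 with rfl | hs
    · simpa using Real.rpow_nonneg (by positivity : (0:ℝ) ≤ (0:ℝ) ^ 2 + 1) (p / 2)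
    · have hs2 : (0:ℝ) < s ^ 2 := by positivity
      have h1 : (s ^ 2 + ε ^ 2) ^ ((p - 2) / 2) ≤ (s ^ 2) ^ ((p - 2) / 2) :=
        Real.rpow_le_rpow_of_nonpos hs2 (by nlinarith) (by linarith)
      calc |s| * (s ^ 2 + ε ^ 2) ^ ((p - 2) / 2) ≤ |s| * (s ^ 2) ^ ((p - 2) / 2) :=
            mul_le_mul_of_nonneg_left h1 (abs_nonneg s)
      _ = (s ^ 2) ^ ((p - 1) / 2) := abs_mul_sq_rpow hp s
      _ ≤ (s ^ 2 + 1) ^ ((p - 1) / 2) :=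
            Real.rpow_le_rpow (le_of_lt hs2) (by linarith) (by linarith)
      _ ≤ (s ^ 2 + 1) ^ (p / 2) := hlast

lemma m_continuous {p : ℝ} (hp : 1 < p) :
    Continuous (fun s : ℝ => s * (s ^ 2) ^ ((p - 2) / 2)) := by
  rw [continuous_iff_continuousAt]
  intro s
  rcases eq_or_ne s 0 with rfl | hs
  · have h0 : (0:ℝ) * ((0:ℝ) ^ 2) ^ ((p - 2) / 2) = 0 := by simp
    rw [ContinuousAt, h0]
    refine squeeze_zero_norm (a := fun s : ℝ => |s| ^ (p - 1)) ?_ ?_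
    · intro t
      calc ‖t * (t ^ 2) ^ ((p - 2) / 2)‖ = |t| * (t ^ 2) ^ ((p - 2) / 2) := by
            rw [Real.norm_eq_abs, abs_mul, abs_of_nonneg (Real.rpow_nonneg (sq_nonneg t) _)]
      _ = (t ^ 2) ^ ((p - 1) / 2) := abs_mul_sq_rpow hp t
      _ ≤ |t| ^ (p - 1) := le_of_eq (sq_rpow t (p - 1))
    · have : Tendsto (fun s : ℝ => |s| ^ (p - 1)) (nhds 0) (nhds (|(0:ℝ)| ^ (p - 1))) :=
        ((Real.continuous_rpow_const (by linarith)).comp continuous_abs).tendsto 0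
      simpa [Real.zero_rpow (ne_of_gt (show (0:ℝ) < p - 1 by linarith))] using this
  · have hs2 : s ^ 2 ≠ 0 := pow_ne_zero 2 hs
    have c1 : ContinuousAt (fun t : ℝ => t ^ 2) s := continuousAt_pow s 2
    have c2 : ContinuousAt (fun x : ℝ => x ^ ((p - 2) / 2)) (s ^ 2) :=
      Real.continuousAt_rpow_const _ _ (Or.inl hs2)
    have c3 : ContinuousAt ((fun x : ℝ => x ^ ((p - 2) / 2)) ∘ (fun t : ℝ => t ^ 2)) s :=
      ContinuousAt.comp (x := s) (f := fun t : ℝ => t ^ 2) c2 c1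
    exact continuousAt_id.mul c3

lemma cont_eps {p ε : ℝ} (hε : 0 < ε) {X : Type*} [TopologicalSpace X] {f : X → ℝ}
    (hf : Continuous f) : Continuous fun x => (f x ^ 2 + ε ^ 2) ^ ((p - 2) / 2) := by
  rw [continuous_iff_continuousAt]
  intro x
  have c1 : ContinuousAt (fun x => f x ^ 2 + ε ^ 2) x := ((hf.pow 2).add continuous_const).continuousAt
  have c2 : ContinuousAt (fun y : ℝ => y ^ ((p - 2) / 2)) (f x ^ 2 + ε ^ 2) :=
    Real.continuousAt_rpow_const _ _ (Or.inl (by positivity))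
  exact ContinuousAt.comp (x := x) (f := fun x => f x ^ 2 + ε ^ 2) c2 c1

end Auxiliary

/-- Proposition 4.2: integral inequality for vector fields with weak
horizontal divergence on all of `ℍⁿ`. -/
theorem vector_field_inequality_Heisenberg
    (n : ℕ) (p : ℝ) (hp : 1 < p)
    (V : Heis n → (Fin n → ℝ) × (Fin n → ℝ)) (A : Heis n → ℝ)
    (hV : LocallyIntegrable V) (hA : LocallyIntegrable A)
    (hweakdiv : ∀ φ : Heis n → ℝ, ContDiff ℝ (⊤ : ℕ∞) φ → HasCompactSupport φ →
      ∫ ξ : Heis n, φ ξ * A ξ = -∫ ξ : Heis n, hDot (hGrad φ ξ) (V ξ))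
    (f : Heis n → ℝ) (hf : ContDiff ℝ (⊤ : ℕ∞) f) (hfc : HasCompactSupport f) :
    ∫ ξ : Heis n, (A ξ - (p - 1) * hNorm (V ξ) ^ (p / (p - 1))) * |f ξ| ^ p ≤
      ∫ ξ : Heis n, hNorm (hGrad f ξ) ^ p := by
  classical
  open Filter Topology Set in
  have hp0 : (0:ℝ) < p := by linarith
  have hp1 : p - 1 ≠ 0 := ne_of_gt (by linarith)
  by_cases hGint : Integrable
      (fun ξ : Heis n => (A ξ - (p - 1) * hNorm (V ξ) ^ (p / (p - 1))) * |f ξ| ^ p) volume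
  swap
  · rw [integral_undef hGint]
    exact integral_nonneg fun ξ => Real.rpow_nonneg (hNorm_nonneg _) p
  -- Basic notation and facts
  set K : Set (Heis n) := tsupport f with hKdef
  have hK : IsCompact K := hfc
  have hKm : MeasurableSet K := (isClosed_tsupport f).measurableSet
  have hfd : Differentiable ℝ f := hf.differentiable (by simp)
  have hfcont : Continuous f := hf.continuous
  have hf0 : ∀ ξ ∉ K, f ξ = 0 := fun ξ hξ => image_eq_zero_of_notMem_tsupport hξ
  -- continuity of the gradient pieces
  have hfderiv_cont : Continuous (fderiv ℝ f) := hf.continuous_fderiv (by simp)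
  have hXc : ∀ j : Fin n, Continuous fun ξ => XH j f ξ := by
    intro j
    unfold XH
    exact (hfderiv_cont.clm_apply continuous_const).add
      ((continuous_const.mul ((continuous_apply j).comp (continuous_fst.comp continuous_snd))).mul
        (hfderiv_cont.clm_apply continuous_const))
  have hYc : ∀ j : Fin n, Continuous fun ξ => YH j f ξ := by
    intro j
    unfold YH
    exact (hfderiv_cont.clm_apply continuous_const).sub
      ((continuous_const.mul ((continuous_apply j).comp continuous_fst)).mul
        (hfderiv_cont.clm_apply continuous_const))
  have hgradc : Continuous fun ξ => hGrad f ξ := by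
    unfold hGrad
    exact (continuous_pi hXc).prodMk (continuous_pi hYc)
  have hnormc : Continuous fun ξ => hNorm (hGrad f ξ) := continuous_hNorm.comp hgradc
  -- vanishing of the gradient off K
  have hgrad0 : ∀ ξ ∉ K, hGrad f ξ = 0 := by
    intro ξ hξ
    have hfd0 : fderiv ℝ f ξ = 0 := by
      by_contra h
      exact hξ (support_fderiv_subset ℝ (Function.mem_support.mpr h))
    simp [hGrad, XH, YH, hfd0, Prod.ext_iff, funext_iff]
  have hnorm0 : ∀ ξ ∉ K, hNorm (hGrad f ξ) = 0 := by
    intro ξ hξ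
    rw [hgrad0 ξ hξ]
    simp [hNorm]
  -- bounds
  obtain ⟨Mf, hMf⟩ : ∃ M : ℝ, ∀ ξ, |f ξ| ≤ M := by
    obtain ⟨C, hC⟩ := hK.exists_bound_of_continuousOn hfcont.continuousOn
    refine ⟨max C 0, fun ξ => ?_⟩
    by_cases hξ : ξ ∈ K
    · exact le_max_of_le_left (by simpa using hC ξ hξ)
    · simp [hf0 ξ hξ]
  obtain ⟨Mg, hMg⟩ : ∃ M : ℝ, ∀ ξ, hNorm (hGrad f ξ) ≤ M := by
    obtain ⟨C, hC⟩ := hK.exists_bound_of_continuousOn hnormc.continuousOn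
    refine ⟨max C 0, fun ξ => ?_⟩
    by_cases hξ : ξ ∈ K
    · refine le_max_of_le_left ?_
      have := hC ξ hξ
      rwa [Real.norm_eq_abs, abs_of_nonneg (hNorm_nonneg _)] at this
    · simp [hnorm0 ξ hξ]
  -- integrability facts
  have hF1 : Integrable (fun ξ : Heis n => hNorm (hGrad f ξ) ^ p) := by
    apply Continuous.integrable_of_hasCompactSupport
    · exact (Real.continuous_rpow_const hp0.le).comp hnormc
    · apply HasCompactSupport.intro hK
      intro ξ hξ
      simp [hnorm0 ξ hξ, Real.zero_rpow (ne_of_gt hp0)]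
  have habsp_cont : Continuous fun ξ : Heis n => |f ξ| ^ p :=
    (Real.continuous_rpow_const hp0.le).comp hfcont.abs
  have habsp_supp : HasCompactSupport fun ξ : Heis n => |f ξ| ^ p := by
    apply HasCompactSupport.intro hK
    intro ξ hξ
    simp [hf0 ξ hξ, Real.zero_rpow (ne_of_gt hp0)]
  have hF2 : Integrable (fun ξ : Heis n => |f ξ| ^ p * A ξ) := by
    simpa [smul_eq_mul] using
      hA.integrable_smul_left_of_hasCompactSupport habsp_cont habsp_supp
  have hF3 : Integrable (fun ξ : Heis n => hNorm (V ξ) ^ (p / (p - 1)) * |f ξ| ^ p) := by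
    have h := (hF2.sub hGint).mul_const (p - 1)⁻¹
    have heq : (fun ξ : Heis n =>
        (|f ξ| ^ p * A ξ - (A ξ - (p - 1) * hNorm (V ξ) ^ (p / (p - 1))) * |f ξ| ^ p) * (p - 1)⁻¹)
        = fun ξ => hNorm (V ξ) ^ (p / (p - 1)) * |f ξ| ^ p := by
      funext ξ
      field_simp
      ring
    exact h.congr (Eventually.of_forall fun ξ => by
      simp only [Pi.sub_apply]
      field_simp
      ring)
  have hVmeas := hV.aestronglyMeasurable
  have hVnK : IntegrableOn (fun ξ : Heis n => hNorm (V ξ)) K := by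
    apply Integrable.mono' (((hV.integrableOn_isCompact hK).norm).const_mul (Real.sqrt (2 * n)))
    · exact (continuous_hNorm.comp_aestronglyMeasurable hVmeas).restrict
    · refine Eventually.of_forall fun ξ => ?_
      rw [Real.norm_eq_abs, abs_of_nonneg (hNorm_nonneg _)]
      exact hNorm_le_norm _
  have hdotm : AEStronglyMeasurable (fun ξ : Heis n => hDot (hGrad f ξ) (V ξ)) volume := by
    unfold hDot hGrad
    apply AEStronglyMeasurable.add
    · apply Finset.aestronglyMeasurable_fun_sum
      intro j _
      exact ((hXc j).aestronglyMeasurable).mul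
        (((continuous_apply j).comp continuous_fst).comp_aestronglyMeasurable hVmeas)
    · apply Finset.aestronglyMeasurable_fun_sum
      intro j _
      exact ((hYc j).aestronglyMeasurable).mul
        (((continuous_apply j).comp continuous_snd).comp_aestronglyMeasurable hVmeas)
  -- Dominating functions
  set B1 : Heis n → ℝ := K.indicator (fun η => ((f η ^ 2 + 1) ^ (p / 2) + 1) * |A η|) with hB1def
  have hB1int : Integrable B1 := by
    apply IntegrableOn.integrable_indicator _ hKm
    apply Integrable.bdd_mul (c := (Mf ^ 2 + 1) ^ (p / 2) + 1) ((hA.integrableOn_isCompact hK).norm.congr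
      (Eventually.of_forall fun η => (Real.norm_eq_abs (A η)).symm ▸ rfl))
    · exact (((Real.continuous_rpow_const (by positivity)).comp
        ((hfcont.pow 2).add continuous_const)).add continuous_const).aestronglyMeasurable.restrict
    · refine Eventually.of_forall fun η => ?_
      rw [Real.norm_eq_abs, abs_of_nonneg (by positivity)]
      have h1 : f η ^ 2 + 1 ≤ Mf ^ 2 + 1 := by nlinarith [hMf η, abs_nonneg (f η), sq_abs (f η)]
      have := Real.rpow_le_rpow (by positivity) h1 (by positivity : (0:ℝ) ≤ p / 2)
      linarith
  set B2 : Heis n → ℝ :=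
    K.indicator (fun η => (p * (f η ^ 2 + 1) ^ (p / 2)) * (Mg * hNorm (V η))) with hB2def
  have hB2int : Integrable B2 := by
    apply IntegrableOn.integrable_indicator _ hKm
    apply Integrable.bdd_mul (c := p * (Mf ^ 2 + 1) ^ (p / 2)) (hVnK.const_mul Mg)
    · exact (continuous_const.mul ((Real.continuous_rpow_const (by positivity)).comp
        ((hfcont.pow 2).add continuous_const))).aestronglyMeasurable.restrict
    · refine Eventually.of_forall fun η => ?_
      rw [Real.norm_eq_abs, abs_of_nonneg (by positivity)]
      have h1 : f η ^ 2 + 1 ≤ Mf ^ 2 + 1 := by nlinarith [hMf η, abs_nonneg (f η), sq_abs (f η)]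
      exact mul_le_mul_of_nonneg_left
        (Real.rpow_le_rpow (by positivity) h1 (by positivity)) hp0.le
  -- the weak-divergence identity for the regularized test functions
  have main_eq : ∀ ε : ℝ, 0 < ε →
      (∫ ξ : Heis n, ((f ξ ^ 2 + ε ^ 2) ^ (p / 2) - (ε ^ 2) ^ (p / 2)) * A ξ)
      = -∫ ξ : Heis n, (p * f ξ * (f ξ ^ 2 + ε ^ 2) ^ ((p - 2) / 2)) * hDot (hGrad f ξ) (V ξ) := by
    intro ε hε
    have hsm : ContDiff ℝ (⊤ : ℕ∞) (fun η : Heis n => (f η ^ 2 + ε ^ 2) ^ (p / 2) - (ε ^ 2) ^ (p / 2)) :=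
      (g_contDiff ε hε).comp hf
    have hcs : HasCompactSupport
        (fun η : Heis n => (f η ^ 2 + ε ^ 2) ^ (p / 2) - (ε ^ 2) ^ (p / 2)) := by
      exact hfc.comp_left (g := fun s : ℝ => (s ^ 2 + ε ^ 2) ^ (p / 2) - (ε ^ 2) ^ (p / 2))
        (by norm_num)
    have h1 := hweakdiv _ hsm hcs
    have h2 : (fun ξ : Heis n =>
        hDot (hGrad (fun η => (f η ^ 2 + ε ^ 2) ^ (p / 2) - (ε ^ 2) ^ (p / 2)) ξ) (V ξ))
        = fun ξ => (p * f ξ * (f ξ ^ 2 + ε ^ 2) ^ ((p - 2) / 2)) * hDot (hGrad f ξ) (V ξ) :=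
      funext fun ξ => hDot_hGrad_comp (g_hasDeriv ε hε) hfd ξ (V ξ)
    rw [h1, h2]
  -- the approximating sequence
  set u : ℕ → ℝ := fun k => 1 / (k + 1) with hudef
  have hu0 : ∀ k, 0 < u k := fun k => by positivity
  have hu1 : ∀ k, u k ≤ 1 := by
    intro k
    rw [hudef]
    dsimp only
    rw [div_le_one (by positivity)]
    linarith [Nat.cast_nonneg (α := ℝ) k]
  have hulim : Tendsto u atTop (𝓝 0) := tendsto_one_div_add_atTop_nhds_zero_nat
  have husqlim : Tendsto (fun k => u k ^ 2) atTop (𝓝 0) := by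
    simpa using hulim.pow 2
  -- Limit of the left sides
  have lim1 : Tendsto
      (fun k => ∫ ξ : Heis n, ((f ξ ^ 2 + u k ^ 2) ^ (p / 2) - (u k ^ 2) ^ (p / 2)) * A ξ)
      atTop (𝓝 (∫ ξ : Heis n, |f ξ| ^ p * A ξ)) := by
    apply tendsto_integral_of_dominated_convergence B1 _ hB1int
    · intro k
      refine Eventually.of_forall fun ξ => ?_
      by_cases hξ : ξ ∈ K
      · rw [hB1def, indicator_of_mem hξ, Real.norm_eq_abs, abs_mul]
        have hφ0 : (0:ℝ) ≤ (f ξ ^ 2 + u k ^ 2) ^ (p / 2) - (u k ^ 2) ^ (p / 2) := by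
          have := Real.rpow_le_rpow (z := p / 2) (by positivity : (0:ℝ) ≤ u k ^ 2)
            (by nlinarith [sq_nonneg (f ξ)] : u k ^ 2 ≤ f ξ ^ 2 + u k ^ 2) (by positivity)
          linarith
        have hφ1 : (f ξ ^ 2 + u k ^ 2) ^ (p / 2) ≤ (f ξ ^ 2 + 1) ^ (p / 2) := by
          apply Real.rpow_le_rpow (by positivity) _ (by positivity)
          nlinarith [hu0 k, hu1 k]
        have hb : |(f ξ ^ 2 + u k ^ 2) ^ (p / 2) - (u k ^ 2) ^ (p / 2)|
            ≤ (f ξ ^ 2 + 1) ^ (p / 2) + 1 := by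
          rw [abs_of_nonneg hφ0]
          have : (0:ℝ) ≤ (u k ^ 2) ^ (p / 2) := Real.rpow_nonneg (by positivity) _
          linarith
        exact mul_le_mul_of_nonneg_right hb (abs_nonneg _)
      · rw [hB1def, indicator_of_notMem hξ, hf0 ξ hξ]
        norm_num
    · refine Eventually.of_forall fun ξ => ?_
      have t1 : Tendsto (fun k => (f ξ ^ 2 + u k ^ 2) ^ (p / 2)) atTop
          (𝓝 ((f ξ ^ 2) ^ (p / 2))) := by
        have hb : Tendsto (fun k => f ξ ^ 2 + u k ^ 2) atTop (𝓝 (f ξ ^ 2)) := by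
          simpa using tendsto_const_nhds.add husqlim
        exact ((Real.continuous_rpow_const (by positivity)).tendsto _).comp hb
      have t2 : Tendsto (fun k => (u k ^ 2) ^ (p / 2)) atTop (𝓝 0) := by
        have := ((Real.continuous_rpow_const (q := p / 2) (by positivity)).tendsto (0:ℝ)).comp husqlim
        simpa [Function.comp_def, Real.zero_rpow (ne_of_gt (show (0:ℝ) < p / 2 by positivity))] using this
      have := (t1.sub t2).mul_const (A ξ)
      simpa [sq_rpow (f ξ) p] using this
    · intro k
      exact ((((Real.continuous_rpow_const (by positivity)).comp
        ((hfcont.pow 2).add continuous_const)).sub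
        continuous_const).aestronglyMeasurable).mul hA.aestronglyMeasurable
  -- Limit of the right sides
  have lim2 : Tendsto
      (fun k => ∫ ξ : Heis n,
        (p * f ξ * (f ξ ^ 2 + u k ^ 2) ^ ((p - 2) / 2)) * hDot (hGrad f ξ) (V ξ))
      atTop (𝓝 (∫ ξ : Heis n,
        (p * f ξ * (f ξ ^ 2) ^ ((p - 2) / 2)) * hDot (hGrad f ξ) (V ξ))) := by
    apply tendsto_integral_of_dominated_convergence B2 _ hB2int
    · intro k
      refine Eventually.of_forall fun ξ => ?_
      by_cases hξ : ξ ∈ K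
      · rw [hB2def, indicator_of_mem hξ, Real.norm_eq_abs, abs_mul]
        have hd : |p * f ξ * (f ξ ^ 2 + u k ^ 2) ^ ((p - 2) / 2)| ≤ p * (f ξ ^ 2 + 1) ^ (p / 2) := by
          rw [abs_mul, abs_mul, abs_of_nonneg hp0.le,
            abs_of_nonneg (Real.rpow_nonneg (by positivity) _), mul_assoc]
          exact mul_le_mul_of_nonneg_left (key_bound hp (hu0 k) (hu1 k) (f ξ)) hp0.le
        have hdot : |hDot (hGrad f ξ) (V ξ)| ≤ Mg * hNorm (V ξ) :=
          (abs_hDot_le _ _).trans (mul_le_mul_of_nonneg_right (hMg ξ) (hNorm_nonneg _))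
        exact mul_le_mul hd hdot (abs_nonneg _) (by positivity)
      · rw [hB2def, indicator_of_notMem hξ]
        have hz : hDot (hGrad f ξ) (V ξ) = 0 := by
          rw [hgrad0 ξ hξ]
          exact hDot_zero_left _
        simp [hz]
    · refine Eventually.of_forall fun ξ => ?_
      rcases eq_or_ne (f ξ) 0 with hfξ | hfξ
      · simpa [hfξ] using tendsto_const_nhds
      · have hb : Tendsto (fun k => f ξ ^ 2 + u k ^ 2) atTop (𝓝 (f ξ ^ 2)) := by
          simpa using tendsto_const_nhds.add husqlim
        have t1 : Tendsto (fun k => (f ξ ^ 2 + u k ^ 2) ^ ((p - 2) / 2)) atTop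
            (𝓝 ((f ξ ^ 2) ^ ((p - 2) / 2))) :=
          ((Real.continuousAt_rpow_const _ _ (Or.inl (pow_ne_zero 2 hfξ))).tendsto).comp hb
        exact (tendsto_const_nhds.mul t1).mul_const (hDot (hGrad f ξ) (V ξ))
    · intro k
      exact (((continuous_const.mul hfcont).mul (cont_eps (hu0 k) hfcont)).aestronglyMeasurable).mul hdotm
  -- Identify the limits
  have lim1' : Tendsto
      (fun k => ∫ ξ : Heis n, ((f ξ ^ 2 + u k ^ 2) ^ (p / 2) - (u k ^ 2) ^ (p / 2)) * A ξ)
      atTop (𝓝 (-∫ ξ : Heis n,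
        (p * f ξ * (f ξ ^ 2) ^ ((p - 2) / 2)) * hDot (hGrad f ξ) (V ξ))) := by
    have heqk : (fun k => ∫ ξ : Heis n,
        ((f ξ ^ 2 + u k ^ 2) ^ (p / 2) - (u k ^ 2) ^ (p / 2)) * A ξ)
        = fun k => -∫ ξ : Heis n,
          (p * f ξ * (f ξ ^ 2 + u k ^ 2) ^ ((p - 2) / 2)) * hDot (hGrad f ξ) (V ξ) :=
      funext fun k => main_eq (u k) (hu0 k)
    rw [heqk]
    exact lim2.neg
  have heq : ∫ ξ : Heis n, |f ξ| ^ p * A ξ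
      = -∫ ξ : Heis n, (p * f ξ * (f ξ ^ 2) ^ ((p - 2) / 2)) * hDot (hGrad f ξ) (V ξ) :=
    tendsto_nhds_unique lim1 lim1'
  -- Integrability of the limiting integrand
  set L : Heis n → ℝ :=
    fun ξ => (p * f ξ * (f ξ ^ 2) ^ ((p - 2) / 2)) * hDot (hGrad f ξ) (V ξ) with hLdef
  have hLmeas : AEStronglyMeasurable L volume := by
    apply AEStronglyMeasurable.mul _ hdotm
    have hc : Continuous fun ξ : Heis n => p * (f ξ * (f ξ ^ 2) ^ ((p - 2) / 2)) :=
      continuous_const.mul ((m_continuous hp).comp hfcont)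
    exact hc.aestronglyMeasurable.congr (Eventually.of_forall fun ξ => by ring)
  have hLbound : ∀ ξ, |L ξ| ≤ B2 ξ := by
    intro ξ
    by_cases hξ : ξ ∈ K
    · rw [hB2def, indicator_of_mem hξ, hLdef, abs_mul]
      have hd : |p * f ξ * (f ξ ^ 2) ^ ((p - 2) / 2)| ≤ p * (f ξ ^ 2 + 1) ^ (p / 2) := by
        rw [abs_mul, abs_mul, abs_of_nonneg hp0.le,
          abs_of_nonneg (Real.rpow_nonneg (sq_nonneg _) _),
          mul_assoc p |f ξ| ((f ξ ^ 2) ^ ((p - 2) / 2)),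
          abs_mul_sq_rpow hp (f ξ)]
        apply mul_le_mul_of_nonneg_left _ hp0.le
        calc (f ξ ^ 2) ^ ((p - 1) / 2) ≤ (f ξ ^ 2 + 1) ^ ((p - 1) / 2) :=
              Real.rpow_le_rpow (sq_nonneg _) (by linarith) (by linarith)
        _ ≤ (f ξ ^ 2 + 1) ^ (p / 2) :=
              Real.rpow_le_rpow_of_exponent_le (by nlinarith [sq_nonneg (f ξ)]) (by linarith)
      have hdot : |hDot (hGrad f ξ) (V ξ)| ≤ Mg * hNorm (V ξ) :=
        (abs_hDot_le _ _).trans (mul_le_mul_of_nonneg_right (hMg ξ) (hNorm_nonneg _))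
      exact mul_le_mul hd hdot (abs_nonneg _) (by positivity)
    · rw [hB2def, indicator_of_notMem hξ, hLdef]
      have hz : hDot (hGrad f ξ) (V ξ) = 0 := by
        rw [hgrad0 ξ hξ]
        exact hDot_zero_left _
      simp [hz]
  have hLint : Integrable L := by
    apply Integrable.mono' hB2int hLmeas
    exact Eventually.of_forall fun ξ => by
      rw [Real.norm_eq_abs]; exact hLbound ξ
  -- pointwise Young inequality
  have hpoint : ∀ ξ, -L ξ
      ≤ hNorm (hGrad f ξ) ^ p + (p - 1) * (hNorm (V ξ) ^ (p / (p - 1)) * |f ξ| ^ p) := by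
    intro ξ
    have h1 : -L ξ ≤ |L ξ| := by
      rw [← abs_neg]
      exact le_abs_self _
    have h2 : |L ξ| ≤ p * (hNorm (hGrad f ξ) * (hNorm (V ξ) * (f ξ ^ 2) ^ ((p - 1) / 2))) := by
      rw [hLdef, abs_mul, abs_mul, abs_mul, abs_of_nonneg hp0.le,
        abs_of_nonneg (Real.rpow_nonneg (sq_nonneg _) _),
        mul_assoc p |f ξ| ((f ξ ^ 2) ^ ((p - 2) / 2)), abs_mul_sq_rpow hp (f ξ)]
      calc p * (f ξ ^ 2) ^ ((p - 1) / 2) * |hDot (hGrad f ξ) (V ξ)|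
          ≤ p * (f ξ ^ 2) ^ ((p - 1) / 2) * (hNorm (hGrad f ξ) * hNorm (V ξ)) :=
            mul_le_mul_of_nonneg_left (abs_hDot_le _ _) (by positivity)
      _ = p * (hNorm (hGrad f ξ) * (hNorm (V ξ) * (f ξ ^ 2) ^ ((p - 1) / 2))) := by ring
    have h3 : p * (hNorm (hGrad f ξ) * (hNorm (V ξ) * (f ξ ^ 2) ^ ((p - 1) / 2)))
        ≤ hNorm (hGrad f ξ) ^ p
          + (p - 1) * (hNorm (V ξ) * (f ξ ^ 2) ^ ((p - 1) / 2)) ^ (p / (p - 1)) :=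
      young_aux hp (hNorm_nonneg (hGrad f ξ))
        (mul_nonneg (hNorm_nonneg (V ξ)) (Real.rpow_nonneg (sq_nonneg (f ξ)) ((p - 1) / 2)))
    have h4 : (hNorm (V ξ) * (f ξ ^ 2) ^ ((p - 1) / 2)) ^ (p / (p - 1))
        = hNorm (V ξ) ^ (p / (p - 1)) * |f ξ| ^ p := by
      rw [Real.mul_rpow (hNorm_nonneg _) (Real.rpow_nonneg (sq_nonneg _) _),
        ← Real.rpow_mul (sq_nonneg (f ξ)),
        show (p - 1) / 2 * (p / (p - 1)) = p / 2 by field_simp,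
        sq_rpow (f ξ) p]
    calc -L ξ ≤ |L ξ| := h1
    _ ≤ p * (hNorm (hGrad f ξ) * (hNorm (V ξ) * (f ξ ^ 2) ^ ((p - 1) / 2))) := h2
    _ ≤ hNorm (hGrad f ξ) ^ p
        + (p - 1) * (hNorm (V ξ) * (f ξ ^ 2) ^ ((p - 1) / 2)) ^ (p / (p - 1)) := h3
    _ = hNorm (hGrad f ξ) ^ p + (p - 1) * (hNorm (V ξ) ^ (p / (p - 1)) * |f ξ| ^ p) := by
        rw [h4]
  -- Assemble
  have hRint : Integrable (fun ξ : Heis n =>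
      hNorm (hGrad f ξ) ^ p + (p - 1) * (hNorm (V ξ) ^ (p / (p - 1)) * |f ξ| ^ p)) :=
    hF1.add (hF3.const_mul (p - 1))
  have final1 : ∫ ξ : Heis n, |f ξ| ^ p * A ξ
      ≤ (∫ ξ : Heis n, hNorm (hGrad f ξ) ^ p)
        + (p - 1) * ∫ ξ : Heis n, hNorm (V ξ) ^ (p / (p - 1)) * |f ξ| ^ p := by
    rw [heq, ← integral_neg]
    calc ∫ ξ : Heis n, -L ξ
        ≤ ∫ ξ : Heis n, (hNorm (hGrad f ξ) ^ p
            + (p - 1) * (hNorm (V ξ) ^ (p / (p - 1)) * |f ξ| ^ p)) :=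
          integral_mono hLint.neg hRint hpoint
    _ = (∫ ξ : Heis n, hNorm (hGrad f ξ) ^ p)
        + (p - 1) * ∫ ξ : Heis n, hNorm (V ξ) ^ (p / (p - 1)) * |f ξ| ^ p := by
        rw [integral_add hF1 (hF3.const_mul (p - 1)), integral_const_mul]
  have hsplit : ∫ ξ : Heis n, (A ξ - (p - 1) * hNorm (V ξ) ^ (p / (p - 1))) * |f ξ| ^ p
      = (∫ ξ : Heis n, |f ξ| ^ p * A ξ)
        - (p - 1) * ∫ ξ : Heis n, hNorm (V ξ) ^ (p / (p - 1)) * |f ξ| ^ p := by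
    rw [← integral_const_mul, ← integral_sub hF2 ((hF3.const_mul (p - 1)).congr
      (Eventually.of_forall fun ξ => rfl))]
    congr 1
    funext ξ
    ring
  rw [hsplit]
  linarith [final1]
end
end
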